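/- arXiv:2212.09011 — 6 statements merged into one kernel-verified Lean document; each statement's English description precedes it below -/
import Mathlib

section
/- Let k ≤ n. With V_I the Schur-type polynomials and ℓ(I) = Σ_{a}(i_a - a), the Laplace-expansion identity holds: Σ_{I ∈ C(n,k)} (-1)^{ℓ(I)} V_I(x_1,...,x_k) · V_{Ī}(x_{k+1},...,x_n) = ∏_{a=1}^{k} ∏_{b=k+1}^{n} (x_b - x_a), where Ī = {1,...,n} \ I and the sum is over all k-element subsets I of {1,...,n}. -/
noncomputable section

open MvPolynomial

/-- The field of rational functions `ℂ(x₁, …, x_n)`. -/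
abbrev RF (n : ℕ) : Type := FractionRing (MvPolynomial (Fin n) ℂ)

/-- The variable `x_a` viewed inside `ℂ(x₁, …, x_n)`. -/
def Xv (n : ℕ) (a : Fin n) : RF n :=
  algebraMap (MvPolynomial (Fin n) ℂ) (RF n) (X a)

/-- The increasing enumeration of an `m`-element subset of `{1, …, n}`. -/
def enum {n m : ℕ} (I : Finset (Fin n)) (hI : I.card = m) : Fin m → Fin n :=
  fun a => (I.orderIsoOfFin hI a : Fin n)

/-- `ℓ(I) = Σ_a (i_a − a)` for `I = {i₁ < … < i_m}` (`1`-indexed). -/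
def ell {n m : ℕ} (I : Finset (Fin n)) (hI : I.card = m) : ℕ :=
  ∑ a : Fin m, ((((enum I hI a : Fin n) : ℕ) + 1) - (a.1 + 1))

/-- The Schur-type rational function `V_I(t) = det(t_a^{i_b}) / det(t_a^b)`. -/
def V {F : Type*} [Field F] {n m : ℕ} (I : Finset (Fin n)) (hI : I.card = m)
    (t : Fin m → F) : F :=
  (Matrix.of fun a b : Fin m => t a ^ (((enum I hI b : Fin n) : ℕ) + 1)).det /
    (Matrix.of fun a b : Fin m => t a ^ (b.1 + 1)).det

namespace LaplaceAux
open Equiv Finset Matrix Equiv.Perm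

variable {n k : ℕ}

variable {n k : ℕ}

def eqv (n k : ℕ) (hk : k ≤ n) : (Fin k ⊕ Fin (n - k)) ≃ Fin n :=
  finSumFinEquiv.trans (finCongr (by omega))

@[simp] lemma eqv_inl (hk : k ≤ n) (a : Fin k) :
    eqv n k hk (Sum.inl a) = ⟨a.1, lt_of_lt_of_le a.2 hk⟩ := by
  simp [eqv, Fin.ext_iff]

@[simp] lemma eqv_inr (hk : k ≤ n) (b : Fin (n - k)) :
    eqv n k hk (Sum.inr b) = ⟨k + b.1, by omega⟩ := by
  simp [eqv, Fin.ext_iff]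

lemma eqv_symm_lt (hk : k ≤ n) (p : Fin n) (h : p.1 < k) :
    (eqv n k hk).symm p = Sum.inl ⟨p.1, h⟩ := by
  rw [Equiv.symm_apply_eq]; simp [Fin.ext_iff]

lemma eqv_symm_ge (hk : k ≤ n) (p : Fin n) (h : ¬ p.1 < k) :
    (eqv n k hk).symm p = Sum.inr ⟨p.1 - k, by omega⟩ := by
  rw [Equiv.symm_apply_eq]; simp [Fin.ext_iff]; omega

lemma compl_card (hk : k ≤ n) (I : Finset (Fin n)) (hI : I.card = k) :
    Iᶜ.card = n - k := by
  simp [Finset.card_compl, hI]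

lemma enum_mem {m : ℕ} (I : Finset (Fin n)) (hI : I.card = m) (a : Fin m) :
    enum I hI a ∈ I := (I.orderIsoOfFin hI a).2

lemma enum_strictMono {m : ℕ} (I : Finset (Fin n)) (hI : I.card = m) :
    StrictMono (enum I hI) := fun a b h =>
  Subtype.coe_lt_coe.2 ((I.orderIsoOfFin hI).lt_iff_lt.2 h)

lemma enum_injective {m : ℕ} (I : Finset (Fin n)) (hI : I.card = m) :
    Function.Injective (enum I hI) := (enum_strictMono I hI).injective

lemma enum_image {m : ℕ} (I : Finset (Fin n)) (hI : I.card = m) :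
    Finset.image (enum I hI) Finset.univ = I := by
  apply Finset.eq_of_subset_of_card_le
  · intro x hx
    simp only [Finset.mem_image] at hx
    obtain ⟨a, -, rfl⟩ := hx
    exact enum_mem I hI a
  · rw [Finset.card_image_of_injective _ (enum_injective I hI), Finset.card_univ,
      Fintype.card_fin, hI]

def cE (hk : k ≤ n) (I : Finset (Fin n)) (hI : I.card = k) : (Fin k ⊕ Fin (n - k)) ≃ Fin n :=
  (Equiv.sumCongr (I.orderIsoOfFin hI).toEquiv
    (((Iᶜ.orderIsoOfFin (compl_card hk I hI)).toEquiv).trans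
      (Equiv.subtypeEquivRight (fun _ => Finset.mem_compl)))).trans
    (Equiv.sumCompl (· ∈ I))

@[simp] lemma cE_inl (hk : k ≤ n) (I : Finset (Fin n)) (hI : I.card = k) (a : Fin k) :
    cE hk I hI (Sum.inl a) = enum I hI a := rfl

@[simp] lemma cE_inr (hk : k ≤ n) (I : Finset (Fin n)) (hI : I.card = k) (b : Fin (n - k)) :
    cE hk I hI (Sum.inr b) = enum Iᶜ (compl_card hk I hI) b := rfl

lemma cE_mem_iff (hk : k ≤ n) (I : Finset (Fin n)) (hI : I.card = k) (x : Fin k ⊕ Fin (n - k)) :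
    cE hk I hI x ∈ I ↔ x.isLeft := by
  cases x with
  | inl a => simpa using enum_mem I hI a
  | inr b =>
    simp only [cE_inr, Sum.isLeft_inr]
    have := enum_mem Iᶜ (compl_card hk I hI) b
    simp only [Finset.mem_compl] at this
    simpa using this

def tau (hk : k ≤ n) (I : Finset (Fin n)) (hI : I.card = k) : Equiv.Perm (Fin n) :=
  (eqv n k hk).symm.trans (cE hk I hI)



lemma sign_eq_signAux {n : ℕ} (f : Equiv.Perm (Fin n)) :
    Equiv.Perm.sign f = Equiv.Perm.signAux f := by
  refine Equiv.Perm.swap_induction_on f ?_ ?_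
  · simp [Equiv.Perm.signAux_one]
  · intro f x y hxy ih
    rw [Equiv.Perm.sign_mul, Equiv.Perm.signAux_mul, Equiv.Perm.sign_swap hxy,
      Equiv.Perm.signAux_swap hxy, ih]

lemma signAux_eq_pow {n : ℕ} (f : Equiv.Perm (Fin n)) :
    Equiv.Perm.signAux f =
      (-1) ^ ((Equiv.Perm.finPairsLT n).filter (fun x => f x.1 ≤ f x.2)).card := by
  rw [Equiv.Perm.signAux, Finset.prod_ite, Finset.prod_const, Finset.prod_const, one_pow, mul_one]




lemma tau_lt (hk : k ≤ n) (I : Finset (Fin n)) (hI : I.card = k) (p : Fin n) (h : p.1 < k) :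
    tau hk I hI p = enum I hI ⟨p.1, h⟩ := by
  simp [tau, eqv_symm_lt hk p h]

lemma tau_ge (hk : k ≤ n) (I : Finset (Fin n)) (hI : I.card = k) (p : Fin n) (h : ¬ p.1 < k) :
    tau hk I hI p = enum Iᶜ (compl_card hk I hI) ⟨p.1 - k, by omega⟩ := by
  simp [tau, eqv_symm_ge hk p h]

lemma card_filter_lt_univ {m : ℕ} (c : Fin m) :
    (Finset.univ.filter (fun j : Fin m => j < c)).card = c.1 := by
  have : Finset.univ.filter (fun j : Fin m => j < c) = Finset.Iio c := by
    ext j; simp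
  rw [this, Fin.card_Iio]

lemma card_filter_mem_lt (I : Finset (Fin n)) (hI : I.card = k) (a : Fin k) :
    (I.filter (fun j => j < enum I hI a)).card = a.1 := by
  have himg : I.filter (fun j => j < enum I hI a)
      = Finset.image (enum I hI) (Finset.univ.filter (fun c => c < a)) := by
    ext j
    simp only [Finset.mem_filter, Finset.mem_image, Finset.mem_univ, true_and]
    constructor
    · rintro ⟨hjI, hlt⟩
      have : j ∈ Finset.image (enum I hI) Finset.univ := by rw [enum_image]; exact hjI
      simp only [Finset.mem_image, Finset.mem_univ, true_and] at this
      obtain ⟨c, rfl⟩ := this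
      exact ⟨c, (enum_strictMono I hI).lt_iff_lt.1 hlt, rfl⟩
    · rintro ⟨c, hc, rfl⟩
      exact ⟨enum_mem I hI c, enum_strictMono I hI hc⟩
  rw [himg, Finset.card_image_of_injective _ (enum_injective I hI), card_filter_lt_univ]

lemma enum_le (I : Finset (Fin n)) (hI : I.card = k) (a : Fin k) :
    a.1 ≤ (enum I hI a).1 := by
  have h1 := card_filter_mem_lt I hI a
  have h2 := card_filter_lt_univ (enum I hI a)
  have : (I.filter (fun j => j < enum I hI a)).card
      ≤ (Finset.univ.filter (fun j : Fin n => j < enum I hI a)).card :=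
    Finset.card_le_card (Finset.filter_subset_filter _ (Finset.subset_univ I))
  omega

lemma card_filter_compl_lt (hk : k ≤ n) (I : Finset (Fin n)) (hI : I.card = k) (a : Fin k) :
    (Finset.univ.filter
        (fun b : Fin (n - k) => enum Iᶜ (compl_card hk I hI) b < enum I hI a)).card
      = (enum I hI a).1 - a.1 := by
  set hc := compl_card hk I hI
  have himg : Iᶜ.filter (fun j => j < enum I hI a)
      = Finset.image (enum Iᶜ hc)
          (Finset.univ.filter (fun b => enum Iᶜ hc b < enum I hI a)) := by
    ext j
    simp only [Finset.mem_filter, Finset.mem_image, Finset.mem_univ, true_and]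
    constructor
    · rintro ⟨hjI, hlt⟩
      have : j ∈ Finset.image (enum Iᶜ hc) Finset.univ := by rw [enum_image]; exact hjI
      simp only [Finset.mem_image, Finset.mem_univ, true_and] at this
      obtain ⟨c, rfl⟩ := this
      exact ⟨c, hlt, rfl⟩
    · rintro ⟨c, hc', rfl⟩
      exact ⟨enum_mem Iᶜ hc c, hc'⟩
  have hcard : (Finset.univ.filter
      (fun b : Fin (n - k) => enum Iᶜ hc b < enum I hI a)).card
      = (Iᶜ.filter (fun j => j < enum I hI a)).card := by
    rw [himg, Finset.card_image_of_injective _ (enum_injective Iᶜ hc)]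
  have hsplit : (I.filter (fun j => j < enum I hI a)).card
      + (Iᶜ.filter (fun j => j < enum I hI a)).card
      = (Finset.univ.filter (fun j : Fin n => j < enum I hI a)).card := by
    rw [← Finset.card_union_of_disjoint, ← Finset.filter_union, Finset.union_compl]
    exact Finset.disjoint_filter_filter (disjoint_compl_right)
  rw [hcard]
  have h1 := card_filter_mem_lt I hI a
  have h2 := card_filter_lt_univ (enum I hI a)
  omega



lemma card_inversions (hk : k ≤ n) (I : Finset (Fin n)) (hI : I.card = k) :
    ((Equiv.Perm.finPairsLT n).filter
        (fun x => tau hk I hI x.1 ≤ tau hk I hI x.2)).card = ell I hI := by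
  classical
  set hc := compl_card hk I hI
  set T : Finset (Σ _ : Fin k, Fin (n - k)) :=
    Finset.univ.sigma (fun a : Fin k =>
      Finset.univ.filter (fun b : Fin (n - k) => enum Iᶜ hc b < enum I hI a)) with hT
  have key : T.card = ((Equiv.Perm.finPairsLT n).filter
      (fun x => tau hk I hI x.1 ≤ tau hk I hI x.2)).card := by
    apply Finset.card_bij
      (i := fun x _ => (⟨⟨k + x.2.1, by omega⟩, ⟨x.1.1, by omega⟩⟩ : Σ _ : Fin n, Fin n))
    · rintro ⟨a, b⟩ hx
      simp only [hT, Finset.mem_sigma, Finset.mem_univ, Finset.mem_filter, true_and] at hx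
      simp only [Finset.mem_filter, Equiv.Perm.mem_finPairsLT]
      constructor
      · change (⟨a.1, _⟩ : Fin n) < ⟨k + b.1, _⟩
        simp only [Fin.lt_def]
        omega
      · rw [tau_ge hk I hI _ (by simp), tau_lt hk I hI _ (by simpa using a.2)]
        have hb : (⟨k + b.1 - k, by omega⟩ : Fin (n - k)) = b := by
          apply Fin.ext; simp
        rw [hb]
        exact le_of_lt hx
    · rintro ⟨a₁, b₁⟩ h₁ ⟨a₂, b₂⟩ h₂ heq
      have h1 := congrArg (fun s : (Σ _ : Fin n, Fin n) => s.1.1) heq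
      have h2 := congrArg (fun s : (Σ _ : Fin n, Fin n) => s.2.1) heq
      simp only at h1 h2
      have : a₁ = a₂ := Fin.ext (by omega)
      have : b₁ = b₂ := Fin.ext (by omega)
      simp_all
    · rintro ⟨x₁, x₂⟩ hx
      simp only [Finset.mem_filter, Equiv.Perm.mem_finPairsLT] at hx
      obtain ⟨hlt, hle⟩ := hx
      have hx2k : x₂.1 < k := by
        by_contra h2
        have h1 : ¬ x₁.1 < k := by have := Fin.lt_def.1 hlt; omega
        rw [tau_ge hk I hI _ h1, tau_ge hk I hI _ h2] at hle
        have : (⟨x₂.1 - k, by omega⟩ : Fin (n - k)) < ⟨x₁.1 - k, by omega⟩ := by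
          simp only [Fin.lt_def]; have := Fin.lt_def.1 hlt; omega
        exact absurd hle (not_le.2 (enum_strictMono Iᶜ hc this))
      have hx1k : ¬ x₁.1 < k := by
        by_contra h1
        rw [tau_lt hk I hI _ h1, tau_lt hk I hI _ hx2k] at hle
        have : (⟨x₂.1, hx2k⟩ : Fin k) < ⟨x₁.1, h1⟩ := by
          simp only [Fin.lt_def]; exact Fin.lt_def.1 hlt
        exact absurd hle (not_le.2 (enum_strictMono I hI this))
      refine ⟨⟨⟨x₂.1, hx2k⟩, ⟨x₁.1 - k, by omega⟩⟩, ?_, ?_⟩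
      · simp only [hT, Finset.mem_sigma, Finset.mem_univ, Finset.mem_filter, true_and]
        rw [tau_ge hk I hI _ hx1k, tau_lt hk I hI _ hx2k] at hle
        refine lt_of_le_of_ne hle ?_
        intro heq
        have h1 := enum_mem Iᶜ hc ⟨x₁.1 - k, by omega⟩
        have h2 := enum_mem I hI ⟨x₂.1, hx2k⟩
        rw [heq] at h1
        simp only [Finset.mem_compl] at h1
        exact h1 h2
      · have hmk : ∀ (u v w z : Fin n), u = v → w = z →
            (⟨u, w⟩ : Σ _ : Fin n, Fin n) = ⟨v, z⟩ := by
          rintro u v w z rfl rfl; rfl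
        exact hmk _ _ _ _ (Fin.ext (by simp; omega)) (Fin.ext rfl)
  rw [← key, hT, Finset.card_sigma]
  unfold ell
  apply Finset.sum_congr rfl
  intro a _
  rw [card_filter_compl_lt hk I hI a]
  have := enum_le I hI a
  omega

lemma sign_tau (hk : k ≤ n) (I : Finset (Fin n)) (hI : I.card = k) :
    Equiv.Perm.sign (tau hk I hI) = (-1) ^ ell I hI := by
  rw [sign_eq_signAux, signAux_eq_pow, card_inversions hk I hI]




def Phi (hk : k ≤ n) :
    (Σ _I : {s : Finset (Fin n) // s.card = k},
        Equiv.Perm (Fin k) × Equiv.Perm (Fin (n - k)))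
      → Equiv.Perm (Fin k ⊕ Fin (n - k)) :=
  fun x => (Equiv.sumCongr x.2.1 x.2.2).trans ((cE hk x.1.1 x.1.2).trans (eqv n k hk).symm)

lemma mem_iff_Phi (hk : k ≤ n)
    (x : Σ _I : {s : Finset (Fin n) // s.card = k},
        Equiv.Perm (Fin k) × Equiv.Perm (Fin (n - k))) (j : Fin n) :
    j ∈ x.1.1 ↔ ∃ a : Fin k, eqv n k hk (Phi hk x (Sum.inl a)) = j := by
  obtain ⟨⟨I, hI⟩, π₁, π₂⟩ := x
  have happ : ∀ a : Fin k, eqv n k hk (Phi hk ⟨⟨I, hI⟩, π₁, π₂⟩ (Sum.inl a))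
      = enum I hI (π₁ a) := by
    intro a
    simp [Phi]
  constructor
  · intro hj
    have : j ∈ Finset.image (enum I hI) Finset.univ := by rw [enum_image]; exact hj
    simp only [Finset.mem_image, Finset.mem_univ, true_and] at this
    obtain ⟨c, rfl⟩ := this
    exact ⟨π₁⁻¹ c, by rw [happ]; simp⟩
  · rintro ⟨a, rfl⟩
    rw [happ]
    exact enum_mem I hI (π₁ a)

lemma Phi_bijective (hk : k ≤ n) : Function.Bijective (Phi hk) := by
  constructor
  · rintro x y hxy
    have hIJ : x.1 = y.1 := by
      apply Subtype.ext
      ext j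
      rw [mem_iff_Phi hk x j, mem_iff_Phi hk y j, hxy]
    obtain ⟨⟨I, hI⟩, π₁, π₂⟩ := x
    obtain ⟨⟨J, hJ⟩, ρ₁, ρ₂⟩ := y
    obtain rfl : I = J := congrArg Subtype.val hIJ
    have hsc : Equiv.sumCongr π₁ π₂ = Equiv.sumCongr ρ₁ ρ₂ := by
      ext z
      have := congrFun (congrArg (fun (f : Equiv.Perm (Fin k ⊕ Fin (n - k))) => (f : _ → _)) hxy) z
      simp only [Phi, Equiv.trans_apply] at this
      exact (cE hk I hI).injective ((eqv n k hk).symm.injective this)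
    have hpair := Equiv.Perm.sumCongrHom_injective
      (show Equiv.Perm.sumCongrHom (Fin k) (Fin (n-k)) (π₁, π₂)
        = Equiv.Perm.sumCongrHom (Fin k) (Fin (n-k)) (ρ₁, ρ₂) from hsc)
    have h1 : π₁ = ρ₁ := congrArg Prod.fst hpair
    have h2 : π₂ = ρ₂ := congrArg Prod.snd hpair
    subst h1; subst h2
    rfl
  · intro σ
    classical
    set I : Finset (Fin n) := Finset.image (fun a : Fin k => eqv n k hk (σ (Sum.inl a)))
      Finset.univ with hIdef
    have hI : I.card = k := by
      rw [hIdef, Finset.card_image_of_injective, Finset.card_univ, Fintype.card_fin]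
      intro a b hab
      exact Sum.inl_injective (σ.injective ((eqv n k hk).injective hab))
    set π' : Equiv.Perm (Fin k ⊕ Fin (n - k)) :=
      σ.trans ((eqv n k hk).trans (cE hk I hI).symm) with hπ'
    have hmaps : Set.MapsTo π' (Set.range Sum.inl) (Set.range Sum.inl) := by
      rintro z ⟨a, rfl⟩
      have hmem : eqv n k hk (σ (Sum.inl a)) ∈ I := by
        rw [hIdef]
        exact Finset.mem_image_of_mem _ (Finset.mem_univ a)
      have : π' (Sum.inl a) = (cE hk I hI).symm (eqv n k hk (σ (Sum.inl a))) := rfl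
      rw [this]
      have hleft : ((cE hk I hI).symm (eqv n k hk (σ (Sum.inl a)))).isLeft := by
        rw [← cE_mem_iff hk I hI, Equiv.apply_symm_apply]
        exact hmem
      obtain ⟨b, hb⟩ := Sum.isLeft_iff.1 hleft
      exact ⟨b, hb.symm⟩
    obtain ⟨⟨π₁, π₂⟩, hsc⟩ := Equiv.Perm.mem_sumCongrHom_range_of_perm_mapsTo_inl hmaps
    refine ⟨⟨⟨I, hI⟩, π₁, π₂⟩, ?_⟩
    have hsc' : Equiv.sumCongr π₁ π₂ = π' := hsc
    ext z
    simp only [Phi, Equiv.trans_apply, hsc', hπ']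
    simp



variable {F : Type*} [CommRing F]

lemma det_row_form {m : Type*} [DecidableEq m] [Fintype m] (M : Matrix m m F) :
    M.det = ∑ σ : Equiv.Perm m, ((Equiv.Perm.sign σ : ℤ) : F) * ∏ i, M i (σ i) := by
  rw [← Matrix.det_transpose, Matrix.det_apply']
  simp [Matrix.transpose_apply]

lemma sign_Phi (hk : k ≤ n) (I : Finset (Fin n)) (hI : I.card = k)
    (π₁ : Equiv.Perm (Fin k)) (π₂ : Equiv.Perm (Fin (n - k))) :
    Equiv.Perm.sign (Phi hk ⟨⟨I, hI⟩, (π₁, π₂)⟩)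
      = (-1) ^ ell I hI * Equiv.Perm.sign π₁ * Equiv.Perm.sign π₂ := by
  have hPhi : Phi hk ⟨⟨I, hI⟩, (π₁, π₂)⟩
      = ((cE hk I hI).trans (eqv n k hk).symm) * Equiv.sumCongr π₁ π₂ := rfl
  rw [hPhi, Equiv.Perm.sign_mul, Equiv.Perm.sign_sumCongr]
  have hs : Equiv.Perm.sign ((cE hk I hI).trans (eqv n k hk).symm)
      = Equiv.Perm.sign (tau hk I hI) := by
    apply Equiv.Perm.sign_eq_sign_of_equiv _ _ (eqv n k hk)
    intro x
    simp [tau]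
  rw [hs, sign_tau hk I hI, mul_assoc]

theorem laplace_det (hk : k ≤ n) (R : (Fin k ⊕ Fin (n - k)) → Fin n → F) :
    (Matrix.of fun p q : Fin n => R ((eqv n k hk).symm p) q).det
      = ∑ I : {s : Finset (Fin n) // s.card = k},
          (-1 : F) ^ ell I.1 I.2 *
            (Matrix.of fun a b : Fin k => R (Sum.inl a) (enum I.1 I.2 b)).det *
            (Matrix.of fun a b : Fin (n - k) =>
              R (Sum.inr a) (enum I.1ᶜ (compl_card hk I.1 I.2) b)).det := by
  classical
  have h1 : (Matrix.of fun p q : Fin n => R ((eqv n k hk).symm p) q).det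
      = (Matrix.of fun p q : Fin k ⊕ Fin (n - k) => R p (eqv n k hk q)).det := by
    rw [show (Matrix.of fun p q : Fin k ⊕ Fin (n - k) => R p (eqv n k hk q))
        = (Matrix.of fun p q : Fin n => R ((eqv n k hk).symm p) q).submatrix
            (eqv n k hk) (eqv n k hk) by
      ext p q
      simp [Matrix.submatrix_apply]]
    rw [Matrix.det_submatrix_equiv_self]
  rw [h1, det_row_form]
  rw [← Fintype.sum_equiv (Equiv.ofBijective (Phi hk) (Phi_bijective hk))
      (fun x => ((Equiv.Perm.sign (Phi hk x) : ℤ) : F) *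
        ∏ p, (Matrix.of fun p q : Fin k ⊕ Fin (n - k) => R p (eqv n k hk q)) p (Phi hk x p))
      (fun σ => ((Equiv.Perm.sign σ : ℤ) : F) *
        ∏ p, (Matrix.of fun p q : Fin k ⊕ Fin (n - k) => R p (eqv n k hk q)) p (σ p))
      (fun x => rfl)]
  rw [← Finset.univ_sigma_univ, Finset.sum_sigma]
  apply Finset.sum_congr rfl
  rintro ⟨I, hI⟩ -
  rw [Fintype.sum_prod_type]
  set A : Matrix (Fin k) (Fin k) F :=
    Matrix.of fun a b : Fin k => R (Sum.inl a) (enum I hI b) with hA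
  set B : Matrix (Fin (n - k)) (Fin (n - k)) F :=
    Matrix.of fun a b : Fin (n - k) => R (Sum.inr a) (enum Iᶜ (compl_card hk I hI) b) with hB
  have hterm : ∀ (π₁ : Equiv.Perm (Fin k)) (π₂ : Equiv.Perm (Fin (n - k))),
      ((Equiv.Perm.sign (Phi hk ⟨⟨I, hI⟩, (π₁, π₂)⟩) : ℤ) : F) *
          ∏ p, (Matrix.of fun p q : Fin k ⊕ Fin (n - k) => R p (eqv n k hk q)) p
            (Phi hk ⟨⟨I, hI⟩, (π₁, π₂)⟩ p)
        = (-1 : F) ^ ell I hI *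
            ((((Equiv.Perm.sign π₁ : ℤ) : F) * ∏ a, A a (π₁ a)) *
             (((Equiv.Perm.sign π₂ : ℤ) : F) * ∏ b, B b (π₂ b))) := by
    intro π₁ π₂
    have hprod : ∏ p, (Matrix.of fun p q : Fin k ⊕ Fin (n - k) => R p (eqv n k hk q)) p
        (Phi hk ⟨⟨I, hI⟩, (π₁, π₂)⟩ p)
        = (∏ a, A a (π₁ a)) * ∏ b, B b (π₂ b) := by
      rw [Fintype.prod_sum_type]
      congr 1
      · apply Finset.prod_congr rfl
        intro a _
        simp [Phi, hA]
      · apply Finset.prod_congr rfl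
        intro b _
        simp [Phi, hB]
    rw [hprod, sign_Phi hk I hI π₁ π₂]
    push_cast
    ring
  calc (∑ π₁ : Equiv.Perm (Fin k), ∑ π₂ : Equiv.Perm (Fin (n - k)),
          ((Equiv.Perm.sign (Phi hk ⟨⟨I, hI⟩, (π₁, π₂)⟩) : ℤ) : F) *
            ∏ p, (Matrix.of fun p q : Fin k ⊕ Fin (n - k) => R p (eqv n k hk q)) p
              (Phi hk ⟨⟨I, hI⟩, (π₁, π₂)⟩ p))
      = ∑ π₁ : Equiv.Perm (Fin k), ∑ π₂ : Equiv.Perm (Fin (n - k)),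
          (-1 : F) ^ ell I hI *
            ((((Equiv.Perm.sign π₁ : ℤ) : F) * ∏ a, A a (π₁ a)) *
             (((Equiv.Perm.sign π₂ : ℤ) : F) * ∏ b, B b (π₂ b))) := by
        apply Finset.sum_congr rfl; intro π₁ _
        apply Finset.sum_congr rfl; intro π₂ _
        exact hterm π₁ π₂
    _ = (-1 : F) ^ ell I hI *
          ((∑ π₁ : Equiv.Perm (Fin k), ((Equiv.Perm.sign π₁ : ℤ) : F) * ∏ a, A a (π₁ a)) *
           (∑ π₂ : Equiv.Perm (Fin (n - k)), ((Equiv.Perm.sign π₂ : ℤ) : F) * ∏ b, B b (π₂ b))) := by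
        rw [Finset.sum_mul_sum]
        simp only [← Finset.mul_sum]
    _ = (-1 : F) ^ ell I hI * A.det * B.det := by
        rw [← det_row_form, ← det_row_form, mul_assoc]




lemma detD {m : ℕ} (t : Fin m → F) :
    (Matrix.of fun a b : Fin m => t a ^ (b.1 + 1)).det
      = (∏ a, t a) * ∏ i : Fin m, ∏ j ∈ Finset.Ioi i, (t j - t i) := by
  have h : (Matrix.of fun a b : Fin m => t a ^ (b.1 + 1))
      = Matrix.of fun i j => t i * (Matrix.vandermonde t) i j := by
    ext a b
    simp [Matrix.vandermonde, pow_succ, mul_comm]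
  rw [h, Matrix.det_mul_column, Matrix.det_vandermonde]

lemma detD_ne_zero {F : Type*} [Field F] {m : ℕ} (t : Fin m → F)
    (h0 : ∀ a, t a ≠ 0) (hinj : Function.Injective t) :
    (Matrix.of fun a b : Fin m => t a ^ (b.1 + 1)).det ≠ 0 := by
  rw [detD]
  apply mul_ne_zero
  · exact Finset.prod_ne_zero_iff.2 fun a _ => h0 a
  · rw [← Matrix.det_vandermonde]
    exact Matrix.det_vandermonde_ne_zero_iff.2 hinj

lemma prod_fin_split (hk : k ≤ n) (g : Fin n → F) :
    ∏ i, g i = (∏ a : Fin k, g ⟨a.1, by omega⟩) * ∏ b : Fin (n - k), g ⟨k + b.1, by omega⟩ := by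
  rw [← Equiv.prod_comp (eqv n k hk) g, Fintype.prod_sum_type]
  simp only [eqv_inl, eqv_inr]

lemma prod_ioi_ite {m : ℕ} (f : Fin m → Fin m → F) (i : Fin m) :
    ∏ j ∈ Finset.Ioi i, f i j = ∏ j, if i < j then f i j else 1 := by
  rw [← Finset.prod_filter]
  apply Finset.prod_congr _ (fun _ _ => rfl)
  ext j; simp

lemma prod_pairs_split (hk : k ≤ n) (x : Fin n → F) :
    (∏ i : Fin n, ∏ j ∈ Finset.Ioi i, (x j - x i))
      = ((∏ i : Fin k, ∏ j ∈ Finset.Ioi i,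
            (x ⟨j.1, by omega⟩ - x ⟨i.1, by omega⟩))
        * (∏ i : Fin (n - k), ∏ j ∈ Finset.Ioi i,
            (x ⟨k + j.1, by omega⟩ - x ⟨k + i.1, by omega⟩)))
        * ∏ a : Fin k, ∏ b : Fin (n - k), (x ⟨k + b.1, by omega⟩ - x ⟨a.1, by omega⟩) := by
  have step1 : ∀ i : Fin n, ∏ j ∈ Finset.Ioi i, (x j - x i)
      = ∏ j, if i < j then x j - x i else 1 := fun i => prod_ioi_ite (fun i j => x j - x i) i
  calc ∏ i : Fin n, ∏ j ∈ Finset.Ioi i, (x j - x i)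
      = ∏ i : Fin n, ∏ j : Fin n, (if i < j then x j - x i else 1) := by
        exact Finset.prod_congr rfl fun i _ => step1 i
    _ = (∏ a : Fin k, ∏ j : Fin n, (if (⟨a.1, by omega⟩ : Fin n) < j then x j - x ⟨a.1, by omega⟩ else 1))
        * ∏ b : Fin (n - k), ∏ j : Fin n,
            (if (⟨k + b.1, by omega⟩ : Fin n) < j then x j - x ⟨k + b.1, by omega⟩ else 1) := by
        exact prod_fin_split hk _
    _ = (∏ a : Fin k, (∏ c : Fin k, (if a < c then x ⟨c.1, by omega⟩ - x ⟨a.1, by omega⟩ else 1))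
            * ∏ d : Fin (n - k), (x ⟨k + d.1, by omega⟩ - x ⟨a.1, by omega⟩))
        * ∏ b : Fin (n - k), (∏ c : Fin k, (1 : F))
            * ∏ d : Fin (n - k), (if b < d then x ⟨k + d.1, by omega⟩ - x ⟨k + b.1, by omega⟩ else 1) := by
        refine congrArg₂ (· * ·) ?_ ?_
        · apply Finset.prod_congr rfl
          intro a _
          rw [prod_fin_split hk (fun j => if (⟨a.1, by omega⟩ : Fin n) < j then x j - x ⟨a.1, by omega⟩ else 1)]
          refine congrArg₂ (· * ·) ?_ ?_
          · refine Finset.prod_congr rfl fun c _ => ?_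
            first
            | rfl
            | simp only [Fin.mk_lt_mk, Fin.lt_def]
          · exact Finset.prod_congr rfl fun d _ => if_pos (Fin.mk_lt_mk.2 (by omega))
        · apply Finset.prod_congr rfl
          intro b _
          rw [prod_fin_split hk (fun j => if (⟨k + b.1, by omega⟩ : Fin n) < j then x j - x ⟨k + b.1, by omega⟩ else 1)]
          refine congrArg₂ (· * ·) ?_ ?_
          · exact Finset.prod_congr rfl fun c _ => if_neg (by simp only [Fin.mk_lt_mk]; omega)
          · refine Finset.prod_congr rfl fun d _ => ?_
            first
            | rfl
            | simp only [Fin.mk_lt_mk, Fin.lt_def, Nat.add_lt_add_iff_left]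
    _ = ((∏ i : Fin k, ∏ j ∈ Finset.Ioi i,
            (x ⟨j.1, by omega⟩ - x ⟨i.1, by omega⟩))
        * (∏ i : Fin (n - k), ∏ j ∈ Finset.Ioi i,
            (x ⟨k + j.1, by omega⟩ - x ⟨k + i.1, by omega⟩)))
        * ∏ a : Fin k, ∏ b : Fin (n - k), (x ⟨k + b.1, by omega⟩ - x ⟨a.1, by omega⟩) := by
        rw [Finset.prod_mul_distrib, Finset.prod_mul_distrib]
        simp only [Finset.prod_const_one, one_mul]
        rw [show ∀ (u v w : F), u * v * (w) = u * w * v from fun u v w => by ring]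
        congr 1
        · congr 1
          · exact Finset.prod_congr rfl fun i _ => (prod_ioi_ite (fun i j : Fin k => x ⟨j.1, by omega⟩ - x ⟨i.1, by omega⟩) i).symm
          · exact Finset.prod_congr rfl fun i _ => (prod_ioi_ite (fun i j : Fin (n-k) => x ⟨k + j.1, by omega⟩ - x ⟨k + i.1, by omega⟩) i).symm

lemma filter_form (hk : k ≤ n) (x : Fin n → F) :
    (∏ a ∈ Finset.univ.filter (fun a : Fin n => a.1 < k),
        ∏ b ∈ Finset.univ.filter (fun b : Fin n => k ≤ b.1), (x b - x a))
      = ∏ a : Fin k, ∏ b : Fin (n - k), (x ⟨k + b.1, by omega⟩ - x ⟨a.1, by omega⟩) := by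
  have himg1 : Finset.univ.filter (fun a : Fin n => a.1 < k)
      = Finset.image (fun a : Fin k => (⟨a.1, by omega⟩ : Fin n)) Finset.univ := by
    ext p
    simp only [Finset.mem_filter, Finset.mem_univ, true_and, Finset.mem_image]
    constructor
    · intro hp; exact ⟨⟨p.1, hp⟩, Fin.ext rfl⟩
    · rintro ⟨a, rfl⟩; exact a.2
  have himg2 : Finset.univ.filter (fun b : Fin n => k ≤ b.1)
      = Finset.image (fun b : Fin (n - k) => (⟨k + b.1, by omega⟩ : Fin n)) Finset.univ := by
    ext p
    simp only [Finset.mem_filter, Finset.mem_univ, true_and, Finset.mem_image]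
    constructor
    · intro hp
      refine ⟨⟨p.1 - k, by omega⟩, Fin.ext ?_⟩
      simp only [Fin.val_mk]
      omega
    · rintro ⟨b, rfl⟩; simp
  have hinj1 : ∀ a ∈ (Finset.univ : Finset (Fin k)), ∀ b ∈ Finset.univ,
      (fun a : Fin k => (⟨a.1, by omega⟩ : Fin n)) a
        = (fun a : Fin k => (⟨a.1, by omega⟩ : Fin n)) b → a = b := by
    intro a _ b _ h
    exact Fin.ext (by simpa using h)
  have hinj2 : ∀ a ∈ (Finset.univ : Finset (Fin (n - k))), ∀ b ∈ Finset.univ,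
      (fun b : Fin (n - k) => (⟨k + b.1, by omega⟩ : Fin n)) a
        = (fun b : Fin (n - k) => (⟨k + b.1, by omega⟩ : Fin n)) b → a = b := by
    intro a _ b _ h
    have : k + a.1 = k + b.1 := by simpa using h
    exact Fin.ext (by omega)
  rw [himg1, himg2, Finset.prod_image hinj1]
  apply Finset.prod_congr rfl
  intro a _
  rw [Finset.prod_image hinj2]




theorem main_aux {F : Type*} [Field F] (hk : k ≤ n) (x : Fin n → F)
    (h0 : ∀ p, x p ≠ 0) (hinj : Function.Injective x) :
    ∑ I : {s : Finset (Fin n) // s.card = k},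
        (-1 : F) ^ ell I.1 I.2 *
          ((Matrix.of fun a b : Fin k =>
              x ⟨a.1, by omega⟩ ^ ((enum I.1 I.2 b).1 + 1)).det /
           (Matrix.of fun a b : Fin k => x ⟨a.1, by omega⟩ ^ (b.1 + 1)).det) *
          ((Matrix.of fun a b : Fin (n - k) =>
              x ⟨k + a.1, by have := a.2; omega⟩ ^ ((enum I.1ᶜ (compl_card hk I.1 I.2) b).1 + 1)).det /
           (Matrix.of fun a b : Fin (n - k) => x ⟨k + a.1, by have := a.2; omega⟩ ^ (b.1 + 1)).det)
      = ∏ a ∈ Finset.univ.filter (fun a : Fin n => a.1 < k),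
          ∏ b ∈ Finset.univ.filter (fun b : Fin n => k ≤ b.1), (x b - x a) := by
  classical
  set D₁ : F := (Matrix.of fun a b : Fin k => x ⟨a.1, by omega⟩ ^ (b.1 + 1)).det with hD₁def
  set D₂ : F := (Matrix.of fun a b : Fin (n - k) => x ⟨k + a.1, by have := a.2; omega⟩ ^ (b.1 + 1)).det
    with hD₂def
  have hD₁ : D₁ ≠ 0 := by
    apply detD_ne_zero
    · intro a; exact h0 _
    · intro a b h
      exact Fin.ext (by simpa [Fin.ext_iff] using hinj h)
  have hD₂ : D₂ ≠ 0 := by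
    apply detD_ne_zero
    · intro a; exact h0 _
    · intro a b h
      have := hinj h
      simp only [Fin.mk.injEq] at this
      exact Fin.ext (by omega)
  set R : (Fin k ⊕ Fin (n - k)) → Fin n → F := fun p q =>
    (Sum.elim (fun a : Fin k => x ⟨a.1, by omega⟩)
      (fun b : Fin (n - k) => x ⟨k + b.1, by omega⟩) p) ^ (q.1 + 1) with hR
  calc ∑ I : {s : Finset (Fin n) // s.card = k},
        (-1 : F) ^ ell I.1 I.2 *
          ((Matrix.of fun a b : Fin k =>
              x ⟨a.1, by omega⟩ ^ ((enum I.1 I.2 b).1 + 1)).det / D₁) *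
          ((Matrix.of fun a b : Fin (n - k) =>
              x ⟨k + a.1, by have := a.2; omega⟩ ^ ((enum I.1ᶜ (compl_card hk I.1 I.2) b).1 + 1)).det / D₂)
      = ∑ I : {s : Finset (Fin n) // s.card = k},
          ((-1 : F) ^ ell I.1 I.2 *
            (Matrix.of fun a b : Fin k =>
              x ⟨a.1, by omega⟩ ^ ((enum I.1 I.2 b).1 + 1)).det *
            (Matrix.of fun a b : Fin (n - k) =>
              x ⟨k + a.1, by have := a.2; omega⟩ ^ ((enum I.1ᶜ (compl_card hk I.1 I.2) b).1 + 1)).det)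
          / (D₁ * D₂) := by
        apply Finset.sum_congr rfl
        intro I _
        rw [mul_assoc, div_mul_div_comm, ← mul_div_assoc, ← mul_assoc]
    _ = (∑ I : {s : Finset (Fin n) // s.card = k},
          (-1 : F) ^ ell I.1 I.2 *
            (Matrix.of fun a b : Fin k =>
              x ⟨a.1, by omega⟩ ^ ((enum I.1 I.2 b).1 + 1)).det *
            (Matrix.of fun a b : Fin (n - k) =>
              x ⟨k + a.1, by have := a.2; omega⟩ ^ ((enum I.1ᶜ (compl_card hk I.1 I.2) b).1 + 1)).det)
          / (D₁ * D₂) := by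
        rw [Finset.sum_div]
    _ = (Matrix.of fun p q : Fin n => R ((eqv n k hk).symm p) q).det / (D₁ * D₂) := by
        congr 1
        rw [laplace_det hk R]
        apply Finset.sum_congr rfl
        intro I _
        rfl
    _ = (Matrix.of fun p q : Fin n => x p ^ (q.1 + 1)).det / (D₁ * D₂) := by
        congr 2
        ext p q
        by_cases h : p.1 < k
        · rw [hR]
          simp only [Matrix.of_apply, eqv_symm_lt hk p h, Sum.elim_inl]
        · rw [hR]
          simp only [Matrix.of_apply, eqv_symm_ge hk p h, Sum.elim_inr]
          congr 2
          exact Fin.ext (by simp; omega)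
    _ = ∏ a ∈ Finset.univ.filter (fun a : Fin n => a.1 < k),
          ∏ b ∈ Finset.univ.filter (fun b : Fin n => k ≤ b.1), (x b - x a) := by
        rw [div_eq_iff (mul_ne_zero hD₁ hD₂), hD₁def, hD₂def,
          detD (fun a : Fin k => x ⟨a.1, by omega⟩),
          detD (fun b : Fin (n - k) => x ⟨k + b.1, by omega⟩),
          detD x, prod_fin_split hk x, prod_pairs_split hk x, filter_form hk x]
        ring


end LaplaceAux
/-- The Laplace-expansion identity (A.5):
`Σ_I (−1)^{ℓ(I)} V_I(x₁,…,x_k) V_{Ī}(x_{k+1},…,x_n) = ∏_{a≤k<b} (x_b − x_a)`. -/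
theorem laplace_schur_identity (n k : ℕ) (hk : k ≤ n) :
    ∑ I : {s : Finset (Fin n) // s.card = k},
        (-1 : RF n) ^ ell I.1 I.2 *
          V I.1 I.2 (fun a : Fin k => Xv n ⟨a.1, lt_of_lt_of_le a.2 hk⟩) *
          V (I.1ᶜ) (by simp [Finset.card_compl, I.2])
            (fun a : Fin (n - k) => Xv n ⟨k + a.1, by omega⟩)
      = ∏ a ∈ Finset.univ.filter (fun a : Fin n => a.1 < k),
          ∏ b ∈ Finset.univ.filter (fun b : Fin n => k ≤ b.1),
            (Xv n b - Xv n a) := by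
  have h0 : ∀ p : Fin n, Xv n p ≠ 0 := by
    intro p h
    exact MvPolynomial.X_ne_zero p
      ((map_eq_zero_iff _ (IsFractionRing.injective (MvPolynomial (Fin n) ℂ) (RF n))).1 h)
  have hinj : Function.Injective (Xv n) := fun p q h =>
    MvPolynomial.X_injective (IsFractionRing.injective (MvPolynomial (Fin n) ℂ) (RF n) h)
  exact LaplaceAux.main_aux hk (Xv n) h0 hinj

end
end

section
/- Let k ≤ n. For any two k-element subsets J, K of {1,...,n}: Σ_{I ∈ C(n,k)} V_J(x_I) · V_{K̄}(x_{Ī}) / R(x_I; x_{Ī}) = (-1)^{ℓ(J)} δ_{J,K}, where R(x_1,...,x_k; y_1,...,y_{n-k}) = ∏_{a=1}^k ∏_{b=1}^{n-k} (y_b - x_a), Ī is the complement of I, K̄ is the complement of K, and x_I denotes the tuple (x_i)_{i∈I} in increasing order. -/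
noncomputable section

open MvPolynomial

/-- `R(x₁,…,x_k; y₁,…,y_{n−k}) = ∏_{a,b} (y_b − x_a)`. -/
def Rfun {F : Type*} [Field F] {k m : ℕ} (x : Fin k → F) (y : Fin m → F) : F :=
  ∏ a : Fin k, ∏ b : Fin m, (y b - x a)

set_option maxHeartbeats 1000000
set_option synthInstance.maxHeartbeats 400000

namespace LapAux

lemma enum_strictMono {n m : ℕ} (I : Finset (Fin n)) (hI : I.card = m) :
    StrictMono (enum I hI) := fun a b hab => by
  simpa [enum] using (I.orderIsoOfFin hI).strictMono hab

lemma enum_mem {n m : ℕ} (I : Finset (Fin n)) (hI : I.card = m) (a : Fin m) :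
    enum I hI a ∈ I := (I.orderIsoOfFin hI a).2

lemma enum_surj {n m : ℕ} (I : Finset (Fin n)) (hI : I.card = m) {j : Fin n}
    (hj : j ∈ I) : ∃ a, enum I hI a = j :=
  ⟨(I.orderIsoOfFin hI).symm ⟨j, hj⟩, by simp [enum]⟩

lemma card_compl {n k : ℕ} (I : Finset (Fin n)) (hI : I.card = k) :
    Iᶜ.card = n - k := by simp [Finset.card_compl, hI]

variable {n k : ℕ}

/-- `Fin k ⊕ Fin (n-k) ≃ Fin n`, block order. -/
def ρ (hk : k ≤ n) : Fin k ⊕ Fin (n - k) ≃ Fin n :=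
  finSumFinEquiv.trans (finCongr (Nat.add_sub_cancel' hk))

@[simp] lemma ρ_inl (hk : k ≤ n) (a : Fin k) : (ρ hk (Sum.inl a) : ℕ) = a := by
  simp [ρ]

@[simp] lemma ρ_inr (hk : k ≤ n) (b : Fin (n - k)) : (ρ hk (Sum.inr b) : ℕ) = k + b := by
  simp [ρ]

/-- the block enumeration equiv for a `k`-subset `I`. -/
def eC (I : Finset (Fin n)) (hI : I.card = k) : Fin k ⊕ Fin (n - k) ≃ Fin n := by
  refine Equiv.ofBijective (Sum.elim (enum I hI) (enum Iᶜ (card_compl I hI))) ?_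
  rw [Fintype.bijective_iff_injective_and_card]
  constructor
  · intro s t hst
    cases s with
    | inl a => cases t with
      | inl b => simpa using (enum_strictMono I hI).injective (by simpa using hst)
      | inr b =>
          simp only [Sum.elim_inl, Sum.elim_inr] at hst
          have h1 := enum_mem I hI a
          have h2 := Finset.mem_compl.mp (enum_mem Iᶜ (card_compl I hI) b)
          rw [hst] at h1; exact absurd h1 h2
    | inr a => cases t with
      | inl b =>
          simp only [Sum.elim_inl, Sum.elim_inr] at hst
          have h1 := enum_mem I hI b
          have h2 := Finset.mem_compl.mp (enum_mem Iᶜ (card_compl I hI) a)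
          rw [← hst] at h1; exact absurd h1 h2
      | inr b => simpa using (enum_strictMono Iᶜ (card_compl I hI)).injective (by simpa using hst)
  · have hk : k ≤ n := by simpa [hI] using Finset.card_le_univ I
    simp [Nat.add_sub_cancel' hk]


@[simp] lemma eC_inl (I : Finset (Fin n)) (hI : I.card = k) (a : Fin k) :
    eC I hI (Sum.inl a) = enum I hI a := rfl

@[simp] lemma eC_inr (I : Finset (Fin n)) (hI : I.card = k) (b : Fin (n - k)) :
    eC I hI (Sum.inr b) = enum Iᶜ (card_compl I hI) b := rfl

/-- The block permutation sending the first `k` indices to `I` increasingly and the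
rest to `Iᶜ` increasingly. -/
def τ (hk : k ≤ n) (I : Finset (Fin n)) (hI : I.card = k) : Equiv.Perm (Fin n) :=
  (ρ hk).symm.trans (eC I hI)

@[simp] lemma τ_ρ (hk : k ≤ n) (I : Finset (Fin n)) (hI : I.card = k)
    (s : Fin k ⊕ Fin (n - k)) : τ hk I hI (ρ hk s) = eC I hI s := by
  simp [τ]


/-- The index type for the Laplace expansion. -/
abbrev LapIdx (n k : ℕ) : Type :=
  Σ _ : {s : Finset (Fin n) // s.card = k}, Equiv.Perm (Fin k) × Equiv.Perm (Fin (n - k))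

/-- The permutation associated to an index. -/
def Φ (hk : k ≤ n) (w : LapIdx n k) : Equiv.Perm (Fin n) :=
  τ hk w.1.1 w.1.2 * (ρ hk).permCongr (Equiv.sumCongr w.2.1 w.2.2)

lemma Φ_inl (hk : k ≤ n) (w : LapIdx n k) (b : Fin k) :
    Φ hk w (ρ hk (Sum.inl b)) = enum w.1.1 w.1.2 (w.2.1 b) := by
  simp [Φ, Equiv.Perm.mul_apply, Equiv.permCongr_apply]

lemma Φ_inr (hk : k ≤ n) (w : LapIdx n k) (b : Fin (n - k)) :
    Φ hk w (ρ hk (Sum.inr b)) = enum w.1.1ᶜ (card_compl w.1.1 w.1.2) (w.2.2 b) := by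
  simp [Φ, Equiv.Perm.mul_apply, Equiv.permCongr_apply]

lemma Φ_image (hk : k ≤ n) (w : LapIdx n k) :
    Finset.image (fun b : Fin k => Φ hk w (ρ hk (Sum.inl b))) Finset.univ = w.1.1 := by
  apply Finset.eq_of_subset_of_card_le
  · intro j hj
    simp only [Finset.mem_image] at hj
    obtain ⟨b, -, rfl⟩ := hj
    rw [Φ_inl]; exact enum_mem _ _ _
  · rw [w.1.2, Finset.card_image_of_injective _ ?_]
    · simp
    · intro a b hab
      simp only [Φ_inl] at hab
      exact w.2.1.injective ((enum_strictMono _ _).injective hab)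

lemma Φ_bijective (hk : k ≤ n) : Function.Bijective (Φ hk) := by
  rw [Fintype.bijective_iff_injective_and_card]
  constructor
  · rintro ⟨⟨I, hI⟩, p1, p2⟩ ⟨⟨I', hI'⟩, q1, q2⟩ h
    have hII' : I = I' := by
      have e1 := Φ_image hk ⟨⟨I, hI⟩, (p1, p2)⟩
      have e2 := Φ_image hk ⟨⟨I', hI'⟩, (q1, q2)⟩
      rw [h] at e1
      exact e1.symm.trans e2
    subst hII'
    have hsc : Equiv.sumCongr p1 p2 = Equiv.sumCongr q1 q2 := by simpa [Φ] using h
    have h1 : p1 = q1 := by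
      ext b
      have := congrArg (fun e => e (Sum.inl b)) (congrArg Equiv.toFun hsc)
      simp only [Equiv.toFun_as_coe, Equiv.sumCongr_apply, Sum.map_inl, Sum.inl.injEq] at this
      exact congrArg Fin.val this
    have h2 : p2 = q2 := by
      ext b
      have := congrArg (fun e => e (Sum.inr b)) (congrArg Equiv.toFun hsc)
      simp only [Equiv.toFun_as_coe, Equiv.sumCongr_apply, Sum.map_inr, Sum.inr.injEq] at this
      exact congrArg Fin.val this
    simp [h1, h2]
  · simp only [Fintype.card_sigma, Fintype.card_prod, Fintype.card_perm, Fintype.card_fin,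
      Finset.sum_const, Finset.card_univ, Fintype.card_finset_len, smul_eq_mul]
    rw [← mul_assoc, Nat.choose_mul_factorial_mul_factorial hk]

open Equiv in
lemma laplace {R : Type*} [CommRing R] (hk : k ≤ n) (M : Matrix (Fin n) (Fin n) R) :
    M.det = ∑ I : {s : Finset (Fin n) // s.card = k},
      ((Equiv.Perm.sign (τ hk I.1 I.2) : ℤ) : R) *
        ((Matrix.of fun a b : Fin k => M (enum I.1 I.2 a) (ρ hk (Sum.inl b))).det *
         (Matrix.of fun a b : Fin (n - k) =>
            M (enum I.1ᶜ (card_compl I.1 I.2) a) (ρ hk (Sum.inr b))).det) := by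
  rw [Matrix.det_apply]
  rw [← Fintype.sum_bijective (Φ hk) (Φ_bijective hk)
      (fun w => Equiv.Perm.sign (Φ hk w) • ∏ i, M (Φ hk w i) i)
      (fun σ => Equiv.Perm.sign σ • ∏ i, M (σ i) i) (fun w => rfl)]
  rw [← Finset.univ_sigma_univ, Finset.sum_sigma]
  refine Finset.sum_congr rfl fun I _ => ?_
  rw [Matrix.det_apply, Matrix.det_apply, Finset.sum_mul_sum]
  simp only [Finset.mul_sum]
  rw [Fintype.sum_prod_type]
  refine Finset.sum_congr rfl fun p1 _ => Finset.sum_congr rfl fun p2 _ => ?_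
  have hsign : Equiv.Perm.sign (Φ hk ⟨I, (p1, p2)⟩)
      = Equiv.Perm.sign (τ hk I.1 I.2) * (Equiv.Perm.sign p1 * Equiv.Perm.sign p2) := by
    simp [Φ, Equiv.Perm.sign_permCongr, Equiv.Perm.sign_sumCongr]
  have hprod : ∏ i, M (Φ hk ⟨I, (p1, p2)⟩ i) i
      = (∏ b, M (enum I.1 I.2 (p1 b)) (ρ hk (Sum.inl b))) *
        (∏ b, M (enum I.1ᶜ (card_compl I.1 I.2) (p2 b)) (ρ hk (Sum.inr b))) := by
    rw [← Equiv.prod_comp (ρ hk) (fun i => M (Φ hk ⟨I, (p1, p2)⟩ i) i), Fintype.prod_sum_type]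
    exact congrArg₂ _ (Finset.prod_congr rfl fun b _ => by rw [Φ_inl])
      (Finset.prod_congr rfl fun b _ => by rw [Φ_inr])
  rw [hsign, hprod]
  simp only [Units.smul_def, zsmul_eq_mul, Matrix.of_apply]
  push_cast
  ring


section Vand

variable {R : Type*} [CommRing R]

/-- difference product -/
def Vd {m : ℕ} (t : Fin m → R) : R := ∏ i, ∏ j ∈ Finset.Ioi i, (t j - t i)

/-- the `V`-denominator determinant -/
def Wd {m : ℕ} (t : Fin m → R) : R := (Matrix.of fun a b : Fin m => t a ^ (b.1 + 1)).det

lemma Wd_eq {m : ℕ} (t : Fin m → R) : Wd t = (∏ a, t a) * Vd t := by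
  have hM : (Matrix.of fun a b : Fin m => t a ^ (b.1 + 1))
      = Matrix.diagonal t * Matrix.vandermonde t := by
    ext a b
    simp [Matrix.diagonal_mul, Matrix.vandermonde, pow_succ']
  rw [Wd, hM, Matrix.det_mul, Matrix.det_diagonal, Matrix.det_vandermonde, Vd]

lemma Vd_permute {m : ℕ} (t : Fin m → R) (σ : Equiv.Perm (Fin m)) :
    Vd (t ∘ σ) = ((Equiv.Perm.sign σ : ℤ) : R) * Vd t := by
  have h1 : (Matrix.vandermonde t).submatrix σ id = Matrix.vandermonde (t ∘ σ) := by
    ext i j; rfl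
  have := Matrix.det_permute σ (Matrix.vandermonde t)
  rw [h1, Matrix.det_vandermonde, Matrix.det_vandermonde] at this
  rw [Vd, Vd, this]

lemma vd_ite {m : ℕ} (u : Fin m → R) :
    Vd u = ∏ i, ∏ j, if i < j then (u j - u i) else 1 := by
  refine Finset.prod_congr rfl fun i _ => ?_
  rw [← Finset.prod_filter]
  congr 1
  ext j
  simp

variable {n k : ℕ}

lemma ρ_lt_ll (hk : k ≤ n) (a b : Fin k) :
    ρ hk (Sum.inl a) < ρ hk (Sum.inl b) ↔ a < b := by
  rw [Fin.lt_def, Fin.lt_def, ρ_inl, ρ_inl]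

lemma ρ_lt_lr (hk : k ≤ n) (a : Fin k) (b : Fin (n - k)) :
    ρ hk (Sum.inl a) < ρ hk (Sum.inr b) := by
  rw [Fin.lt_def, ρ_inl, ρ_inr]
  have := a.2
  omega

lemma ρ_lt_rl (hk : k ≤ n) (a : Fin (n - k)) (b : Fin k) :
    ¬ ρ hk (Sum.inr a) < ρ hk (Sum.inl b) := by
  rw [Fin.lt_def, ρ_inr, ρ_inl]
  have := b.2
  omega

lemma ρ_lt_rr (hk : k ≤ n) (a b : Fin (n - k)) :
    ρ hk (Sum.inr a) < ρ hk (Sum.inr b) ↔ a < b := by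
  rw [Fin.lt_def, Fin.lt_def, ρ_inr, ρ_inr]
  omega

lemma Vd_split (hk : k ≤ n) (I : Finset (Fin n)) (hI : I.card = k) (t : Fin n → R) :
    Vd (t ∘ (τ hk I hI)) = Vd (t ∘ enum I hI) * Vd (t ∘ enum Iᶜ (card_compl I hI)) *
      ∏ a : Fin k, ∏ b : Fin (n - k),
        (t (enum Iᶜ (card_compl I hI) b) - t (enum I hI a)) := by
  rw [vd_ite, vd_ite, vd_ite]
  have step1 : (∏ i, ∏ j, if i < j then ((t ∘ τ hk I hI) j - (t ∘ τ hk I hI) i) else 1)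
      = ∏ s : Fin k ⊕ Fin (n - k), ∏ s' : Fin k ⊕ Fin (n - k),
          if ρ hk s < ρ hk s' then (t (eC I hI s') - t (eC I hI s)) else 1 := by
    rw [← Equiv.prod_comp (ρ hk)
      (fun i => ∏ j, if i < j then ((t ∘ τ hk I hI) j - (t ∘ τ hk I hI) i) else 1)]
    refine Finset.prod_congr rfl fun s _ => ?_
    rw [← Equiv.prod_comp (ρ hk)
      (fun j => if ρ hk s < j then ((t ∘ τ hk I hI) j - (t ∘ τ hk I hI) (ρ hk s)) else 1)]
    refine Finset.prod_congr rfl fun s' _ => ?_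
    simp only [Function.comp_apply, τ_ρ]
  rw [step1, Fintype.prod_sum_type]
  have inner1 : ∀ a : Fin k,
      (∏ s' : Fin k ⊕ Fin (n - k), if ρ hk (Sum.inl a) < ρ hk s'
          then t (eC I hI s') - t (enum I hI a) else 1)
      = (∏ b : Fin k, if a < b then t (enum I hI b) - t (enum I hI a) else 1) *
        ∏ b : Fin (n - k), (t (enum Iᶜ (card_compl I hI) b) - t (enum I hI a)) := by
    intro a
    rw [Fintype.prod_sum_type]
    simp [ρ_lt_ll, ρ_lt_lr]
  have inner2 : ∀ a : Fin (n - k),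
      (∏ s' : Fin k ⊕ Fin (n - k), if ρ hk (Sum.inr a) < ρ hk s'
          then t (eC I hI s') - t (enum Iᶜ (card_compl I hI) a) else 1)
      = ∏ b : Fin (n - k), if a < b then t (enum Iᶜ (card_compl I hI) b)
          - t (enum Iᶜ (card_compl I hI) a) else 1 := by
    intro a
    rw [Fintype.prod_sum_type]
    simp [ρ_lt_rl, ρ_lt_rr]
  simp only [inner1, inner2, Finset.prod_mul_distrib, Function.comp_apply, eC_inl, eC_inr]
  ring

lemma Wd_factor (hk : k ≤ n) (I : Finset (Fin n)) (hI : I.card = k) (t : Fin n → R) :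
    Wd (t ∘ enum I hI) * Wd (t ∘ enum Iᶜ (card_compl I hI)) *
      (∏ a : Fin k, ∏ b : Fin (n - k),
        (t (enum Iᶜ (card_compl I hI) b) - t (enum I hI a)))
      = ((Equiv.Perm.sign (τ hk I hI) : ℤ) : R) * Wd t := by
  have hτprod : (∏ a : Fin k, (t ∘ enum I hI) a) *
      (∏ b : Fin (n - k), (t ∘ enum Iᶜ (card_compl I hI)) b) = ∏ i, t i := by
    exact (Fintype.prod_sum_type fun s => t (eC I hI s)).symm.trans
      (Equiv.prod_comp (eC I hI) t)
  calc Wd (t ∘ enum I hI) * Wd (t ∘ enum Iᶜ (card_compl I hI)) *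
      (∏ a : Fin k, ∏ b : Fin (n - k),
        (t (enum Iᶜ (card_compl I hI) b) - t (enum I hI a)))
      = ((∏ a : Fin k, (t ∘ enum I hI) a) *
          (∏ b : Fin (n - k), (t ∘ enum Iᶜ (card_compl I hI)) b)) *
        (Vd (t ∘ enum I hI) * Vd (t ∘ enum Iᶜ (card_compl I hI)) *
          ∏ a : Fin k, ∏ b : Fin (n - k),
            (t (enum Iᶜ (card_compl I hI) b) - t (enum I hI a))) := by
        rw [Wd_eq, Wd_eq]; ring
    _ = (∏ i, t i) * Vd (t ∘ (τ hk I hI)) := by rw [hτprod, ← Vd_split]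
    _ = ((Equiv.Perm.sign (τ hk I hI) : ℤ) : R) * Wd t := by
        rw [Vd_permute, Wd_eq]; ring

end Vand

section Sign

variable {n k : ℕ}

lemma ell_eq (hk : k ≤ n) (I : Finset (Fin n)) (hI : I.card = k) :
    ell I hI = ∑ a : Fin k, (Finset.univ.filter fun b : Fin (n - k) =>
      enum Iᶜ (card_compl I hI) b < enum I hI a).card := by
  unfold ell
  refine Finset.sum_congr rfl fun a _ => ?_
  set i := enum I hI a with hi
  have hA : (Finset.univ.filter fun b : Fin (n - k) =>
      enum Iᶜ (card_compl I hI) b < i).card = (Iᶜ.filter (· < i)).card := by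
    refine Finset.card_bij (fun b _ => enum Iᶜ (card_compl I hI) b) ?_ ?_ ?_
    · intro b hb
      simp only [Finset.mem_filter] at hb ⊢
      exact ⟨enum_mem _ _ _, hb.2⟩
    · intro b hb b' hb' h
      exact (enum_strictMono _ _).injective h
    · intro j hj
      simp only [Finset.mem_filter] at hj
      obtain ⟨b, rfl⟩ := enum_surj Iᶜ (card_compl I hI) hj.1
      exact ⟨b, by simpa using hj.2, rfl⟩
  have hB : (I.filter (· < i)).card = a.1 := by
    have : (I.filter (· < i)).card = (Finset.Iio a).card := by
      refine (Finset.card_bij (fun b _ => enum I hI b) ?_ ?_ ?_).symm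
      · intro b hb
        simp only [Finset.mem_Iio] at hb
        simp only [Finset.mem_filter]
        exact ⟨enum_mem _ _ _, enum_strictMono I hI hb⟩
      · intro b hb b' hb' h
        exact (enum_strictMono _ _).injective h
      · intro j hj
        simp only [Finset.mem_filter] at hj
        obtain ⟨b, rfl⟩ := enum_surj I hI hj.1
        exact ⟨b, by simpa [Finset.mem_Iio] using
          (enum_strictMono I hI).lt_iff_lt.mp hj.2, rfl⟩
    rw [this, Fin.card_Iio]
  have hC : (I.filter (· < i)).card + (Iᶜ.filter (· < i)).card = i.1 := by
    rw [← Finset.card_union_of_disjoint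
        (Finset.disjoint_filter_filter disjoint_compl_right),
      ← Finset.filter_union, Finset.union_compl]
    have : Finset.univ.filter (· < i) = Finset.Iio i := by
      ext j; simp
    rw [this, Fin.card_Iio]
  omega

lemma sign_tau (hk : k ≤ n) (I : Finset (Fin n)) (hI : I.card = k) :
    ((Equiv.Perm.sign (τ hk I hI) : ℤ)) = (-1) ^ (ell I hI) := by
  set t : Fin n → ℚ := fun i => (i.1 : ℚ) with ht
  have htmono : StrictMono t := by
    intro i j hij
    have := Fin.lt_def.mp hij
    show ((i.1 : ℚ)) < ((j.1 : ℚ))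
    exact_mod_cast this
  have hVdpos : ∀ {m : ℕ} (u : Fin m → ℚ), StrictMono u → 0 < Vd u := by
    intro m u hu
    refine Finset.prod_pos fun i _ => Finset.prod_pos fun j hj => ?_
    rw [Finset.mem_Ioi] at hj
    exact sub_pos.mpr (hu hj)
  have key : ((Equiv.Perm.sign (τ hk I hI) : ℤ) : ℚ) * Vd t
      = Vd (t ∘ enum I hI) * Vd (t ∘ enum Iᶜ (card_compl I hI)) *
        ∏ a : Fin k, ∏ b : Fin (n - k),
          (t (enum Iᶜ (card_compl I hI) b) - t (enum I hI a)) := by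
    rw [← Vd_permute, Vd_split]
  have hMix : 0 < (-1 : ℚ) ^ (ell I hI) *
      ∏ a : Fin k, ∏ b : Fin (n - k),
        (t (enum Iᶜ (card_compl I hI) b) - t (enum I hI a)) := by
    rw [ell_eq hk I hI, ← Finset.prod_pow_eq_pow_sum, ← Finset.prod_mul_distrib]
    refine Finset.prod_pos fun a _ => ?_
    rw [← Finset.prod_filter_mul_prod_filter_not Finset.univ
      (fun b => enum Iᶜ (card_compl I hI) b < enum I hI a)
      (fun b => t (enum Iᶜ (card_compl I hI) b) - t (enum I hI a)), ← mul_assoc]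
    have hneg : (-1 : ℚ) ^ (Finset.univ.filter fun b : Fin (n - k) =>
          enum Iᶜ (card_compl I hI) b < enum I hI a).card *
        ∏ b ∈ (Finset.univ.filter fun b : Fin (n - k) =>
          enum Iᶜ (card_compl I hI) b < enum I hI a),
          (t (enum Iᶜ (card_compl I hI) b) - t (enum I hI a))
        = ∏ b ∈ (Finset.univ.filter fun b : Fin (n - k) =>
          enum Iᶜ (card_compl I hI) b < enum I hI a),
          (t (enum I hI a) - t (enum Iᶜ (card_compl I hI) b)) := by
      rw [← Finset.prod_const, ← Finset.prod_mul_distrib]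
      exact Finset.prod_congr rfl fun b _ => by ring
    rw [hneg]
    apply mul_pos
    · refine Finset.prod_pos fun b hb => ?_
      rw [Finset.mem_filter] at hb
      exact sub_pos.mpr (htmono hb.2)
    · refine Finset.prod_pos fun b hb => ?_
      rw [Finset.mem_filter] at hb
      have hne : enum Iᶜ (card_compl I hI) b ≠ enum I hI a := by
        intro h
        have h1 := enum_mem Iᶜ (card_compl I hI) b
        rw [h] at h1
        exact (Finset.mem_compl.mp h1) (enum_mem I hI a)
      exact sub_pos.mpr (htmono (lt_of_le_of_ne (not_lt.mp hb.2) fun h => hne h.symm))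
  have h1 : 0 < Vd t := hVdpos t htmono
  have h2 : 0 < Vd (t ∘ enum I hI) :=
    hVdpos _ (htmono.comp (enum_strictMono I hI))
  have h3 : 0 < Vd (t ∘ enum Iᶜ (card_compl I hI)) :=
    hVdpos _ (htmono.comp (enum_strictMono Iᶜ (card_compl I hI)))
  rcases Int.units_eq_one_or (Equiv.Perm.sign (τ hk I hI)) with h | h <;>
    rcases Nat.even_or_odd (ell I hI) with he | he
  · rw [h, he.neg_one_pow]; simp
  · exfalso
    rw [h] at key
    rw [he.neg_one_pow] at hMix
    push_cast at key
    nlinarith [key, hMix, h1, mul_pos h2 h3]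
  · exfalso
    rw [h] at key
    rw [he.neg_one_pow] at hMix
    push_cast at key
    nlinarith [key, hMix, h1, mul_pos h2 h3]
  · rw [h, he.neg_one_pow]; simp

end Sign


section NonVanish

variable {n : ℕ}

lemma Xv_injective : Function.Injective (Xv n) := fun i j h =>
  MvPolynomial.X_injective (IsFractionRing.injective (MvPolynomial (Fin n) ℂ) (RF n) h)

lemma Xv_ne_zero (i : Fin n) : Xv n i ≠ 0 := by
  have := (map_ne_zero_iff (algebraMap (MvPolynomial (Fin n) ℂ) (RF n))
    (IsFractionRing.injective (MvPolynomial (Fin n) ℂ) (RF n))).mpr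
    (MvPolynomial.X_ne_zero (R := ℂ) i)
  simpa [Xv] using this

lemma Wd_comp_ne {m : ℕ} (u : Fin m → Fin n) (hu : Function.Injective u) :
    Wd (fun a => Xv n (u a)) ≠ 0 := by
  rw [Wd_eq]
  apply mul_ne_zero
  · exact Finset.prod_ne_zero_iff.mpr fun a _ => Xv_ne_zero _
  · unfold Vd
    refine Finset.prod_ne_zero_iff.mpr fun i _ => Finset.prod_ne_zero_iff.mpr fun j hj => ?_
    rw [Finset.mem_Ioi] at hj
    exact sub_ne_zero.mpr (Xv_injective.ne (hu.ne (ne_of_gt hj)))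

lemma Rfun_ne {k : ℕ} (I : Finset (Fin n)) (hI : I.card = k) (hIc : Iᶜ.card = n - k) :
    Rfun (fun a => Xv n (enum I hI a)) (fun b => Xv n (enum Iᶜ hIc b)) ≠ 0 := by
  unfold Rfun
  refine Finset.prod_ne_zero_iff.mpr fun a _ => Finset.prod_ne_zero_iff.mpr fun b _ => ?_
  refine sub_ne_zero.mpr (Xv_injective.ne fun h => ?_)
  have h1 := enum_mem Iᶜ hIc b
  rw [h] at h1
  exact (Finset.mem_compl.mp h1) (enum_mem I hI a)

end NonVanish

section Term

variable {n k : ℕ}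

lemma term_eq (hk : k ≤ n) (J K : Finset (Fin n)) (hJ : J.card = k)
    (hKc : Kᶜ.card = n - k) (I : Finset (Fin n)) (hI : I.card = k) :
    V J hJ (fun a => Xv n (enum I hI a)) *
      V Kᶜ hKc (fun b => Xv n (enum Iᶜ (card_compl I hI) b)) /
      Rfun (fun a => Xv n (enum I hI a)) (fun b => Xv n (enum Iᶜ (card_compl I hI) b))
    = ((Equiv.Perm.sign (τ hk I hI) : ℤ) : RF n) *
        ((Matrix.of fun a b : Fin k =>
            Xv n (enum I hI a) ^ ((enum J hJ b).1 + 1)).det *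
         (Matrix.of fun a b : Fin (n - k) =>
            Xv n (enum Iᶜ (card_compl I hI) a) ^ ((enum Kᶜ hKc b).1 + 1)).det)
      / Wd (Xv n) := by
  have d1 : Wd (fun a => Xv n (enum I hI a)) ≠ 0 :=
    Wd_comp_ne _ (enum_strictMono I hI).injective
  have d2 : Wd (fun b => Xv n (enum Iᶜ (card_compl I hI) b)) ≠ 0 :=
    Wd_comp_ne _ (enum_strictMono Iᶜ (card_compl I hI)).injective
  have d3 := Rfun_ne I hI (card_compl I hI)
  have hfac : Wd (fun a => Xv n (enum I hI a)) *
      Wd (fun b => Xv n (enum Iᶜ (card_compl I hI) b)) *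
      Rfun (fun a => Xv n (enum I hI a)) (fun b => Xv n (enum Iᶜ (card_compl I hI) b))
      = ((Equiv.Perm.sign (τ hk I hI) : ℤ) : RF n) * Wd (Xv n) :=
    Wd_factor hk I hI (Xv n)
  have hV1 : V J hJ (fun a => Xv n (enum I hI a))
      = (Matrix.of fun a b : Fin k =>
          Xv n (enum I hI a) ^ ((enum J hJ b).1 + 1)).det / Wd (fun a => Xv n (enum I hI a)) :=
    rfl
  have hV2 : V Kᶜ hKc (fun b => Xv n (enum Iᶜ (card_compl I hI) b))
      = (Matrix.of fun a b : Fin (n - k) =>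
          Xv n (enum Iᶜ (card_compl I hI) a) ^ ((enum Kᶜ hKc b).1 + 1)).det /
        Wd (fun b => Xv n (enum Iᶜ (card_compl I hI) b)) := rfl
  rw [hV1, hV2, div_mul_div_comm, div_div, hfac]
  rcases Int.units_eq_one_or (Equiv.Perm.sign (τ hk I hI)) with h | h <;> rw [h] <;> push_cast
  · rw [one_mul, one_mul]
  · have hW : Wd (Xv n) ≠ 0 := Wd_comp_ne id Function.injective_id
    field_simp

end Term

end LapAux

open LapAux

/-- The dual Laplace identity (A.6):
`Σ_I V_J(x_I) V_{K̄}(x_{Ī}) / R(x_I; x_{Ī}) = (−1)^{ℓ(J)} δ_{J,K}`. -/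
theorem laplace_schur_orthogonality (n k : ℕ) (hk : k ≤ n)
    (J K : Finset (Fin n)) (hJ : J.card = k) (hK : K.card = k) :
    ∑ I : {s : Finset (Fin n) // s.card = k},
        V J hJ (fun a => Xv n (enum I.1 I.2 a)) *
          V (m := n - k) (Kᶜ) (by simp [Finset.card_compl, hK])
            (fun b => Xv n (enum (m := n - k) (I.1ᶜ) (by simp [Finset.card_compl, I.2]) b)) /
          Rfun (fun a => Xv n (enum I.1 I.2 a))
            (fun b => Xv n (enum (m := n - k) (I.1ᶜ) (by simp [Finset.card_compl, I.2]) b))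
      = (-1 : RF n) ^ ell J hJ * (if J = K then 1 else 0) := by
  classical
  have hKc : Kᶜ.card = n - k := card_compl K hK
  have hW : Wd (Xv n) ≠ 0 := Wd_comp_ne id Function.injective_id
  set M : Matrix (Fin n) (Fin n) (RF n) := Matrix.of fun a col =>
    Xv n a ^ (Sum.elim (fun b : Fin k => (enum J hJ b).1 + 1)
      (fun b : Fin (n - k) => (enum Kᶜ hKc b).1 + 1) ((ρ hk).symm col)) with hM
  have step1 : (∑ I : {s : Finset (Fin n) // s.card = k},
        V J hJ (fun a => Xv n (enum I.1 I.2 a)) *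
          V (m := n - k) (Kᶜ) (by simp [Finset.card_compl, hK])
            (fun b => Xv n (enum (m := n - k) (I.1ᶜ) (by simp [Finset.card_compl, I.2]) b)) /
          Rfun (fun a => Xv n (enum I.1 I.2 a))
            (fun b => Xv n (enum (m := n - k) (I.1ᶜ) (by simp [Finset.card_compl, I.2]) b)))
      = M.det / Wd (Xv n) := by
    have hsum : ∑ I : {s : Finset (Fin n) // s.card = k},
        ((Equiv.Perm.sign (τ hk I.1 I.2) : ℤ) : RF n) *
          ((Matrix.of fun a b : Fin k =>
              Xv n (enum I.1 I.2 a) ^ ((enum J hJ b).1 + 1)).det *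
           (Matrix.of fun a b : Fin (n - k) =>
              Xv n (enum I.1ᶜ (card_compl I.1 I.2) a) ^ ((enum Kᶜ hKc b).1 + 1)).det)
        = M.det := by
      rw [laplace hk M]
      refine Finset.sum_congr rfl fun I _ => ?_
      congr 2
      · exact congrArg Matrix.det (by
          ext a b
          simp [hM, Equiv.symm_apply_apply])
      · exact congrArg Matrix.det (by
          ext a b
          simp [hM, Equiv.symm_apply_apply])
    calc (∑ I : {s : Finset (Fin n) // s.card = k},
        V J hJ (fun a => Xv n (enum I.1 I.2 a)) *
          V (m := n - k) (Kᶜ) (by simp [Finset.card_compl, hK])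
            (fun b => Xv n (enum (m := n - k) (I.1ᶜ) (by simp [Finset.card_compl, I.2]) b)) /
          Rfun (fun a => Xv n (enum I.1 I.2 a))
            (fun b => Xv n (enum (m := n - k) (I.1ᶜ) (by simp [Finset.card_compl, I.2]) b)))
        = ∑ I : {s : Finset (Fin n) // s.card = k},
            ((Equiv.Perm.sign (τ hk I.1 I.2) : ℤ) : RF n) *
              ((Matrix.of fun a b : Fin k =>
                  Xv n (enum I.1 I.2 a) ^ ((enum J hJ b).1 + 1)).det *
               (Matrix.of fun a b : Fin (n - k) =>
                  Xv n (enum I.1ᶜ (card_compl I.1 I.2) a) ^ ((enum Kᶜ hKc b).1 + 1)).det)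
              / Wd (Xv n) :=
          Finset.sum_congr rfl fun I _ => term_eq hk J K hJ hKc I.1 I.2
      _ = (∑ I : {s : Finset (Fin n) // s.card = k},
            ((Equiv.Perm.sign (τ hk I.1 I.2) : ℤ) : RF n) *
              ((Matrix.of fun a b : Fin k =>
                  Xv n (enum I.1 I.2 a) ^ ((enum J hJ b).1 + 1)).det *
               (Matrix.of fun a b : Fin (n - k) =>
                  Xv n (enum I.1ᶜ (card_compl I.1 I.2) a) ^ ((enum Kᶜ hKc b).1 + 1)).det))
              / Wd (Xv n) := by rw [← Finset.sum_div]
      _ = M.det / Wd (Xv n) := by rw [hsum]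
  rw [step1]
  by_cases hJK : J = K
  · subst hJK
    rw [if_pos rfl]
    have hMW : M = (Matrix.of fun a b : Fin n =>
        Xv n a ^ (b.1 + 1)).submatrix id (τ hk J hJ) := by
      ext a col
      show Xv n a ^ (Sum.elim (fun b : Fin k => (enum J hJ b).1 + 1)
          (fun b : Fin (n - k) => (enum Jᶜ hKc b).1 + 1) ((ρ hk).symm col))
        = Xv n a ^ ((eC J hJ ((ρ hk).symm col)).1 + 1)
      congr 1
      generalize (ρ hk).symm col = s
      cases s <;> rfl
    have hdet : M.det = ((Equiv.Perm.sign (τ hk J hJ) : ℤ) : RF n) * Wd (Xv n) := by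
      rw [hMW, Matrix.det_permute']
      rfl
    rw [hdet, mul_div_assoc, div_self hW, mul_one, sign_tau hk J hJ]
    push_cast
    ring
  · rw [if_neg hJK]
    have hdet : M.det = 0 := by
      obtain ⟨j, hjJ, hjK⟩ := Finset.not_subset.mp
        (fun hsub => hJK (Finset.eq_of_subset_of_card_le hsub (le_of_eq (hK.trans hJ.symm))))
      obtain ⟨b1, hb1⟩ := enum_surj J hJ hjJ
      obtain ⟨b2, hb2⟩ := enum_surj Kᶜ hKc (Finset.mem_compl.mpr hjK)
      refine Matrix.det_zero_of_column_eq (i := ρ hk (Sum.inl b1))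
        (j := ρ hk (Sum.inr b2)) (fun h => by simpa using (ρ hk).injective h) fun a => ?_
      simp [hM, Equiv.symm_apply_apply, hb1, hb2]
    rw [hdet, zero_div, mul_zero]

end
end

section
/- The reduced weight function W(t; γ; γ̄; h) := Sym_{t_1,...,t_k} [ ∏_{i=1}^k ( ∏_{l=1}^{i-1}(t_i − γ_l − h) · ∏_{m=i+1}^{k}(t_i − γ_m) · ∏_{j=i+1}^k (t_i − t_j − h)/(t_i − t_j) ) · ∏_{s=1}^{n−k}(t_i − γ̄_s) ] is a polynomial in t_1,...,t_k (i.e., the apparent denominators ∏(t_i − t_j) cancel after symmetrization), and it is symmetric in γ_1,...,γ_k. -/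
set_option synthInstance.maxHeartbeats 1000000
set_option maxHeartbeats 1000000
set_option linter.unusedSectionVars false
set_option linter.unusedVariables false
set_option linter.unusedTactic false

noncomputable section

open MvPolynomial

/-- Variables: `t₁,…,t_k`, `γ₁,…,γ_k`, `γ̄₁,…,γ̄_{n−k}`, and `h`. -/
abbrev WVar (n k : ℕ) : Type := Fin k ⊕ (Fin k ⊕ (Fin (n - k) ⊕ Unit))

/-- The rational-function field in the variables `t, γ, γ̄, h`. -/
abbrev WF (n k : ℕ) : Type := FractionRing (MvPolynomial (WVar n k) ℂ)

def tV (n k : ℕ) (i : Fin k) : WF n k :=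
  algebraMap (MvPolynomial (WVar n k) ℂ) (WF n k) (X (Sum.inl i))

def γV (n k : ℕ) (l : Fin k) : WF n k :=
  algebraMap (MvPolynomial (WVar n k) ℂ) (WF n k) (X (Sum.inr (Sum.inl l)))

def γbV (n k : ℕ) (s : Fin (n - k)) : WF n k :=
  algebraMap (MvPolynomial (WVar n k) ℂ) (WF n k) (X (Sum.inr (Sum.inr (Sum.inl s))))

def hV (n k : ℕ) : WF n k :=
  algebraMap (MvPolynomial (WVar n k) ℂ) (WF n k) (X (Sum.inr (Sum.inr (Sum.inr ()))))

/-- The reduced weight function `W(t; γ; γ̄; h)`: the symmetrization over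
`t₁,…,t_k` of
`∏_i [∏_{l<i}(t_i−γ_l−h) ∏_{m>i}(t_i−γ_m) ∏_{j>i}(t_i−t_j−h)/(t_i−t_j)
  ∏_s (t_i−γ̄_s)]`. -/
def Wred (n k : ℕ) : WF n k :=
  ∑ σ : Equiv.Perm (Fin k), ∏ i : Fin k,
    ((∏ l ∈ Finset.univ.filter (fun l : Fin k => l < i),
        (tV n k (σ i) - γV n k l - hV n k)) *
     (∏ m ∈ Finset.univ.filter (fun m : Fin k => i < m),
        (tV n k (σ i) - γV n k m)) *
     (∏ j ∈ Finset.univ.filter (fun j : Fin k => i < j),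
        ((tV n k (σ i) - tV n k (σ j) - hV n k) / (tV n k (σ i) - tV n k (σ j)))) *
     ∏ s : Fin (n - k), (tV n k (σ i) - γbV n k s))


-- ===== auxiliary machinery =====

section Subst
set_option linter.unusedSectionVars false
variable {σR : Type*} {A : Type*} [CommRing A] [IsDomain A] [DecidableEq σR]

/-- substitution `X i ↦ X j`. -/
def substV (i j : σR) : MvPolynomial σR A →+* MvPolynomial σR A :=
  (aeval (Function.update X i (X j) : σR → MvPolynomial σR A)).toRingHom

lemma substV_X (i j v : σR) :
    substV i j (X v : MvPolynomial σR A) = if v = i then X j else X v := by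
  simp only [substV, AlgHom.toRingHom_eq_coe, RingHom.coe_coe, aeval_X]
  by_cases h : v = i <;> simp [h, Function.update]

/-- the auxiliary map into `Polynomial`. -/
def toPolyV (i : σR) : MvPolynomial σR A →+* Polynomial (MvPolynomial σR A) :=
  (aeval (fun v => if v = i then Polynomial.X else Polynomial.C (X v))).toRingHom

lemma eval_toPolyV_self (i : σR) (q : MvPolynomial σR A) :
    Polynomial.eval (X i) (toPolyV i q) = q := by
  have : (Polynomial.evalRingHom (X i : MvPolynomial σR A)).comp (toPolyV i) =
      RingHom.id _ := by
    apply MvPolynomial.ringHom_ext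
    · intro r
      simp [toPolyV]
    · intro v
      by_cases h : v = i <;> simp [toPolyV, h]
  exact RingHom.congr_fun this q

lemma eval_toPolyV_other (i j : σR) (q : MvPolynomial σR A) :
    Polynomial.eval (X j) (toPolyV i q) = substV i j q := by
  have : (Polynomial.evalRingHom (X j : MvPolynomial σR A)).comp (toPolyV i) =
      substV i j := by
    apply MvPolynomial.ringHom_ext
    · intro r
      simp [toPolyV, substV]
    · intro v
      by_cases h : v = i <;> simp [toPolyV, substV_X, h]
  exact RingHom.congr_fun this q

lemma X_sub_X_dvd_iff [Nontrivial A] {i j : σR} (hij : i ≠ j) (q : MvPolynomial σR A) :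
    (X i - X j : MvPolynomial σR A) ∣ q ↔ substV i j q = 0 := by
  constructor
  · rintro ⟨r, rfl⟩
    have h1 : substV i j (X i - X j : MvPolynomial σR A) = 0 := by
      simp [substV_X, hij.symm, if_neg]
    rw [map_mul, h1, zero_mul]
  · intro h
    have hroot : Polynomial.IsRoot (toPolyV i q) (X j) := by
      rw [Polynomial.IsRoot, eval_toPolyV_other]; exact h
    obtain ⟨r, hr⟩ := Polynomial.dvd_iff_isRoot.mpr hroot
    refine ⟨Polynomial.eval (X i) r, ?_⟩
    have := congrArg (Polynomial.eval (X i : MvPolynomial σR A)) hr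
    rw [eval_toPolyV_self] at this
    simpa using this

lemma prime_X_sub_X [Nontrivial A] {i j : σR} (hij : i ≠ j) :
    Prime (X i - X j : MvPolynomial σR A) := by
  refine ⟨?_, ?_, ?_⟩
  · rw [sub_ne_zero]
    exact fun h => hij (MvPolynomial.X_injective h)
  · intro hu
    have := hu.map (substV i j)
    have h0 : substV i j (X i - X j : MvPolynomial σR A) = 0 := by
      simp [substV_X, hij.symm, if_neg]
    rw [h0] at this
    exact not_isUnit_zero this
  · intro a b hab
    rw [X_sub_X_dvd_iff hij] at hab
    rw [X_sub_X_dvd_iff hij, X_sub_X_dvd_iff hij]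
    rw [map_mul] at hab
    exact mul_eq_zero.mp hab

end Subst

/-- product of pairwise non-associated primes dividing `N` divides `N`. -/
lemma prod_primes_dvd_of_dvd {A : Type*} [CommRing A] [IsDomain A] {ι : Type*}
    [DecidableEq ι] (s : Finset ι) (f : ι → A) (N : A)
    (hp : ∀ x ∈ s, Prime (f x))
    (hnd : ∀ x ∈ s, ∀ y ∈ s, x ≠ y → ¬ (f x ∣ f y))
    (hd : ∀ x ∈ s, f x ∣ N) : (∏ x ∈ s, f x) ∣ N := by
  induction s using Finset.induction_on generalizing N with
  | empty => simp
  | insert c s' hx ih =>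
    obtain ⟨M, hM⟩ := hd c (Finset.mem_insert_self c s')
    have hdM : ∀ y ∈ s', f y ∣ M := by
      intro y hy
      have hyc : y ≠ c := fun h => hx (h ▸ hy)
      have hprime := hp y (Finset.mem_insert_of_mem hy)
      have : f y ∣ f c * M := hM ▸ hd y (Finset.mem_insert_of_mem hy)
      rcases hprime.2.2 _ _ this with h | h
      · exact absurd h (hnd y (Finset.mem_insert_of_mem hy) c
          (Finset.mem_insert_self c s') hyc)
      · exact h
    have hdvd : (∏ x ∈ s', f x) ∣ M := ih M
      (fun x hxm => hp x (Finset.mem_insert_of_mem hxm))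
      (fun x hxm y hym => hnd x (Finset.mem_insert_of_mem hxm) y
        (Finset.mem_insert_of_mem hym)) hdM
    rw [Finset.prod_insert hx, hM]
    exact mul_dvd_mul_left (f c) hdvd



variable (n k : ℕ)

def tp (i : Fin k) : MvPolynomial (WVar n k) ℂ := X (Sum.inl i)
def gp (l : Fin k) : MvPolynomial (WVar n k) ℂ := X (Sum.inr (Sum.inl l))
def gbp (s : Fin (n - k)) : MvPolynomial (WVar n k) ℂ := X (Sum.inr (Sum.inr (Sum.inl s)))
def hp : MvPolynomial (WVar n k) ℂ := X (Sum.inr (Sum.inr (Sum.inr ())))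

def apos (i : Fin k) (x : MvPolynomial (WVar n k) ℂ) : MvPolynomial (WVar n k) ℂ :=
  (∏ l ∈ Finset.Iio i, (x - gp n k l - hp n k)) *
  (∏ m ∈ Finset.Ioi i, (x - gp n k m)) *
  ∏ s : Fin (n - k), (x - gbp n k s)

def Bp (σ : Equiv.Perm (Fin k)) (i : Fin k) : MvPolynomial (WVar n k) ℂ :=
  ∏ j ∈ Finset.Ioi i, (tp n k (σ i) - tp n k (σ j) - hp n k)

def Pp (σ : Equiv.Perm (Fin k)) : MvPolynomial (WVar n k) ℂ :=
  ∏ i : Fin k, (apos n k i (tp n k (σ i)) * Bp n k σ i)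

def Dp (σ : Equiv.Perm (Fin k)) : MvPolynomial (WVar n k) ℂ :=
  ∏ i : Fin k, ∏ j ∈ Finset.Ioi i, (tp n k (σ i) - tp n k (σ j))

def Dlt : MvPolynomial (WVar n k) ℂ :=
  ∏ i : Fin k, ∏ j ∈ Finset.Ioi i, (tp n k i - tp n k j)

def Np : MvPolynomial (WVar n k) ℂ :=
  ∑ σ : Equiv.Perm (Fin k),
    ((Equiv.Perm.sign σ : ℤ) : MvPolynomial (WVar n k) ℂ) * Pp n k σ

lemma prod_flip {A : Type*} [CommRing A] (m : ℕ) (w : Fin m → A) :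
    ∏ i : Fin m, ∏ j ∈ Finset.Ioi i, (w i - w j) =
      (∏ i : Fin m, (-1 : A) ^ (Finset.Ioi i).card) *
        Matrix.det (Matrix.vandermonde w) := by
  rw [Matrix.det_vandermonde, ← Finset.prod_mul_distrib]
  refine Finset.prod_congr rfl fun i _ => ?_
  calc ∏ j ∈ Finset.Ioi i, (w i - w j)
      = ∏ j ∈ Finset.Ioi i, (-1 : A) * (w j - w i) := by
        refine Finset.prod_congr rfl fun j _ => by ring
    _ = (-1 : A) ^ (Finset.Ioi i).card * ∏ j ∈ Finset.Ioi i, (w j - w i) := by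
        rw [Finset.prod_mul_distrib, Finset.prod_const]

variable {n k}

lemma Dp_eq_sign (σ : Equiv.Perm (Fin k)) :
    Dp n k σ = ((Equiv.Perm.sign σ : ℤ) : MvPolynomial (WVar n k) ℂ) * Dlt n k := by
  have h1 : Dp n k σ =
      ∏ i : Fin k, ∏ j ∈ Finset.Ioi i, ((tp n k ∘ σ) i - (tp n k ∘ σ) j) := rfl
  have h2 : Matrix.vandermonde (tp n k ∘ σ) =
      (Matrix.vandermonde (tp n k)).submatrix σ id := rfl
  rw [h1, prod_flip, h2, Matrix.det_permute, Dlt, prod_flip]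
  push_cast
  ring


lemma injA : Function.Injective (algebraMap (MvPolynomial (WVar n k) ℂ) (WF n k)) :=
  IsFractionRing.injective _ _

lemma A_ne_zero {q : MvPolynomial (WVar n k) ℂ} (h : q ≠ 0) :
    algebraMap (MvPolynomial (WVar n k) ℂ) (WF n k) q ≠ 0 := by
  intro h0
  exact h (injA (by rw [h0, map_zero]))

lemma tp_sub_ne {i j : Fin k} (h : i ≠ j) : tp n k i - tp n k j ≠ 0 :=
  sub_ne_zero.mpr (fun hh => h (Sum.inl.inj (MvPolynomial.X_injective hh)))

lemma A_tp_sub_ne {i j : Fin k} (h : i ≠ j) :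
    algebraMap (MvPolynomial (WVar n k) ℂ) (WF n k) (tp n k i - tp n k j) ≠ 0 :=
  A_ne_zero (tp_sub_ne h)

lemma filter_lt' (i : Fin k) :
    Finset.univ.filter (fun l : Fin k => l < i) = Finset.Iio i := by ext; simp

lemma filter_gt' (i : Fin k) :
    Finset.univ.filter (fun m : Fin k => i < m) = Finset.Ioi i := by ext; simp

lemma term_mul (σ : Equiv.Perm (Fin k)) :
    (∏ i : Fin k,
      ((∏ l ∈ Finset.univ.filter (fun l : Fin k => l < i),
          (tV n k (σ i) - γV n k l - hV n k)) *
       (∏ m ∈ Finset.univ.filter (fun m : Fin k => i < m),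
          (tV n k (σ i) - γV n k m)) *
       (∏ j ∈ Finset.univ.filter (fun j : Fin k => i < j),
          ((tV n k (σ i) - tV n k (σ j) - hV n k) / (tV n k (σ i) - tV n k (σ j)))) *
       ∏ s : Fin (n - k), (tV n k (σ i) - γbV n k s))) *
      algebraMap (MvPolynomial (WVar n k) ℂ) (WF n k) (Dp n k σ) =
    algebraMap (MvPolynomial (WVar n k) ℂ) (WF n k) (Pp n k σ) := by
  rw [Dp, Pp, map_prod, map_prod, ← Finset.prod_mul_distrib]
  refine Finset.prod_congr rfl fun i _ => ?_
  rw [filter_lt', filter_gt', map_prod, map_mul]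
  have hQ : (∏ j ∈ Finset.Ioi i,
        ((tV n k (σ i) - tV n k (σ j) - hV n k) / (tV n k (σ i) - tV n k (σ j)))) *
      (∏ j ∈ Finset.Ioi i,
        algebraMap (MvPolynomial (WVar n k) ℂ) (WF n k) (tp n k (σ i) - tp n k (σ j))) =
      ∏ j ∈ Finset.Ioi i,
        algebraMap (MvPolynomial (WVar n k) ℂ) (WF n k)
          (tp n k (σ i) - tp n k (σ j) - hp n k) := by
    rw [← Finset.prod_mul_distrib]
    refine Finset.prod_congr rfl fun j hj => ?_
    have hij : σ i ≠ σ j := fun hh =>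
      (Finset.mem_Ioi.mp hj).ne' (σ.injective hh).symm
    have hd := A_tp_sub_ne (n := n) (k := k) hij
    have h1 : tV n k (σ i) - tV n k (σ j) =
        algebraMap (MvPolynomial (WVar n k) ℂ) (WF n k) (tp n k (σ i) - tp n k (σ j)) := by
      simp [tV, tp, map_sub]
    have h2 : tV n k (σ i) - tV n k (σ j) - hV n k =
        algebraMap (MvPolynomial (WVar n k) ℂ) (WF n k)
          (tp n k (σ i) - tp n k (σ j) - hp n k) := by
      simp [tV, tp, hV, hp, map_sub]
    rw [h2, h1, div_mul_cancel₀ _ hd]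
  calc _ = ((∏ l ∈ Finset.Iio i, (tV n k (σ i) - γV n k l - hV n k)) *
        (∏ m ∈ Finset.Ioi i, (tV n k (σ i) - γV n k m)) *
        (∏ s : Fin (n - k), (tV n k (σ i) - γbV n k s))) *
        ((∏ j ∈ Finset.Ioi i,
          ((tV n k (σ i) - tV n k (σ j) - hV n k) / (tV n k (σ i) - tV n k (σ j)))) *
         (∏ j ∈ Finset.Ioi i,
          algebraMap (MvPolynomial (WVar n k) ℂ) (WF n k) (tp n k (σ i) - tp n k (σ j)))) := by
        ring
    _ = _ := by
        rw [hQ]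
        simp only [apos, Bp, map_mul, map_prod, map_sub, tV, γV, γbV, hV, tp, gp, gbp, hp]
        try ring

lemma Wred_mul_Dlt :
    Wred n k * algebraMap (MvPolynomial (WVar n k) ℂ) (WF n k) (Dlt n k) =
      algebraMap (MvPolynomial (WVar n k) ℂ) (WF n k) (Np n k) := by
  rw [Wred, Np, map_sum, Finset.sum_mul]
  refine Finset.sum_congr rfl fun σ _ => ?_
  have h1 := term_mul (n := n) (k := k) σ
  have h2 : algebraMap (MvPolynomial (WVar n k) ℂ) (WF n k) (Dp n k σ) =
      ((Equiv.Perm.sign σ : ℤ) : WF n k) *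
        algebraMap (MvPolynomial (WVar n k) ℂ) (WF n k) (Dlt n k) := by
    rw [Dp_eq_sign, map_mul, map_intCast]
  rw [h2] at h1
  rw [map_mul, map_intCast]
  rcases Int.units_eq_one_or (Equiv.Perm.sign σ) with h | h <;> rw [h] at h1 ⊢
  · simpa using h1
  · push_cast at h1 ⊢
    linear_combination -h1

-- stage 4: antisymmetry in t, divisibility
section Stage4
variable {n k : ℕ}

def emt (τ : Equiv.Perm (Fin k)) : WVar n k ≃ WVar n k :=
  Equiv.sumCongr τ (Equiv.refl _)

lemma rhot_Pp (s σ : Equiv.Perm (Fin k)) :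
    rename (emt (n := n) s) (Pp n k σ) = Pp n k (s * σ) := by
  simp [Pp, apos, Bp, tp, gp, gbp, hp, map_prod, map_mul, map_sub, rename_X,
    emt, Equiv.Perm.mul_apply]

lemma rhot_Np {i j : Fin k} (hij : i ≠ j) :
    rename (emt (n := n) (Equiv.swap i j)) (Np n k) = -(Np n k) := by
  have key : ∀ σ : Equiv.Perm (Fin k),
      ((Equiv.Perm.sign σ : ℤ) : MvPolynomial (WVar n k) ℂ) * Pp n k (Equiv.swap i j * σ) =
      -(((Equiv.Perm.sign (Equiv.swap i j * σ) : ℤ) : MvPolynomial (WVar n k) ℂ) *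
          Pp n k (Equiv.swap i j * σ)) := by
    intro σ
    rw [Equiv.Perm.sign_mul, Equiv.Perm.sign_swap hij]
    push_cast
    ring
  rw [Np, map_sum]
  simp_rw [map_mul, map_intCast, rhot_Pp, key]
  rw [Finset.sum_neg_distrib]
  rw [neg_inj]
  exact Fintype.sum_equiv (Equiv.mulLeft (Equiv.swap i j))
    (fun σ => ((Equiv.Perm.sign (Equiv.swap i j * σ) : ℤ) : MvPolynomial (WVar n k) ℂ) *
      Pp n k (Equiv.swap i j * σ))
    (fun σ => ((Equiv.Perm.sign σ : ℤ) : MvPolynomial (WVar n k) ℂ) * Pp n k σ)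
    (fun σ => rfl)

lemma substV_rename_t {i j : Fin k} (q : MvPolynomial (WVar n k) ℂ) :
    substV (Sum.inl i : WVar n k) (Sum.inl j)
        (rename (emt (n := n) (Equiv.swap i j)) q) =
      substV (Sum.inl i : WVar n k) (Sum.inl j) q := by
  have : (substV (Sum.inl i : WVar n k) (Sum.inl j)).comp
      ((rename (R := ℂ) (⇑(emt (n := n) (Equiv.swap i j)))).toRingHom) =
      substV (Sum.inl i : WVar n k) (Sum.inl j) := by
    apply MvPolynomial.ringHom_ext
    · intro r
      simp [substV, emt]
    · intro v
      rw [RingHom.comp_apply]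
      simp only [AlgHom.toRingHom_eq_coe, RingHom.coe_coe, rename_X]
      rcases v with w | x
      · rw [show (emt (n := n) (Equiv.swap i j)) (Sum.inl w) =
            (Sum.inl (Equiv.swap i j w) : WVar n k) from rfl, substV_X, substV_X]
        simp only [Sum.inl.injEq]
        rcases eq_or_ne w i with rfl | hwi
        · rw [Equiv.swap_apply_left]
          simp
        · rcases eq_or_ne w j with rfl | hwj
          · rw [Equiv.swap_apply_right, if_pos rfl, if_neg hwi]
          · rw [Equiv.swap_apply_of_ne_of_ne hwi hwj, if_neg hwi]
      · rw [show (emt (n := n) (Equiv.swap i j)) (Sum.inr x) =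
            (Sum.inr x : WVar n k) from rfl, substV_X]
  exact RingHom.congr_fun this q

lemma substV_Np {i j : Fin k} (hij : i ≠ j) :
    substV (Sum.inl i : WVar n k) (Sum.inl j) (Np n k) = 0 := by
  have h1 := substV_rename_t (n := n) (i := i) (j := j) (Np n k)
  rw [rhot_Np hij, map_neg] at h1
  have h2 : (2 : MvPolynomial (WVar n k) ℂ) *
      substV (Sum.inl i : WVar n k) (Sum.inl j) (Np n k) = 0 := by
    linear_combination -h1
  rcases mul_eq_zero.mp h2 with h | h
  · exact absurd h two_ne_zero
  · exact h

def Spairs (k : ℕ) : Finset (Fin k × Fin k) :=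
  Finset.univ.filter (fun p => p.1 < p.2)

lemma Dlt_eq_S : Dlt n k = ∏ p ∈ Spairs k, (tp n k p.1 - tp n k p.2) := by
  rw [Spairs, Finset.prod_filter, Fintype.prod_prod_type]
  refine Finset.prod_congr rfl fun i _ => ?_
  rw [← Finset.prod_filter, filter_gt']

lemma Dlt_dvd_Np : Dlt n k ∣ Np n k := by
  rw [Dlt_eq_S]
  refine prod_primes_dvd_of_dvd _ _ _ ?_ ?_ ?_
  · rintro ⟨i, j⟩ hp
    have hij : i < j := by simpa [Spairs] using hp
    simpa [tp] using prime_X_sub_X (A := ℂ) (i := (Sum.inl i : WVar n k)) (j := Sum.inl j)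
      (by simp [hij.ne])
  · rintro ⟨i, j⟩ hp ⟨i', j'⟩ hq hpq hdvd
    have hij : i < j := by simpa [Spairs] using hp
    have hij' : i' < j' := by simpa [Spairs] using hq
    have hX : ∀ c d : Fin k,
        (X (Sum.inl c) : MvPolynomial (WVar n k) ℂ) = X (Sum.inl d) → c = d :=
      fun c d h => Sum.inl.inj (MvPolynomial.X_injective h)
    simp only [tp] at hdvd
    rw [X_sub_X_dvd_iff (by simp [hij.ne]) _] at hdvd
    rw [map_sub, substV_X, substV_X, sub_eq_zero] at hdvd
    split_ifs at hdvd with h1 h2 h2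
    · simp only [Sum.inl.injEq] at h1 h2
      exact hij'.ne (h1.trans h2.symm)
    · simp only [Sum.inl.injEq] at h1
      exact hpq (by simp [h1, hX _ _ hdvd])
    · simp only [Sum.inl.injEq] at h2
      have := hX _ _ hdvd
      subst this; subst h2
      exact absurd hij' (by intro hh; exact lt_irrefl _ (hij.trans hh))
    · exact hij'.ne (hX _ _ hdvd)
  · rintro ⟨i, j⟩ hp
    have hij : i < j := by simpa [Spairs] using hp
    simp only [tp]
    rw [X_sub_X_dvd_iff (by simp [hij.ne]) _]
    exact substV_Np hij.ne

end Stage4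

-- stage 5: γ-symmetry under adjacent transpositions
section Stage5
variable {n k : ℕ}

def emg (τ : Equiv.Perm (Fin k)) : WVar n k ≃ WVar n k :=
  Equiv.sumCongr (Equiv.refl (Fin k)) (Equiv.sumCongr τ (Equiv.refl _))

lemma rhog_tp (τ : Equiv.Perm (Fin k)) (v : Fin k) :
    rename (⇑(emg (n := n) τ)) (tp n k v) = tp n k v := by
  simp [tp, rename_X, emg]

lemma rhog_gp (τ : Equiv.Perm (Fin k)) (l : Fin k) :
    rename (⇑(emg (n := n) τ)) (gp n k l) = gp n k (τ l) := by
  simp [gp, rename_X, emg]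

lemma rhog_gbp (τ : Equiv.Perm (Fin k)) (x : Fin (n - k)) :
    rename (⇑(emg (n := n) τ)) (gbp n k x) = gbp n k x := by
  simp [gbp, rename_X, emg]

lemma rhog_hp (τ : Equiv.Perm (Fin k)) :
    rename (⇑(emg (n := n) τ)) (hp n k) = hp n k := by
  simp [hp, rename_X, emg]

lemma prod_swap_invariant {M : Type*} [CommMonoid M] (a b : Fin k) (S : Finset (Fin k))
    (f : Fin k → M) (h : (a ∈ S ∧ b ∈ S) ∨ (a ∉ S ∧ b ∉ S)) :
    ∏ l ∈ S, f (Equiv.swap a b l) = ∏ l ∈ S, f l := by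
  rcases h with ⟨ha, hb⟩ | ⟨ha, hb⟩
  · refine Equiv.Perm.prod_comp _ _ _ ?_
    intro x hx
    simp only [Set.mem_setOf_eq] at hx
    by_contra hxS
    have hxa : x ≠ a := fun hh => hxS (hh ▸ ha)
    have hxb : x ≠ b := fun hh => hxS (hh ▸ hb)
    exact hx (Equiv.swap_apply_of_ne_of_ne hxa hxb)
  · refine Finset.prod_congr rfl fun l hl => ?_
    rw [Equiv.swap_apply_of_ne_of_ne (fun hh => ha (by rwa [hh] at hl))
      (fun hh => hb (by rwa [hh] at hl))]

section AdjSwap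
variable {a b : Fin k} (hab : (a : ℕ) + 1 = (b : ℕ))

include hab

lemma adj_lt : a < b := by rw [Fin.lt_def]; omega

lemma adj_ne : a ≠ b := Fin.ne_of_lt (adj_lt hab)

lemma adj_cases {i : Fin k} (hia : i ≠ a) (hib : i ≠ b) : i < a ∨ b < i := by
  have h1 : (i : ℕ) ≠ a := fun hh => hia (Fin.ext hh)
  have h2 : (i : ℕ) ≠ b := fun hh => hib (Fin.ext hh)
  rw [Fin.lt_def, Fin.lt_def]
  omega

lemma adj_Ioi_mem {i : Fin k} (hia : i ≠ a) (hib : i ≠ b) :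
    (a ∈ Finset.Ioi i ∧ b ∈ Finset.Ioi i) ∨ (a ∉ Finset.Ioi i ∧ b ∉ Finset.Ioi i) := by
  rcases adj_cases hab hia hib with h | h
  · exact Or.inl ⟨Finset.mem_Ioi.mpr h, Finset.mem_Ioi.mpr (h.trans (adj_lt hab))⟩
  · refine Or.inr ⟨fun hh => ?_, fun hh => ?_⟩
    · exact absurd ((adj_lt hab).trans ((Finset.mem_Ioi.mp hh).trans' h)) (lt_irrefl _)
    · exact absurd (h.trans (Finset.mem_Ioi.mp hh)) (lt_irrefl _)

lemma adj_Iio_mem {i : Fin k} (hia : i ≠ a) (hib : i ≠ b) :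
    (a ∈ Finset.Iio i ∧ b ∈ Finset.Iio i) ∨ (a ∉ Finset.Iio i ∧ b ∉ Finset.Iio i) := by
  rcases adj_cases hab hia hib with h | h
  · refine Or.inr ⟨fun hh => ?_, fun hh => ?_⟩
    · exact absurd (h.trans (Finset.mem_Iio.mp hh)) (lt_irrefl _)
    · exact absurd ((adj_lt hab).trans ((Finset.mem_Iio.mp hh).trans h)) (lt_irrefl _)
  · exact Or.inl ⟨Finset.mem_Iio.mpr ((adj_lt hab).trans h), Finset.mem_Iio.mpr h⟩

/-- positions other than `a, b` contribute identically for `σ` and `σ * swap a b`. -/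
lemma F_eq_of_ne (σ : Equiv.Perm (Fin k)) {i : Fin k} (hia : i ≠ a) (hib : i ≠ b) :
    apos n k i (tp n k ((σ * Equiv.swap a b) i)) * Bp n k (σ * Equiv.swap a b) i =
      apos n k i (tp n k (σ i)) * Bp n k σ i := by
  have hsi : (σ * Equiv.swap a b) i = σ i := by
    rw [Equiv.Perm.mul_apply, Equiv.swap_apply_of_ne_of_ne hia hib]
  rw [hsi]
  congr 1
  simp only [Bp]
  have hj : ∀ j : Fin k, tp n k ((σ * Equiv.swap a b) j) =
      tp n k (σ (Equiv.swap a b j)) := fun j => rfl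
  simp only [hj, Equiv.swap_apply_of_ne_of_ne hia hib]
  exact prod_swap_invariant a b _ (fun j => tp n k (σ i) - tp n k (σ j) - hp n k)
    (adj_Ioi_mem hab hia hib)

/-- positions other than `a, b` are invariant under the γ-swap rename. -/
lemma rhog_F_eq (σ : Equiv.Perm (Fin k)) {i : Fin k} (hia : i ≠ a) (hib : i ≠ b) :
    rename (⇑(emg (n := n) (Equiv.swap a b)))
        (apos n k i (tp n k (σ i)) * Bp n k σ i) =
      apos n k i (tp n k (σ i)) * Bp n k σ i := by
  rw [map_mul]
  congr 1
  · simp only [apos]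
    rw [map_mul, map_mul, map_prod, map_prod, map_prod]
    congr 1
    · congr 1
      · simp only [map_sub, rhog_tp, rhog_gp, rhog_hp]
        exact prod_swap_invariant a b _ (fun l => tp n k (σ i) - gp n k l - hp n k)
          (adj_Iio_mem hab hia hib)
      · simp only [map_sub, rhog_tp, rhog_gp]
        exact prod_swap_invariant a b _ (fun m => tp n k (σ i) - gp n k m)
          (adj_Ioi_mem hab hia hib)
    · simp only [map_sub, rhog_tp, rhog_gbp]
  · simp only [Bp, map_prod, map_sub, rhog_tp, rhog_hp]

lemma adj_Ioi_a : Finset.Ioi a = insert b (Finset.Ioi b) := by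
  ext j
  simp only [Finset.mem_Ioi, Finset.mem_insert, Fin.lt_def, Fin.ext_iff]
  omega

lemma adj_Iio_b : Finset.Iio b = insert a (Finset.Iio a) := by
  ext j
  simp only [Finset.mem_Iio, Finset.mem_insert, Fin.lt_def, Fin.ext_iff]
  omega

lemma rhog_pair (σ : Equiv.Perm (Fin k)) :
    rename (⇑(emg (n := n) (Equiv.swap a b)))
        (Pp n k σ - Pp n k (σ * Equiv.swap a b)) =
      Pp n k σ - Pp n k (σ * Equiv.swap a b) := by
  have hne := adj_ne hab
  have hσa : (σ * Equiv.swap a b) a = σ b := by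
    rw [Equiv.Perm.mul_apply, Equiv.swap_apply_left]
  have hσb : (σ * Equiv.swap a b) b = σ a := by
    rw [Equiv.Perm.mul_apply, Equiv.swap_apply_right]
  have hsj : ∀ j ∈ Finset.Ioi b, (σ * Equiv.swap a b) j = σ j := by
    intro j hj
    have hjb : j ≠ b := (Finset.mem_Ioi.mp hj).ne'
    have hja : j ≠ a := ((adj_lt hab).trans (Finset.mem_Ioi.mp hj)).ne'
    rw [Equiv.Perm.mul_apply, Equiv.swap_apply_of_ne_of_ne hja hjb]
  -- decomposition of the full product
  have hb_notmem : b ∉ (Finset.univ \ {a, b} : Finset (Fin k)) := by simp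
  have ha_notmem : a ∉ insert b (Finset.univ \ {a, b} : Finset (Fin k)) := by
    simp [hne]
  have huniv : (Finset.univ : Finset (Fin k)) =
      insert a (insert b (Finset.univ \ {a, b})) := by
    ext x
    by_cases hxa : x = a <;> by_cases hxb : x = b <;> simp [hxa, hxb]
  have hPp : ∀ τ : Equiv.Perm (Fin k), Pp n k τ =
      (apos n k a (tp n k (τ a)) * Bp n k τ a) *
        ((apos n k b (tp n k (τ b)) * Bp n k τ b) *
          ∏ i ∈ Finset.univ \ {a, b}, (apos n k i (tp n k (τ i)) * Bp n k τ i)) := by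
    intro τ
    conv_lhs => rw [Pp, huniv]
    rw [Finset.prod_insert ha_notmem, Finset.prod_insert hb_notmem]
  have hrest : (∏ i ∈ Finset.univ \ {a, b},
        (apos n k i (tp n k ((σ * Equiv.swap a b) i)) * Bp n k (σ * Equiv.swap a b) i)) =
      ∏ i ∈ Finset.univ \ {a, b}, (apos n k i (tp n k (σ i)) * Bp n k σ i) := by
    refine Finset.prod_congr rfl fun i hi => ?_
    simp only [Finset.mem_sdiff, Finset.mem_insert, Finset.mem_singleton] at hi
    exact F_eq_of_ne hab σ (by tauto) (by tauto)
  have hrho_rest : rename (⇑(emg (n := n) (Equiv.swap a b)))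
      (∏ i ∈ Finset.univ \ {a, b}, (apos n k i (tp n k (σ i)) * Bp n k σ i)) =
      ∏ i ∈ Finset.univ \ {a, b}, (apos n k i (tp n k (σ i)) * Bp n k σ i) := by
    rw [map_prod]
    refine Finset.prod_congr rfl fun i hi => ?_
    simp only [Finset.mem_sdiff, Finset.mem_insert, Finset.mem_singleton] at hi
    exact rhog_F_eq hab σ (by tauto) (by tauto)
  -- split products at a and b
  have hq_a : ∀ x : MvPolynomial (WVar n k) ℂ, apos n k a x =
      (∏ l ∈ Finset.Iio a, (x - gp n k l - hp n k)) *
        ((x - gp n k b) * ∏ m ∈ Finset.Ioi b, (x - gp n k m)) *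
        ∏ s' : Fin (n - k), (x - gbp n k s') := by
    intro x
    simp only [apos, adj_Ioi_a hab]
    rw [Finset.prod_insert (by simp)]
  have hq_b : ∀ x : MvPolynomial (WVar n k) ℂ, apos n k b x =
      ((x - gp n k a - hp n k) * ∏ l ∈ Finset.Iio a, (x - gp n k l - hp n k)) *
        (∏ m ∈ Finset.Ioi b, (x - gp n k m)) *
        ∏ s' : Fin (n - k), (x - gbp n k s') := by
    intro x
    simp only [apos, adj_Iio_b hab]
    rw [Finset.prod_insert (by simp)]
  have hBa : Bp n k σ a = (tp n k (σ a) - tp n k (σ b) - hp n k) *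
      ∏ j ∈ Finset.Ioi b, (tp n k (σ a) - tp n k (σ j) - hp n k) := by
    simp only [Bp, adj_Ioi_a hab]
    rw [Finset.prod_insert (by simp)]
  have hBb : Bp n k σ b =
      ∏ j ∈ Finset.Ioi b, (tp n k (σ b) - tp n k (σ j) - hp n k) := rfl
  have hB'a : Bp n k (σ * Equiv.swap a b) a =
      (tp n k (σ b) - tp n k (σ a) - hp n k) *
        ∏ j ∈ Finset.Ioi b, (tp n k (σ b) - tp n k (σ j) - hp n k) := by
    simp only [Bp, adj_Ioi_a hab]
    rw [Finset.prod_insert (by simp), hσa, hσb]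
    congr 1
    exact Finset.prod_congr rfl fun j hj => by rw [hsj j hj]
  have hB'b : Bp n k (σ * Equiv.swap a b) b =
      ∏ j ∈ Finset.Ioi b, (tp n k (σ a) - tp n k (σ j) - hp n k) := by
    simp only [Bp]
    rw [hσb]
    exact Finset.prod_congr rfl fun j hj => by rw [hsj j hj]
  -- the 2×2 core identity
  have hcore : (apos n k a (tp n k (σ a)) * Bp n k σ a) *
        (apos n k b (tp n k (σ b)) * Bp n k σ b) -
      (apos n k a (tp n k ((σ * Equiv.swap a b) a)) * Bp n k (σ * Equiv.swap a b) a) *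
        (apos n k b (tp n k ((σ * Equiv.swap a b) b)) * Bp n k (σ * Equiv.swap a b) b) =
      ((∏ l ∈ Finset.Iio a, (tp n k (σ a) - gp n k l - hp n k)) *
       (∏ m ∈ Finset.Ioi b, (tp n k (σ a) - gp n k m)) *
       (∏ s' : Fin (n - k), (tp n k (σ a) - gbp n k s')) *
       (∏ j ∈ Finset.Ioi b, (tp n k (σ a) - tp n k (σ j) - hp n k)) *
       ((∏ l ∈ Finset.Iio a, (tp n k (σ b) - gp n k l - hp n k)) *
        (∏ m ∈ Finset.Ioi b, (tp n k (σ b) - gp n k m)) *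
        (∏ s' : Fin (n - k), (tp n k (σ b) - gbp n k s')) *
        (∏ j ∈ Finset.Ioi b, (tp n k (σ b) - tp n k (σ j) - hp n k)))) *
        ((tp n k (σ a) - gp n k b) *
          ((tp n k (σ b) - gp n k a - hp n k) *
            (tp n k (σ a) - tp n k (σ b) - hp n k))) -
      ((∏ l ∈ Finset.Iio a, (tp n k (σ a) - gp n k l - hp n k)) *
       (∏ m ∈ Finset.Ioi b, (tp n k (σ a) - gp n k m)) *
       (∏ s' : Fin (n - k), (tp n k (σ a) - gbp n k s')) *
       (∏ j ∈ Finset.Ioi b, (tp n k (σ a) - tp n k (σ j) - hp n k)) *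
       ((∏ l ∈ Finset.Iio a, (tp n k (σ b) - gp n k l - hp n k)) *
        (∏ m ∈ Finset.Ioi b, (tp n k (σ b) - gp n k m)) *
        (∏ s' : Fin (n - k), (tp n k (σ b) - gbp n k s')) *
        (∏ j ∈ Finset.Ioi b, (tp n k (σ b) - tp n k (σ j) - hp n k)))) *
        ((tp n k (σ b) - gp n k b) *
          ((tp n k (σ a) - gp n k a - hp n k) *
            (tp n k (σ b) - tp n k (σ a) - hp n k))) := by
    rw [hσa, hσb, hq_a, hq_a, hq_b, hq_b, hBa, hBb, hB'a, hB'b]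
    ring
  -- rename computations on the q-blocks
  have rr1 : ∀ c : Fin k, rename (⇑(emg (n := n) (Equiv.swap a b)))
      (∏ l ∈ Finset.Iio a, (tp n k c - gp n k l - hp n k)) =
      ∏ l ∈ Finset.Iio a, (tp n k c - gp n k l - hp n k) := by
    intro c
    rw [map_prod]
    refine Finset.prod_congr rfl fun l hl => ?_
    have hl' := Finset.mem_Iio.mp hl
    rw [map_sub, map_sub, rhog_tp, rhog_gp, rhog_hp,
      Equiv.swap_apply_of_ne_of_ne hl'.ne (hl'.trans (adj_lt hab)).ne]
  have rr2 : ∀ c : Fin k, rename (⇑(emg (n := n) (Equiv.swap a b)))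
      (∏ m ∈ Finset.Ioi b, (tp n k c - gp n k m)) =
      ∏ m ∈ Finset.Ioi b, (tp n k c - gp n k m) := by
    intro c
    rw [map_prod]
    refine Finset.prod_congr rfl fun m hm => ?_
    have hm' := Finset.mem_Ioi.mp hm
    rw [map_sub, rhog_tp, rhog_gp,
      Equiv.swap_apply_of_ne_of_ne ((adj_lt hab).trans hm').ne' hm'.ne']
  have rr3 : ∀ c : Fin k, rename (⇑(emg (n := n) (Equiv.swap a b)))
      (∏ s' : Fin (n - k), (tp n k c - gbp n k s')) =
      ∏ s' : Fin (n - k), (tp n k c - gbp n k s') := by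
    intro c
    rw [map_prod]
    exact Finset.prod_congr rfl fun s' _ => by rw [map_sub, rhog_tp, rhog_gbp]
  have rr4 : ∀ c : Fin k, rename (⇑(emg (n := n) (Equiv.swap a b)))
      (∏ j ∈ Finset.Ioi b, (tp n k c - tp n k (σ j) - hp n k)) =
      ∏ j ∈ Finset.Ioi b, (tp n k c - tp n k (σ j) - hp n k) := by
    intro c
    rw [map_prod]
    exact Finset.prod_congr rfl fun j _ => by
      rw [map_sub, map_sub, rhog_tp, rhog_tp, rhog_hp]
  -- rename of the core bracket
  have hrho_core : rename (⇑(emg (n := n) (Equiv.swap a b)))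
      ((apos n k a (tp n k (σ a)) * Bp n k σ a) *
        (apos n k b (tp n k (σ b)) * Bp n k σ b) -
      (apos n k a (tp n k ((σ * Equiv.swap a b) a)) * Bp n k (σ * Equiv.swap a b) a) *
        (apos n k b (tp n k ((σ * Equiv.swap a b) b)) * Bp n k (σ * Equiv.swap a b) b)) =
      (apos n k a (tp n k (σ a)) * Bp n k σ a) *
        (apos n k b (tp n k (σ b)) * Bp n k σ b) -
      (apos n k a (tp n k ((σ * Equiv.swap a b) a)) * Bp n k (σ * Equiv.swap a b) a) *
        (apos n k b (tp n k ((σ * Equiv.swap a b) b)) * Bp n k (σ * Equiv.swap a b) b) := by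
    rw [hcore]
    simp only [map_mul, map_sub, rr1, rr2, rr3, rr4, rhog_tp, rhog_gp, rhog_gbp,
      rhog_hp, Equiv.swap_apply_left, Equiv.swap_apply_right]
    ring
  -- assemble
  rw [hPp σ, hPp (σ * Equiv.swap a b), hrest]
  have hfactor : (apos n k a (tp n k (σ a)) * Bp n k σ a) *
      ((apos n k b (tp n k (σ b)) * Bp n k σ b) *
        ∏ i ∈ Finset.univ \ {a, b}, (apos n k i (tp n k (σ i)) * Bp n k σ i)) -
      (apos n k a (tp n k ((σ * Equiv.swap a b) a)) * Bp n k (σ * Equiv.swap a b) a) *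
      ((apos n k b (tp n k ((σ * Equiv.swap a b) b)) * Bp n k (σ * Equiv.swap a b) b) *
        ∏ i ∈ Finset.univ \ {a, b}, (apos n k i (tp n k (σ i)) * Bp n k σ i)) =
      ((apos n k a (tp n k (σ a)) * Bp n k σ a) *
        (apos n k b (tp n k (σ b)) * Bp n k σ b) -
      (apos n k a (tp n k ((σ * Equiv.swap a b) a)) * Bp n k (σ * Equiv.swap a b) a) *
        (apos n k b (tp n k ((σ * Equiv.swap a b) b)) * Bp n k (σ * Equiv.swap a b) b)) *
        ∏ i ∈ Finset.univ \ {a, b}, (apos n k i (tp n k (σ i)) * Bp n k σ i) := by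
    ring
  rw [hfactor, map_mul, hrho_core, hrho_rest]

end AdjSwap

end Stage5

section Stage6
variable {n k : ℕ}

lemma rhog_Np {a b : Fin k} (hab : (a : ℕ) + 1 = (b : ℕ)) :
    rename (⇑(emg (n := n) (Equiv.swap a b))) (Np n k) = Np n k := by
  have hne := adj_ne hab
  have h1 : ∑ σ : Equiv.Perm (Fin k),
      ((Equiv.Perm.sign σ : ℤ) : MvPolynomial (WVar n k) ℂ) *
        Pp n k (σ * Equiv.swap a b) = -(Np n k) := by
    rw [Np, ← Finset.sum_neg_distrib]
    refine Fintype.sum_equiv (Equiv.mulRight (Equiv.swap a b))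
      (fun σ => ((Equiv.Perm.sign σ : ℤ) : MvPolynomial (WVar n k) ℂ) *
        Pp n k (σ * Equiv.swap a b))
      (fun σ => -(((Equiv.Perm.sign σ : ℤ) : MvPolynomial (WVar n k) ℂ) * Pp n k σ))
      fun σ => ?_
    have hs : Equiv.Perm.sign (σ * Equiv.swap a b) = -(Equiv.Perm.sign σ) := by
      rw [Equiv.Perm.sign_mul, Equiv.Perm.sign_swap hne]; exact mul_neg_one _
    simp only [Equiv.coe_mulRight, hs]
    push_cast
    ring
  have sum2 : ∑ σ : Equiv.Perm (Fin k),
      ((Equiv.Perm.sign σ : ℤ) : MvPolynomial (WVar n k) ℂ) *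
        (Pp n k σ - Pp n k (σ * Equiv.swap a b)) = 2 * Np n k := by
    simp_rw [mul_sub]
    rw [Finset.sum_sub_distrib, h1, Np]
    ring
  have h3 : rename (⇑(emg (n := n) (Equiv.swap a b))) (2 * Np n k) = 2 * Np n k := by
    conv_lhs => rw [← sum2]
    rw [map_sum]
    conv_rhs => rw [← sum2]
    refine Finset.sum_congr rfl fun σ _ => ?_
    rw [map_mul, map_intCast, rhog_pair hab σ]
  rw [map_mul, map_ofNat] at h3
  exact mul_left_cancel₀ two_ne_zero h3

lemma rhog_all (τ : Equiv.Perm (Fin k)) (Q : MvPolynomial (WVar n k) ℂ)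
    (hQ : ∀ a b : Fin k, (a : ℕ) + 1 = (b : ℕ) →
      rename (⇑(emg (n := n) (Equiv.swap a b))) Q = Q) :
    rename (⇑(emg (n := n) τ)) Q = Q := by
  cases k with
  | zero =>
    have hid : ⇑(emg (n := n) τ) = id := by
      funext v
      rcases v with w | (l | x)
      · exact w.elim0
      · exact l.elim0
      · rfl
    rw [hid, rename_id_apply]
  | succ m =>
    have hmem : τ ∈ Submonoid.closure
        (Set.range fun i : Fin m => Equiv.swap i.castSucc i.succ) := by
      rw [Equiv.Perm.mclosure_swap_castSucc_succ]
      trivial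
    induction hmem using Submonoid.closure_induction with
    | mem x hx =>
      obtain ⟨i, rfl⟩ := hx
      exact hQ i.castSucc i.succ (by simp)
    | one =>
      have hid : ⇑(emg (n := n) (1 : Equiv.Perm (Fin (m + 1)))) = id := by
        funext v
        rcases v with w | (l | x) <;> rfl
      rw [hid, rename_id_apply]
    | mul x y hx hy px py =>
      have hcomp : ⇑(emg (n := n) (x * y)) = ⇑(emg (n := n) x) ∘ ⇑(emg (n := n) y) := by
        funext v
        rcases v with w | (l | x') <;> rfl
      rw [hcomp, ← rename_rename, py, px]

lemma Dlt_ne_zero : Dlt n k ≠ 0 := by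
  rw [Dlt]
  refine Finset.prod_ne_zero_iff.mpr fun i _ => ?_
  refine Finset.prod_ne_zero_iff.mpr fun j hj => ?_
  exact tp_sub_ne (Finset.mem_Ioi.mp hj).ne


/-- The reduced weight function is a polynomial in all the variables
(the denominators `t_i − t_j` cancel after symmetrization), and it is
symmetric in `γ₁,…,γ_k`. -/
theorem reduced_weight_function_polynomial_and_symmetric (n k : ℕ) (hk : k ≤ n) :
    ∃ P : MvPolynomial (WVar n k) ℂ,
      algebraMap (MvPolynomial (WVar n k) ℂ) (WF n k) P = Wred n k ∧
      ∀ τ : Equiv.Perm (Fin k),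
        rename (Equiv.sumCongr (Equiv.refl (Fin k))
          (Equiv.sumCongr τ (Equiv.refl (Fin (n - k) ⊕ Unit)))) P = P := by
  obtain ⟨Q, hQ⟩ := Dlt_dvd_Np (n := n) (k := k)
  have hD0 : Dlt n k ≠ 0 := Dlt_ne_zero
  have hDne : algebraMap (MvPolynomial (WVar n k) ℂ) (WF n k) (Dlt n k) ≠ 0 :=
    A_ne_zero hD0
  refine ⟨Q, ?_, ?_⟩
  · refine mul_right_cancel₀ hDne ?_
    rw [Wred_mul_Dlt, hQ, map_mul]
    ring
  · intro τ
    show rename (⇑(emg (n := n) τ)) Q = Q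
    apply rhog_all τ Q
    intro a b hab
    have hrD : rename (⇑(emg (n := n) (Equiv.swap a b))) (Dlt n k) = Dlt n k := by
      simp only [Dlt, map_prod, map_sub, rhog_tp]
    have hN := rhog_Np (n := n) hab
    rw [hQ, map_mul, hrD] at hN
    exact mul_left_cancel₀ hD0 hN


end Stage6

end
end

section
/- Define U(T;Z;H) = ∏_{i=1}^k [ ∏_{a=1}^{i-1}(1 − H·Z_a/T_i) · ∏_{b=i+1}^k(1 − Z_b/T_i) · ∏_{j=i+1}^k (1 − H·T_j/T_i)/(1 − T_j/T_i) ] and the reduced trigonometric weight function 𝒲(T;Z;H) = Sym_{T_1,...,T_k} U(T;Z;H). Then 𝒲(T;Z;H) is a polynomial in T_1^{-1},...,T_k^{-1}, Z_1,...,Z_n, H (i.e., the denominators ∏(1 − T_j/T_i) cancel after symmetrization). -/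
set_option synthInstance.maxHeartbeats 1000000
set_option maxHeartbeats 1600000


noncomputable section

open MvPolynomial

/-- Variables: `T₁,…,T_k`, `Z₁,…,Z_n`, and `H`. -/
abbrev TVar (n k : ℕ) : Type := Fin k ⊕ (Fin n ⊕ Unit)

/-- The rational-function field in the variables `T, Z, H`. -/
abbrev TF (n k : ℕ) : Type := FractionRing (MvPolynomial (TVar n k) ℂ)

def TV (n k : ℕ) (i : Fin k) : TF n k :=
  algebraMap (MvPolynomial (TVar n k) ℂ) (TF n k) (X (Sum.inl i))

def ZV (n k : ℕ) (a : Fin n) : TF n k :=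
  algebraMap (MvPolynomial (TVar n k) ℂ) (TF n k) (X (Sum.inr (Sum.inl a)))

def HV (n k : ℕ) : TF n k :=
  algebraMap (MvPolynomial (TVar n k) ℂ) (TF n k) (X (Sum.inr (Sum.inr ())))

/-- The function `U(T;Z;H)` of formula (3.1), as a function of the `k`-tuple
`T` of elements of a field, with `Z`, `H` fixed. -/
def Ufun {F : Type*} [Field F] (n k : ℕ) (T : Fin k → F) (Z : Fin n → F)
    (H : F) : F :=
  ∏ i : Fin k,
    ((∏ a ∈ Finset.univ.filter (fun a : Fin n => a.1 < i.1),
        (1 - H * Z a / T i)) *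
     (∏ b ∈ Finset.univ.filter (fun b : Fin n => i.1 < b.1 ∧ b.1 < k),
        (1 - Z b / T i)) *
     (∏ j ∈ Finset.univ.filter (fun j : Fin k => i < j),
        ((1 - H * T j / T i) / (1 - T j / T i))))

/-- The reduced trigonometric weight function `𝒲(T;Z;H) = Sym_T U(T;Z;H)`. -/
def Wtrig {F : Type*} [Field F] (n k : ℕ) (T : Fin k → F) (Z : Fin n → F)
    (H : F) : F :=
  ∑ σ : Equiv.Perm (Fin k), Ufun n k (T ∘ σ) Z H

----------------------------------------------------------------------
-- Auxiliary development
----------------------------------------------------------------------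

namespace TrigAux

abbrev Rng (n k : ℕ) := MvPolynomial (TVar n k) ℂ

variable (n k : ℕ)

def Hvar : TVar n k := Sum.inr (Sum.inr ())
def Zvar (a : Fin n) : TVar n k := Sum.inr (Sum.inl a)

/-- The evaluation homomorphism sending `X (inl i) ↦ Tᵢ⁻¹`, `X (Zvar a) ↦ Z a`,
`X Hvar ↦ H`. -/
def φ : Rng n k →+* TF n k :=
  eval₂Hom ((algebraMap (Rng n k) (TF n k)).comp C)
    (Sum.elim (fun i => (TV n k i)⁻¹) (Sum.elim (ZV n k) (fun _ => HV n k)))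

@[simp] lemma φ_T (i : Fin k) : φ n k (X (Sum.inl i)) = (TV n k i)⁻¹ := by
  simp [φ]

@[simp] lemma φ_Z (a : Fin n) : φ n k (X (Zvar n k a)) = ZV n k a := by
  simp [φ, Zvar]

@[simp] lemma φ_H : φ n k (X (Hvar n k)) = HV n k := by
  simp [φ, Hvar]

lemma TV_ne_zero (i : Fin k) : TV n k i ≠ 0 := by
  have := IsFractionRing.injective (Rng n k) (TF n k)
  simpa [TV, map_eq_zero_iff _ this] using (MvPolynomial.X_ne_zero (R := ℂ) (Sum.inl i))

lemma TV_injective : Function.Injective (TV n k) := by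
  intro i j h
  have hinj := IsFractionRing.injective (Rng n k) (TF n k)
  have := hinj h
  have := MvPolynomial.X_injective (R := ℂ) this
  exact Sum.inl_injective this

/-- numerator polynomial of a single symmetrized term -/
def Npoly (σ : Equiv.Perm (Fin k)) : Rng n k :=
  ∏ i : Fin k,
    ((∏ a ∈ Finset.univ.filter (fun a : Fin n => a.1 < i.1),
        (1 - X (Hvar n k) * X (Zvar n k a) * X (Sum.inl (σ i)))) *
     (∏ b ∈ Finset.univ.filter (fun b : Fin n => i.1 < b.1 ∧ b.1 < k),
        (1 - X (Zvar n k b) * X (Sum.inl (σ i)))) *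
     (∏ j ∈ Finset.univ.filter (fun j : Fin k => i < j),
        (X (Sum.inl (σ j)) - X (Hvar n k) * X (Sum.inl (σ i)))))

/-- permuted Vandermonde -/
def Vsig (σ : Equiv.Perm (Fin k)) : Rng n k :=
  ∏ i : Fin k, ∏ j ∈ Finset.Ioi i, (X (Sum.inl (σ j)) - X (Sum.inl (σ i)))

def Vpoly : Rng n k :=
  ∏ i : Fin k, ∏ j ∈ Finset.Ioi i, (X (Sum.inl j) - X (Sum.inl i))

def Ntot : Rng n k :=
  ∑ σ : Equiv.Perm (Fin k), ((Equiv.Perm.sign σ : ℤ) : Rng n k) * Npoly n k σ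

lemma Vsig_eq (σ : Equiv.Perm (Fin k)) :
    Vsig n k σ = ((Equiv.Perm.sign σ : ℤ) : Rng n k) * Vpoly n k := by
  have h1 : Vsig n k σ
      = Matrix.det (Matrix.vandermonde (fun i => (X (Sum.inl (σ i)) : Rng n k))) := by
    rw [Matrix.det_vandermonde]; rfl
  have h2 : Matrix.vandermonde (fun i => (X (Sum.inl (σ i)) : Rng n k))
      = (Matrix.vandermonde (fun i => (X (Sum.inl i) : Rng n k))).submatrix σ id := by
    ext i j; simp [Matrix.vandermonde, Matrix.submatrix]
  rw [h1, h2, Matrix.det_permute, Matrix.det_vandermonde]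
  rfl

lemma Ukey (σ : Equiv.Perm (Fin k)) :
    Ufun n k (TV n k ∘ σ) (ZV n k) (HV n k) * φ n k (Vsig n k σ) = φ n k (Npoly n k σ) := by
  unfold Ufun Npoly Vsig
  rw [map_prod, map_prod, ← Finset.prod_mul_distrib]
  refine Finset.prod_congr rfl fun i _ => ?_
  simp only [map_sub, map_mul, map_one, map_prod, φ_T, φ_Z, φ_H, Function.comp_apply,
    div_eq_mul_inv]
  have hIoi : Finset.univ.filter (fun j : Fin k => i < j) = Finset.Ioi i := by ext j; simp
  have hC : (∏ j ∈ Finset.univ.filter (fun j : Fin k => i < j),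
        ((1 - HV n k * TV n k (σ j) * (TV n k (σ i))⁻¹) *
          (1 - TV n k (σ j) * (TV n k (σ i))⁻¹)⁻¹)) *
      (∏ j ∈ Finset.Ioi i, ((TV n k (σ j))⁻¹ - (TV n k (σ i))⁻¹)) =
      ∏ j ∈ Finset.Ioi i, ((TV n k (σ j))⁻¹ - HV n k * (TV n k (σ i))⁻¹) := by
    rw [hIoi, ← Finset.prod_mul_distrib]
    refine Finset.prod_congr rfl fun j hj => ?_
    have hij : i < j := Finset.mem_Ioi.mp hj
    have hne : σ j ≠ σ i := fun h => (ne_of_gt hij) (σ.injective h)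
    have h1 := TV_ne_zero n k (σ i)
    have h2 := TV_ne_zero n k (σ j)
    have h3 : TV n k (σ j) ≠ TV n k (σ i) := fun h => hne (TV_injective n k h)
    have h4 : (1 : TF n k) - TV n k (σ j) * (TV n k (σ i))⁻¹ ≠ 0 := by
      rw [sub_ne_zero, ← div_eq_mul_inv]
      intro h
      exact h3 ((div_eq_one_iff_eq h1).mp h.symm)
    rw [mul_right_comm, ← div_eq_mul_inv, div_eq_iff h4]
    field_simp
  rw [mul_assoc, hC, hIoi]

/-- substitution `X (inl i) ↦ X (inl j)`, all other variables fixed. -/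
def ψ (i j : Fin k) : Rng n k →ₐ[ℂ] Rng n k :=
  aeval (Function.update X (Sum.inl i : TVar n k) (X (Sum.inl j)))

@[simp] lemma ψ_X_self (i j : Fin k) : ψ n k i j (X (Sum.inl i)) = X (Sum.inl j) := by
  simp [ψ]

lemma ψ_X_ne (i j : Fin k) (v : TVar n k) (hv : v ≠ Sum.inl i) :
    ψ n k i j (X v) = X v := by
  simp [ψ, Function.update_of_ne hv]

lemma ψ_diag (i j : Fin k) (hij : i ≠ j) :
    ψ n k i j (X (Sum.inl j) - X (Sum.inl i)) = 0 := by
  rw [map_sub, ψ_X_self, ψ_X_ne n k i j _ (fun h => hij (Sum.inl_injective h).symm), sub_self]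

lemma dvd_of_ψ_eq_zero (i j : Fin k) (f : Rng n k) (hf : ψ n k i j f = 0) :
    (X (Sum.inl j) - X (Sum.inl i)) ∣ f := by
  set I := Ideal.span {(X (Sum.inl j) - X (Sum.inl i) : Rng n k)} with hI
  have hcomp : (Ideal.Quotient.mkₐ ℂ I).comp (ψ n k i j) = Ideal.Quotient.mkₐ ℂ I := by
    apply MvPolynomial.algHom_ext
    intro v
    by_cases hv : v = Sum.inl i
    · subst hv
      simp only [AlgHom.comp_apply, ψ_X_self, Ideal.Quotient.mkₐ_eq_mk]
      rw [Ideal.Quotient.eq]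
      exact Ideal.subset_span rfl
    · simp only [AlgHom.comp_apply, ψ_X_ne n k i j v hv]
  have hq : Ideal.Quotient.mk I f = 0 := by
    have := AlgHom.congr_fun hcomp f
    simp only [AlgHom.comp_apply, Ideal.Quotient.mkₐ_eq_mk] at this
    rw [← this, hf, map_zero]
  rw [← Ideal.mem_span_singleton, ← hI]
  exact Ideal.Quotient.eq_zero_iff_mem.mp hq

lemma prime_X_sub (i j : Fin k) (hij : i ≠ j) :
    Prime (X (Sum.inl j) - X (Sum.inl i) : Rng n k) := by
  refine ⟨?_, ?_, ?_⟩
  · rw [sub_ne_zero]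
    intro h
    exact hij (Sum.inl_injective (MvPolynomial.X_injective h)).symm
  · intro hu
    have := hu.map (ψ n k i j)
    rw [ψ_diag n k i j hij] at this
    exact not_isUnit_zero this
  · rintro a b ⟨c, hc⟩
    have h0 : ψ n k i j a * ψ n k i j b = 0 := by
      rw [← map_mul, hc, map_mul, ψ_diag n k i j hij, zero_mul]
    rcases mul_eq_zero.mp h0 with h | h
    · exact Or.inl (dvd_of_ψ_eq_zero n k i j a h)
    · exact Or.inr (dvd_of_ψ_eq_zero n k i j b h)

lemma not_dvd_pairs (i j i' j' : Fin k) (hij : i < j) (hij' : i' < j')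
    (hne : (i, j) ≠ (i', j')) :
    ¬ ((X (Sum.inl j) - X (Sum.inl i) : Rng n k) ∣ (X (Sum.inl j') - X (Sum.inl i'))) := by
  rintro ⟨c, hc⟩
  have h0 : ψ n k i j (X (Sum.inl j') - X (Sum.inl i')) = 0 := by
    rw [hc, map_mul, ψ_diag n k i j (ne_of_lt hij), zero_mul]
  set a : Fin k := if j' = i then j else j' with ha
  set b : Fin k := if i' = i then j else i' with hb
  have himg : ψ n k i j (X (Sum.inl j') - X (Sum.inl i')) =
      X (Sum.inl a) - X (Sum.inl b) := by
    rw [map_sub]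
    congr 1
    · by_cases h1 : j' = i
      · subst h1; rw [ha, if_pos rfl, ψ_X_self]
      · rw [ha, if_neg h1, ψ_X_ne n k i j _ (fun h => h1 (Sum.inl_injective h))]
    · by_cases h1 : i' = i
      · subst h1; rw [hb, if_pos rfl, ψ_X_self]
      · rw [hb, if_neg h1, ψ_X_ne n k i j _ (fun h => h1 (Sum.inl_injective h))]
  have hab : a ≠ b := by
    rw [ha, hb]
    by_cases h1 : j' = i <;> by_cases h2 : i' = i
    · exact absurd (h2.trans h1.symm) (ne_of_lt hij')
    · simp only [if_pos h1, if_neg h2]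
      have hlt : i' < j := (h1 ▸ hij').trans hij
      exact (ne_of_lt hlt).symm
    · simp only [if_neg h1, if_pos h2]
      exact fun h => hne (by rw [Prod.mk.injEq]; exact ⟨h2.symm, h.symm⟩)
    · simp only [if_neg h1, if_neg h2]
      exact (ne_of_lt hij').symm
  rw [himg] at h0
  have : (X (Sum.inl a) : Rng n k) = X (Sum.inl b) := by
    rwa [sub_eq_zero] at h0
  exact hab (Sum.inl_injective (MvPolynomial.X_injective this))

lemma prod_dvd {ι : Type*} [DecidableEq ι] (s : Finset ι) (g : ι → Rng n k) :
    (∀ i ∈ s, Prime (g i)) → (∀ i ∈ s, ∀ j ∈ s, i ≠ j → ¬ g i ∣ g j) →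
    ∀ N : Rng n k, (∀ i ∈ s, g i ∣ N) → (∏ i ∈ s, g i) ∣ N := by
  induction s using Finset.induction_on with
  | empty => intro _ _ N _; simp
  | @insert a s ha ih =>
    intro hp hnd N hd
    obtain ⟨M, rfl⟩ := hd a (Finset.mem_insert_self a s)
    rw [Finset.prod_insert ha]
    refine mul_dvd_mul_left _ (ih (fun i hi => hp i (Finset.mem_insert_of_mem hi))
      (fun i hi j hj hne => hnd i (Finset.mem_insert_of_mem hi) j
        (Finset.mem_insert_of_mem hj) hne) M ?_)
    intro i hi
    have hia : i ≠ a := fun h => ha (h ▸ hi)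
    exact ((hp i (Finset.mem_insert_of_mem hi)).dvd_or_dvd
      (hd i (Finset.mem_insert_of_mem hi))).resolve_left
      (hnd i (Finset.mem_insert_of_mem hi) a (Finset.mem_insert_self a s) hia)

def Pairs : Finset (Fin k × Fin k) := Finset.univ.filter (fun p => p.1 < p.2)

lemma Vpoly_eq :
    Vpoly n k = ∏ p ∈ Pairs k, (X (Sum.inl p.2) - X (Sum.inl p.1) : Rng n k) := by
  rw [Pairs, Finset.prod_filter, Fintype.prod_prod_type]
  unfold Vpoly
  refine Finset.prod_congr rfl fun i _ => ?_
  rw [← Finset.prod_filter]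
  refine Finset.prod_congr ?_ fun _ _ => rfl
  ext j; simp

lemma rename_Npoly (i j : Fin k) (σ : Equiv.Perm (Fin k)) :
    rename (⇑(Equiv.swap (Sum.inl i : TVar n k) (Sum.inl j))) (Npoly n k σ)
      = Npoly n k (Equiv.swap i j * σ) := by
  have hXT : ∀ m : Fin k,
      (Equiv.swap (Sum.inl i : TVar n k) (Sum.inl j)) (Sum.inl m)
        = Sum.inl (Equiv.swap i j m) := fun m =>
    Function.Injective.swap_apply Sum.inl_injective i j m
  have hXZ : ∀ a : Fin n,
      (Equiv.swap (Sum.inl i : TVar n k) (Sum.inl j)) (Zvar n k a) = Zvar n k a := fun a =>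
    Equiv.swap_apply_of_ne_of_ne (by simp [Zvar]) (by simp [Zvar])
  have hXH : (Equiv.swap (Sum.inl i : TVar n k) (Sum.inl j)) (Hvar n k) = Hvar n k :=
    Equiv.swap_apply_of_ne_of_ne (by simp [Hvar]) (by simp [Hvar])
  simp only [Npoly, map_prod, map_sub, map_mul, map_one, rename_X, hXT, hXZ, hXH,
    Equiv.Perm.mul_apply]

lemma ψ_comp_rename (i j : Fin k) (hij : i ≠ j) (f : Rng n k) :
    ψ n k i j (rename (⇑(Equiv.swap (Sum.inl i : TVar n k) (Sum.inl j))) f)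
      = ψ n k i j f := by
  have hcomp : (ψ n k i j).comp
      (rename (⇑(Equiv.swap (Sum.inl i : TVar n k) (Sum.inl j)))) = ψ n k i j := by
    apply MvPolynomial.algHom_ext
    intro v
    simp only [AlgHom.comp_apply, rename_X]
    by_cases hv1 : v = Sum.inl i
    · subst hv1
      rw [Equiv.swap_apply_left, ψ_X_self,
        ψ_X_ne n k i j _ (fun h => hij (Sum.inl_injective h).symm)]
    by_cases hv2 : v = Sum.inl j
    · subst hv2
      rw [Equiv.swap_apply_right, ψ_X_self,
        ψ_X_ne n k i j _ (fun h => hij (Sum.inl_injective h).symm)]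
    · rw [Equiv.swap_apply_of_ne_of_ne hv1 hv2]
  exact AlgHom.congr_fun hcomp f

lemma ψ_Ntot (i j : Fin k) (hij : i < j) : ψ n k i j (Ntot n k) = 0 := by
  have hne : i ≠ j := ne_of_lt hij
  have hren : rename (⇑(Equiv.swap (Sum.inl i : TVar n k) (Sum.inl j))) (Ntot n k)
      = - Ntot n k := by
    unfold Ntot
    rw [map_sum, ← Finset.sum_neg_distrib]
    refine Fintype.sum_equiv (Equiv.mulLeft (Equiv.swap i j)) _ _ fun σ => ?_
    rw [map_mul, map_intCast, rename_Npoly]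
    have hs : Equiv.Perm.sign (Equiv.mulLeft (Equiv.swap i j) σ)
        = - Equiv.Perm.sign σ := by
      rw [show ((Equiv.mulLeft (Equiv.swap i j)) σ) = Equiv.swap i j * σ from rfl,
        map_mul, Equiv.Perm.sign_swap hne]
      simp
    rw [show ((Equiv.mulLeft (Equiv.swap i j)) σ) = Equiv.swap i j * σ from rfl] at hs ⊢
    rw [hs]
    push_cast
    ring
  have h2 := congrArg (ψ n k i j) hren
  rw [ψ_comp_rename n k i j hne, map_neg] at h2
  have h3 : (2 : Rng n k) * ψ n k i j (Ntot n k) = 0 := by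
    rw [two_mul]
    exact eq_neg_iff_add_eq_zero.mp h2
  rcases mul_eq_zero.mp h3 with h | h
  · exact absurd h two_ne_zero
  · exact h

lemma V_dvd_Ntot : Vpoly n k ∣ Ntot n k := by
  rw [Vpoly_eq]
  refine prod_dvd n k (Pairs k) _ ?_ ?_ (Ntot n k) ?_
  · intro p hp
    exact prime_X_sub n k p.1 p.2 (ne_of_lt (Finset.mem_filter.mp hp).2)
  · intro p hp q hq hpq
    exact not_dvd_pairs n k p.1 p.2 q.1 q.2 (Finset.mem_filter.mp hp).2
      (Finset.mem_filter.mp hq).2 (by simpa using hpq)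
  · intro p hp
    exact dvd_of_ψ_eq_zero n k p.1 p.2 _ (ψ_Ntot n k p.1 p.2 (Finset.mem_filter.mp hp).2)

lemma Wkey : Wtrig n k (TV n k) (ZV n k) (HV n k) * φ n k (Vpoly n k)
    = φ n k (Ntot n k) := by
  unfold Wtrig Ntot
  rw [map_sum, Finset.sum_mul]
  refine Finset.sum_congr rfl fun σ _ => ?_
  have h := Ukey n k σ
  rw [Vsig_eq, map_mul, map_intCast] at h
  rw [map_mul, map_intCast, ← h]
  have hs : ((Equiv.Perm.sign σ : ℤ) : TF n k) * ((Equiv.Perm.sign σ : ℤ) : TF n k)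
      = 1 := by
    rcases Int.units_eq_one_or (Equiv.Perm.sign σ) with h1 | h1 <;> rw [h1] <;> norm_num
  calc Ufun n k (TV n k ∘ σ) (ZV n k) (HV n k) * φ n k (Vpoly n k)
      = (((Equiv.Perm.sign σ : ℤ) : TF n k) * ((Equiv.Perm.sign σ : ℤ) : TF n k))
        * (Ufun n k (TV n k ∘ σ) (ZV n k) (HV n k) * φ n k (Vpoly n k)) := by
        rw [hs, one_mul]
    _ = ((Equiv.Perm.sign σ : ℤ) : TF n k)
        * (Ufun n k (TV n k ∘ σ) (ZV n k) (HV n k)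
            * (((Equiv.Perm.sign σ : ℤ) : TF n k) * φ n k (Vpoly n k))) := by ring

end TrigAux

/-- The reduced trigonometric weight function is a polynomial in
`T₁⁻¹,…,T_k⁻¹, Z₁,…,Z_n, H` (the denominators `1 − T_j/T_i` cancel after
symmetrization). -/
theorem trig_weight_function_is_polynomial (n k : ℕ) (hk : k ≤ n) :
    ∃ P : MvPolynomial (TVar n k) ℂ,
      Wtrig n k (TV n k) (ZV n k) (HV n k)
        = eval₂
            ((algebraMap (MvPolynomial (TVar n k) ℂ) (TF n k)).comp
              (C : ℂ →+* MvPolynomial (TVar n k) ℂ))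
            (Sum.elim (fun i => (TV n k i)⁻¹)
              (Sum.elim (ZV n k) (fun _ => HV n k)))
            P := by
  obtain ⟨Q, hQ⟩ := TrigAux.V_dvd_Ntot n k
  refine ⟨Q, ?_⟩
  have hV0 : TrigAux.φ n k (TrigAux.Vpoly n k) ≠ 0 := by
    unfold TrigAux.Vpoly
    rw [map_prod]
    refine Finset.prod_ne_zero_iff.mpr fun i _ => ?_
    rw [map_prod]
    refine Finset.prod_ne_zero_iff.mpr fun j hj => ?_
    simp only [map_sub, TrigAux.φ_T]
    rw [sub_ne_zero]
    intro h
    exact (ne_of_gt (Finset.mem_Ioi.mp hj)) (TrigAux.TV_injective n k (inv_injective h))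
  have hW := TrigAux.Wkey n k
  rw [hQ, map_mul, mul_comm (TrigAux.φ n k (TrigAux.Vpoly n k))] at hW
  have hfin := mul_right_cancel₀ hV0 hW
  rw [hfin]
  rfl

end
end

section
/- The trigonometric weight function 𝒲⁰(T;Z;H) and the opposite trigonometric weight function 𝒲^∞(T;Z;H) are both symmetric under permutations of Z_1,...,Z_k and under permutations of Z_{k+1},...,Z_n. -/
noncomputable section

open MvPolynomial

/-- The trigonometric weight function `𝒲⁰`. -/
def W0 {F : Type*} [Field F] (n k : ℕ) (T : Fin k → F) (Z : Fin n → F)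
    (H : F) : F :=
  Wtrig n k T Z H *
    ∏ i : Fin k, ∏ a ∈ Finset.univ.filter (fun a : Fin n => k ≤ a.1),
      (1 - Z a / T i)

/-- The opposite trigonometric weight function `𝒲^∞`. -/
def Winf {F : Type*} [Field F] (n k : ℕ) (T : Fin k → F) (Z : Fin n → F)
    (H : F) : F :=
  H ^ (k * (k - 1) / 2) * Wtrig n k T Z H *
    ∏ i : Fin k, ∏ a ∈ Finset.univ.filter (fun a : Fin n => k ≤ a.1),
      (1 - H * Z a / T i)


open Finset

section TrigAux
variable {F : Type*} [Field F]

lemma prod_swap_inv {α : Type*} [DecidableEq α]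
    (d₁ d₂ : α) (S : Finset α) (hS : ∀ a ∈ S, Equiv.swap d₁ d₂ a ∈ S) (f : α → F) :
    ∏ a ∈ S, f (Equiv.swap d₁ d₂ a) = ∏ a ∈ S, f a :=
  Finset.prod_nbij' (fun a => Equiv.swap d₁ d₂ a) (fun a => Equiv.swap d₁ d₂ a)
    hS hS (fun a _ => Equiv.swap_apply_self _ _ _) (fun a _ => Equiv.swap_apply_self _ _ _)
    (fun a _ => rfl)

lemma quad_identity (u v x y h : F) (hu : u ≠ 0) (hv : v ≠ 0) (huv : u ≠ v) :
    ((1 - h * v / u) / (1 - v / u)) * (1 - x / u) * (1 - h * y / v) +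
      ((1 - h * u / v) / (1 - u / v)) * (1 - x / v) * (1 - h * y / u) =
    ((1 - h * v / u) / (1 - v / u)) * (1 - y / u) * (1 - h * x / v) +
      ((1 - h * u / v) / (1 - u / v)) * (1 - y / v) * (1 - h * x / u) := by
  have h1 : 1 - v / u ≠ 0 := by
    rw [sub_ne_zero]
    intro hh
    rw [eq_comm, div_eq_one_iff_eq hu] at hh
    exact huv hh.symm
  have h2 : 1 - u / v ≠ 0 := by
    rw [sub_ne_zero]
    intro hh
    rw [eq_comm, div_eq_one_iff_eq hv] at hh
    exact huv hh
  have huv' : u - v ≠ 0 := sub_ne_zero.mpr huv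
  have hvu' : v - u ≠ 0 := sub_ne_zero.mpr (Ne.symm huv)
  have e1 : (1 - h * v / u) / (1 - v / u) = (u - h * v) / (u - v) := by
    rw [div_eq_div_iff h1 huv']
    field_simp
    try ring
  have e2 : (1 - h * u / v) / (1 - u / v) = (v - h * u) / (v - u) := by
    rw [div_eq_div_iff h2 hvu']
    field_simp
    try ring
  rw [e1, e2]
  field_simp
  ring

/-- The `i`-th factor of `U`. -/
def Pterm (n k : ℕ) (T : Fin k → F) (Z : Fin n → F) (H : F) (i : Fin k) : F :=
  (∏ a ∈ Finset.univ.filter (fun a : Fin n => a.1 < i.1), (1 - H * Z a / T i)) *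
  (∏ b ∈ Finset.univ.filter (fun b : Fin n => i.1 < b.1 ∧ b.1 < k), (1 - Z b / T i)) *
  (∏ j ∈ Finset.univ.filter (fun j : Fin k => i < j), ((1 - H * T j / T i) / (1 - T j / T i)))

lemma Ufun_eq_prod (n k : ℕ) (T : Fin k → F) (Z : Fin n → F) (H : F) :
    Ufun n k T Z H = ∏ i : Fin k, Pterm n k T Z H i := rfl

/-- The `Z`- and `T`-symmetric part of `U` with respect to positions `c`, `c+1`. -/
def Efun (n k : ℕ) (T : Fin k → F) (Z : Fin n → F) (H : F) (c : ℕ) (hc : c + 1 < k) : F :=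
  ((∏ a ∈ Finset.univ.filter (fun a : Fin n => a.1 < c),
      (1 - H * Z a / T ⟨c, Nat.lt_of_succ_lt hc⟩)) *
   (∏ a ∈ Finset.univ.filter (fun a : Fin n => a.1 < c),
      (1 - H * Z a / T ⟨c + 1, hc⟩))) *
  ((∏ b ∈ Finset.univ.filter (fun b : Fin n => c + 1 < b.1 ∧ b.1 < k),
      (1 - Z b / T ⟨c, Nat.lt_of_succ_lt hc⟩)) *
   (∏ b ∈ Finset.univ.filter (fun b : Fin n => c + 1 < b.1 ∧ b.1 < k),
      (1 - Z b / T ⟨c + 1, hc⟩))) *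
  (∏ j ∈ Finset.univ.filter (fun j : Fin k => (⟨c + 1, hc⟩ : Fin k) < j),
     (((1 - H * T j / T ⟨c, Nat.lt_of_succ_lt hc⟩) / (1 - T j / T ⟨c, Nat.lt_of_succ_lt hc⟩)) *
      ((1 - H * T j / T ⟨c + 1, hc⟩) / (1 - T j / T ⟨c + 1, hc⟩)))) *
  (∏ i ∈ (Finset.univ.erase (⟨c, Nat.lt_of_succ_lt hc⟩ : Fin k)).erase ⟨c + 1, hc⟩,
     Pterm n k T Z H i)

lemma Ufun_decomp (n k : ℕ) (T : Fin k → F) (Z : Fin n → F) (H : F) (c : ℕ)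
    (hc : c + 1 < k) (hk : k ≤ n) :
    Ufun n k T Z H =
      Efun n k T Z H c hc *
        (((1 - H * T ⟨c + 1, hc⟩ / T ⟨c, Nat.lt_of_succ_lt hc⟩) /
            (1 - T ⟨c + 1, hc⟩ / T ⟨c, Nat.lt_of_succ_lt hc⟩)) *
         (1 - Z ⟨c + 1, Nat.lt_of_lt_of_le hc hk⟩ / T ⟨c, Nat.lt_of_succ_lt hc⟩) *
         (1 - H * Z ⟨c, Nat.lt_of_lt_of_le (Nat.lt_of_succ_lt hc) hk⟩ / T ⟨c + 1, hc⟩)) := by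
  classical
  set c₁ : Fin k := ⟨c, Nat.lt_of_succ_lt hc⟩ with hc₁
  set c₂ : Fin k := ⟨c + 1, hc⟩ with hc₂
  set d₁ : Fin n := ⟨c, Nat.lt_of_lt_of_le (Nat.lt_of_succ_lt hc) hk⟩ with hd₁
  set d₂ : Fin n := ⟨c + 1, Nat.lt_of_lt_of_le hc hk⟩ with hd₂
  have hc₂mem : c₂ ∈ Finset.univ.erase c₁ :=
    Finset.mem_erase.mpr ⟨by simp [hc₁, hc₂, Fin.ext_iff], Finset.mem_univ _⟩
  have h0 : Ufun n k T Z H = Pterm n k T Z H c₁ * (Pterm n k T Z H c₂ *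
      ∏ i ∈ (Finset.univ.erase c₁).erase c₂, Pterm n k T Z H i) := by
    rw [Ufun_eq_prod, ← Finset.mul_prod_erase Finset.univ _ (Finset.mem_univ c₁),
      ← Finset.mul_prod_erase _ _ hc₂mem]
  -- peel the B-factor of `Pterm c₁`
  have hBmem : d₂ ∈ Finset.univ.filter (fun b : Fin n => (c₁ : Fin k).1 < b.1 ∧ b.1 < k) := by
    simp [hd₂, hc₁]; omega
  have hBset : (Finset.univ.filter (fun b : Fin n => (c₁ : Fin k).1 < b.1 ∧ b.1 < k)).erase d₂
      = Finset.univ.filter (fun b : Fin n => c + 1 < b.1 ∧ b.1 < k) := by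
    ext b
    simp [hd₂, hc₁, Fin.ext_iff]
    omega
  have hB : (∏ b ∈ Finset.univ.filter (fun b : Fin n => (c₁ : Fin k).1 < b.1 ∧ b.1 < k),
        (1 - Z b / T c₁))
      = (1 - Z d₂ / T c₁) *
        ∏ b ∈ Finset.univ.filter (fun b : Fin n => c + 1 < b.1 ∧ b.1 < k), (1 - Z b / T c₁) := by
    rw [← Finset.mul_prod_erase _ _ hBmem, hBset]
  -- peel the A-factor of `Pterm c₂`
  have hAmem : d₁ ∈ Finset.univ.filter (fun a : Fin n => a.1 < (c₂ : Fin k).1) := by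
    simp [hd₁, hc₂]
  have hAset : (Finset.univ.filter (fun a : Fin n => a.1 < (c₂ : Fin k).1)).erase d₁
      = Finset.univ.filter (fun a : Fin n => a.1 < c) := by
    ext a
    simp [hd₁, hc₂, Fin.ext_iff]
    omega
  have hA : (∏ a ∈ Finset.univ.filter (fun a : Fin n => a.1 < (c₂ : Fin k).1),
        (1 - H * Z a / T c₂))
      = (1 - H * Z d₁ / T c₂) *
        ∏ a ∈ Finset.univ.filter (fun a : Fin n => a.1 < c), (1 - H * Z a / T c₂) := by
    rw [← Finset.mul_prod_erase _ _ hAmem, hAset]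
  -- peel the C-factor of `Pterm c₁`
  have hCmem : c₂ ∈ Finset.univ.filter (fun j : Fin k => c₁ < j) := by
    simp [hc₁, hc₂, Fin.lt_def]
  have hCset : (Finset.univ.filter (fun j : Fin k => c₁ < j)).erase c₂
      = Finset.univ.filter (fun j : Fin k => c₂ < j) := by
    ext j
    simp [hc₁, hc₂, Fin.lt_def, Fin.ext_iff]
    omega
  have hC : (∏ j ∈ Finset.univ.filter (fun j : Fin k => c₁ < j),
        ((1 - H * T j / T c₁) / (1 - T j / T c₁)))
      = ((1 - H * T c₂ / T c₁) / (1 - T c₂ / T c₁)) *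
        ∏ j ∈ Finset.univ.filter (fun j : Fin k => c₂ < j),
          ((1 - H * T j / T c₁) / (1 - T j / T c₁)) := by
    rw [← Finset.mul_prod_erase _ _ hCmem, hCset]
  have hsplit : ∏ j ∈ Finset.univ.filter (fun j : Fin k => c₂ < j),
        (((1 - H * T j / T c₁) / (1 - T j / T c₁)) * ((1 - H * T j / T c₂) / (1 - T j / T c₂)))
      = (∏ j ∈ Finset.univ.filter (fun j : Fin k => c₂ < j),
           ((1 - H * T j / T c₁) / (1 - T j / T c₁))) *
        (∏ j ∈ Finset.univ.filter (fun j : Fin k => c₂ < j),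
           ((1 - H * T j / T c₂) / (1 - T j / T c₂))) := Finset.prod_mul_distrib
  rw [h0, Efun, hsplit]
  rw [Pterm, Pterm, hB, hA, hC]
  ring

lemma Pterm_swapT (n k : ℕ) (T : Fin k → F) (Z : Fin n → F) (H : F) (c : ℕ)
    (hc : c + 1 < k) (i : Fin k) (h1 : i ≠ ⟨c, Nat.lt_of_succ_lt hc⟩) (h2 : i ≠ ⟨c + 1, hc⟩) :
    Pterm n k (T ∘ Equiv.swap (⟨c, Nat.lt_of_succ_lt hc⟩ : Fin k) ⟨c + 1, hc⟩) Z H i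
      = Pterm n k T Z H i := by
  classical
  set c₁ : Fin k := ⟨c, Nat.lt_of_succ_lt hc⟩
  set c₂ : Fin k := ⟨c + 1, hc⟩
  have hTi : (T ∘ Equiv.swap c₁ c₂) i = T i := by
    simp only [Function.comp_apply, Equiv.swap_apply_of_ne_of_ne h1 h2]
  rw [Pterm, Pterm, hTi]
  congr 1
  have hmaps : ∀ j ∈ Finset.univ.filter (fun j : Fin k => i < j),
      Equiv.swap c₁ c₂ j ∈ Finset.univ.filter (fun j : Fin k => i < j) := by
    intro j hj
    simp only [Finset.mem_filter, Finset.mem_univ, true_and] at hj ⊢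
    rcases eq_or_ne j c₁ with rfl | hj1
    · rw [Equiv.swap_apply_left]
      rw [Fin.lt_def] at hj ⊢
      simp only [c₁, c₂] at *
      omega
    rcases eq_or_ne j c₂ with rfl | hj2
    · rw [Equiv.swap_apply_right]
      have h1' : i.1 ≠ c := fun h => h1 (Fin.ext h)
      rw [Fin.lt_def] at hj ⊢
      simp only [c₁, c₂] at *
      omega
    · rwa [Equiv.swap_apply_of_ne_of_ne hj1 hj2]
  calc (∏ j ∈ Finset.univ.filter (fun j : Fin k => i < j),
        ((1 - H * (T ∘ Equiv.swap c₁ c₂) j / T i) / (1 - (T ∘ Equiv.swap c₁ c₂) j / T i)))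
      = ∏ j ∈ Finset.univ.filter (fun j : Fin k => i < j),
        (fun j => ((1 - H * T j / T i) / (1 - T j / T i))) (Equiv.swap c₁ c₂ j) := rfl
    _ = _ := prod_swap_inv c₁ c₂ _ hmaps (fun j => (1 - H * T j / T i) / (1 - T j / T i))

lemma Efun_swapT (n k : ℕ) (T : Fin k → F) (Z : Fin n → F) (H : F) (c : ℕ)
    (hc : c + 1 < k) :
    Efun n k (T ∘ Equiv.swap (⟨c, Nat.lt_of_succ_lt hc⟩ : Fin k) ⟨c + 1, hc⟩) Z H c hc
      = Efun n k T Z H c hc := by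
  classical
  set c₁ : Fin k := ⟨c, Nat.lt_of_succ_lt hc⟩ with hc₁
  set c₂ : Fin k := ⟨c + 1, hc⟩ with hc₂
  have hs1 : (T ∘ Equiv.swap c₁ c₂) c₁ = T c₂ := by
    simp only [Function.comp_apply, Equiv.swap_apply_left]
  have hs2 : (T ∘ Equiv.swap c₁ c₂) c₂ = T c₁ := by
    simp only [Function.comp_apply, Equiv.swap_apply_right]
  rw [Efun, Efun]
  rw [hs1, hs2]
  have hCblock : (∏ j ∈ Finset.univ.filter (fun j : Fin k => c₂ < j),
        (((1 - H * (T ∘ Equiv.swap c₁ c₂) j / T c₂) / (1 - (T ∘ Equiv.swap c₁ c₂) j / T c₂)) *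
         ((1 - H * (T ∘ Equiv.swap c₁ c₂) j / T c₁) / (1 - (T ∘ Equiv.swap c₁ c₂) j / T c₁))))
      = ∏ j ∈ Finset.univ.filter (fun j : Fin k => c₂ < j),
        (((1 - H * T j / T c₁) / (1 - T j / T c₁)) *
         ((1 - H * T j / T c₂) / (1 - T j / T c₂))) := by
    apply Finset.prod_congr rfl
    intro j hj
    simp only [Finset.mem_filter, Finset.mem_univ, true_and, Fin.lt_def] at hj
    have hne1 : j ≠ c₁ := by rw [Fin.ne_iff_vne]; simp only [c₁, c₂] at *; omega
    have hne2 : j ≠ c₂ := by rw [Fin.ne_iff_vne]; simp only [c₁, c₂] at *; omega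
    simp only [Function.comp_apply, Equiv.swap_apply_of_ne_of_ne hne1 hne2]
    ring
  have hRblock : (∏ i ∈ (Finset.univ.erase c₁).erase c₂,
        Pterm n k (T ∘ Equiv.swap c₁ c₂) Z H i)
      = ∏ i ∈ (Finset.univ.erase c₁).erase c₂, Pterm n k T Z H i := by
    apply Finset.prod_congr rfl
    intro i hi
    rw [Finset.mem_erase, Finset.mem_erase] at hi
    exact Pterm_swapT n k T Z H c hc i hi.2.1 hi.1
  rw [hCblock, hRblock]
  ring

lemma swap_maps_val {n : ℕ} (d₁ d₂ : Fin n) (p : ℕ → Prop) [DecidablePred p]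
    (hp1 : p d₁.1 ↔ p d₂.1) (a : Fin n) (ha : p a.1) : p ((Equiv.swap d₁ d₂ a).1) := by
  rcases eq_or_ne a d₁ with rfl | h1
  · rw [Equiv.swap_apply_left]; exact hp1.mp ha
  rcases eq_or_ne a d₂ with rfl | h2
  · rw [Equiv.swap_apply_right]; exact hp1.mpr ha
  · rwa [Equiv.swap_apply_of_ne_of_ne h1 h2]

lemma prod_swapZ_inv {n : ℕ} (d₁ d₂ : Fin n) (p : ℕ → Prop) [DecidablePred p]
    (hp1 : p d₁.1 ↔ p d₂.1) (f : Fin n → F) :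
    ∏ a ∈ Finset.univ.filter (fun a : Fin n => p a.1), f (Equiv.swap d₁ d₂ a)
      = ∏ a ∈ Finset.univ.filter (fun a : Fin n => p a.1), f a := by
  apply prod_swap_inv
  intro a ha
  simp only [Finset.mem_filter, Finset.mem_univ, true_and] at ha ⊢
  exact swap_maps_val d₁ d₂ p hp1 a ha

lemma Pterm_swapZ (n k : ℕ) (T : Fin k → F) (Z : Fin n → F) (H : F) (c : ℕ)
    (hc : c + 1 < k) (hk : k ≤ n) (i : Fin k)
    (h1 : i.1 ≠ c) (h2 : i.1 ≠ c + 1) :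
    Pterm n k T (Z ∘ Equiv.swap (⟨c, Nat.lt_of_lt_of_le (Nat.lt_of_succ_lt hc) hk⟩ : Fin n)
        ⟨c + 1, Nat.lt_of_lt_of_le hc hk⟩) H i
      = Pterm n k T Z H i := by
  classical
  set d₁ : Fin n := ⟨c, Nat.lt_of_lt_of_le (Nat.lt_of_succ_lt hc) hk⟩
  set d₂ : Fin n := ⟨c + 1, Nat.lt_of_lt_of_le hc hk⟩
  rw [Pterm, Pterm]
  congr 1
  congr 1
  · exact prod_swapZ_inv d₁ d₂ (fun m => m < i.1) (by simp only [d₁, d₂]; omega)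
      (fun a => 1 - H * Z a / T i)
  · exact prod_swapZ_inv d₁ d₂ (fun m => i.1 < m ∧ m < k) (by simp only [d₁, d₂]; omega)
      (fun b => 1 - Z b / T i)

lemma Efun_swapZ (n k : ℕ) (T : Fin k → F) (Z : Fin n → F) (H : F) (c : ℕ)
    (hc : c + 1 < k) (hk : k ≤ n) :
    Efun n k T (Z ∘ Equiv.swap (⟨c, Nat.lt_of_lt_of_le (Nat.lt_of_succ_lt hc) hk⟩ : Fin n)
        ⟨c + 1, Nat.lt_of_lt_of_le hc hk⟩) H c hc
      = Efun n k T Z H c hc := by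
  classical
  set d₁ : Fin n := ⟨c, Nat.lt_of_lt_of_le (Nat.lt_of_succ_lt hc) hk⟩
  set d₂ : Fin n := ⟨c + 1, Nat.lt_of_lt_of_le hc hk⟩
  rw [Efun, Efun]
  simp only [Function.comp_apply]
  rw [prod_swapZ_inv d₁ d₂ (fun m => m < c) (by simp only [d₁, d₂]; omega)
      (fun a => 1 - H * Z a / T ⟨c, Nat.lt_of_succ_lt hc⟩),
    prod_swapZ_inv d₁ d₂ (fun m => m < c) (by simp only [d₁, d₂]; omega)
      (fun a => 1 - H * Z a / T ⟨c + 1, hc⟩),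
    prod_swapZ_inv d₁ d₂ (fun m => c + 1 < m ∧ m < k) (by simp only [d₁, d₂]; omega)
      (fun b => 1 - Z b / T ⟨c, Nat.lt_of_succ_lt hc⟩),
    prod_swapZ_inv d₁ d₂ (fun m => c + 1 < m ∧ m < k) (by simp only [d₁, d₂]; omega)
      (fun b => 1 - Z b / T ⟨c + 1, hc⟩)]
  congr 1
  apply Finset.prod_congr rfl
  intro i hi
  rw [Finset.mem_erase, Finset.mem_erase] at hi
  exact Pterm_swapZ n k T Z H c hc hk i
    (fun h => hi.2.1 (Fin.ext h)) (fun h => hi.1 (Fin.ext h))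

lemma pair_lemma (n k : ℕ) (T : Fin k → F) (Z : Fin n → F) (H : F) (c : ℕ)
    (hc : c + 1 < k) (hk : k ≤ n) (hTinj : Function.Injective T)
    (hT0 : ∀ i, T i ≠ 0) (π : Equiv.Perm (Fin k)) :
    Ufun n k (T ∘ π) (Z ∘ Equiv.swap
        (⟨c, Nat.lt_of_lt_of_le (Nat.lt_of_succ_lt hc) hk⟩ : Fin n)
        ⟨c + 1, Nat.lt_of_lt_of_le hc hk⟩) H +
      Ufun n k (T ∘ ⇑(π * Equiv.swap (⟨c, Nat.lt_of_succ_lt hc⟩ : Fin k) ⟨c + 1, hc⟩))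
        (Z ∘ Equiv.swap (⟨c, Nat.lt_of_lt_of_le (Nat.lt_of_succ_lt hc) hk⟩ : Fin n)
          ⟨c + 1, Nat.lt_of_lt_of_le hc hk⟩) H =
    Ufun n k (T ∘ π) Z H +
      Ufun n k (T ∘ ⇑(π * Equiv.swap (⟨c, Nat.lt_of_succ_lt hc⟩ : Fin k) ⟨c + 1, hc⟩)) Z H := by
  classical
  set c₁ : Fin k := ⟨c, Nat.lt_of_succ_lt hc⟩ with hc₁
  set c₂ : Fin k := ⟨c + 1, hc⟩ with hc₂
  set d₁ : Fin n := ⟨c, Nat.lt_of_lt_of_le (Nat.lt_of_succ_lt hc) hk⟩ with hd₁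
  set d₂ : Fin n := ⟨c + 1, Nat.lt_of_lt_of_le hc hk⟩ with hd₂
  have hcomp : T ∘ ⇑(π * Equiv.swap c₁ c₂) = (T ∘ ⇑π) ∘ ⇑(Equiv.swap c₁ c₂) := rfl
  rw [hcomp]
  rw [Ufun_decomp n k (T ∘ π) (Z ∘ Equiv.swap d₁ d₂) H c hc hk,
    Ufun_decomp n k ((T ∘ π) ∘ Equiv.swap c₁ c₂) (Z ∘ Equiv.swap d₁ d₂) H c hc hk,
    Ufun_decomp n k (T ∘ π) Z H c hc hk,
    Ufun_decomp n k ((T ∘ π) ∘ Equiv.swap c₁ c₂) Z H c hc hk]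
  rw [Efun_swapZ n k (T ∘ π) Z H c hc hk,
    Efun_swapZ n k ((T ∘ π) ∘ Equiv.swap c₁ c₂) Z H c hc hk,
    Efun_swapT n k (T ∘ π) Z H c hc]
  have e1 : ((T ∘ π) ∘ Equiv.swap c₁ c₂) ⟨c, Nat.lt_of_succ_lt hc⟩ = (T ∘ π) c₂ := by
    simp only [Function.comp_apply]
    rw [show (⟨c, Nat.lt_of_succ_lt hc⟩ : Fin k) = c₁ from rfl, Equiv.swap_apply_left]
  have e2 : ((T ∘ π) ∘ Equiv.swap c₁ c₂) ⟨c + 1, hc⟩ = (T ∘ π) c₁ := by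
    simp only [Function.comp_apply]
    rw [show (⟨c + 1, hc⟩ : Fin k) = c₂ from rfl, Equiv.swap_apply_right]
  have z1 : (Z ∘ Equiv.swap d₁ d₂) ⟨c + 1, Nat.lt_of_lt_of_le hc hk⟩ = Z d₁ := by
    simp only [Function.comp_apply]
    rw [show (⟨c + 1, Nat.lt_of_lt_of_le hc hk⟩ : Fin n) = d₂ from rfl, Equiv.swap_apply_right]
  have z2 : (Z ∘ Equiv.swap d₁ d₂) ⟨c, Nat.lt_of_lt_of_le (Nat.lt_of_succ_lt hc) hk⟩
      = Z d₂ := by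
    simp only [Function.comp_apply]
    rw [show (⟨c, Nat.lt_of_lt_of_le (Nat.lt_of_succ_lt hc) hk⟩ : Fin n) = d₁ from rfl,
      Equiv.swap_apply_left]
  rw [e1, e2, z1, z2]
  have hu0 : (T ∘ π) c₁ ≠ 0 := hT0 _
  have hv0 : (T ∘ π) c₂ ≠ 0 := hT0 _
  have huv : (T ∘ π) c₁ ≠ (T ∘ π) c₂ := by
    intro h
    have h3 := π.injective (hTinj h)
    simp only [hc₁, hc₂, Fin.mk.injEq] at h3
    omega
  have key := quad_identity ((T ∘ π) c₁) ((T ∘ π) c₂) (Z d₂) (Z d₁) H hu0 hv0 huv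
  set E := Efun n k (T ∘ π) Z H c hc
  set u := (T ∘ π) c₁
  set v := (T ∘ π) c₂
  calc E * ((1 - H * v / u) / (1 - v / u) * (1 - Z d₁ / u) * (1 - H * Z d₂ / v)) +
        E * ((1 - H * u / v) / (1 - u / v) * (1 - Z d₁ / v) * (1 - H * Z d₂ / u))
      = E * ((1 - H * v / u) / (1 - v / u) * (1 - Z d₁ / u) * (1 - H * Z d₂ / v) +
          (1 - H * u / v) / (1 - u / v) * (1 - Z d₁ / v) * (1 - H * Z d₂ / u)) := by ring
    _ = E * ((1 - H * v / u) / (1 - v / u) * (1 - Z d₂ / u) * (1 - H * Z d₁ / v) +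
          (1 - H * u / v) / (1 - u / v) * (1 - Z d₂ / v) * (1 - H * Z d₁ / u)) := by
        rw [quad_identity u v (Z d₁) (Z d₂) H hu0 hv0 huv]
    _ = _ := by ring

lemma Wtrig_swap_adj (n k : ℕ) (T : Fin k → F) (Z : Fin n → F) (H : F) (c : ℕ)
    (hc : c + 1 < k) (hk : k ≤ n) (hTinj : Function.Injective T)
    (hT0 : ∀ i, T i ≠ 0) :
    Wtrig n k T (Z ∘ Equiv.swap
        (⟨c, Nat.lt_of_lt_of_le (Nat.lt_of_succ_lt hc) hk⟩ : Fin n)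
        ⟨c + 1, Nat.lt_of_lt_of_le hc hk⟩) H = Wtrig n k T Z H := by
  classical
  set c₁ : Fin k := ⟨c, Nat.lt_of_succ_lt hc⟩ with hc₁
  set c₂ : Fin k := ⟨c + 1, hc⟩ with hc₂
  set d₁ : Fin n := ⟨c, Nat.lt_of_lt_of_le (Nat.lt_of_succ_lt hc) hk⟩ with hd₁
  set d₂ : Fin n := ⟨c + 1, Nat.lt_of_lt_of_le hc hk⟩ with hd₂
  rw [Wtrig, Wtrig, ← sub_eq_zero, ← Finset.sum_sub_distrib]
  apply Finset.sum_involution (fun π _ => π * Equiv.swap c₁ c₂)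
  · intro π _
    have hpl := pair_lemma n k T Z H c hc hk hTinj hT0 π
    simp only [hc₁, hc₂, hd₁, hd₂]
    rw [sub_add_sub_comm, sub_eq_zero]
    exact hpl
  · intro π _ hne
    intro h
    have h' : π * Equiv.swap c₁ c₂ = π * 1 := by rwa [mul_one]
    have h1 : Equiv.swap c₁ c₂ = 1 := mul_left_cancel h'
    have h2 := congrArg (fun e : Equiv.Perm (Fin k) => e c₁) h1
    simp only [Equiv.swap_apply_left, Equiv.Perm.coe_one, id_eq] at h2
    simp only [hc₁, hc₂, Fin.mk.injEq] at h2
    omega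
  · intro π _
    exact Finset.mem_univ _
  · intro π _
    rw [mul_assoc, Equiv.swap_mul_self, mul_one]

lemma Wtrig_swap_adj' (n k : ℕ) (T : Fin k → F) (H : F) (hk : k ≤ n)
    (hTinj : Function.Injective T) (hT0 : ∀ i, T i ≠ 0)
    (a b : Fin n) (hb : b.1 < k) (hab : b.1 = a.1 + 1) (Z : Fin n → F) :
    Wtrig n k T (Z ∘ Equiv.swap a b) H = Wtrig n k T Z H := by
  have hc : a.1 + 1 < k := hab ▸ hb
  have hb2 : b = (⟨a.1 + 1, Nat.lt_of_lt_of_le hc hk⟩ : Fin n) := Fin.ext hab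
  rw [hb2]
  exact Wtrig_swap_adj n k T Z H a.1 hc hk hTinj hT0

lemma Wtrig_swap_lt (n k : ℕ) (T : Fin k → F) (H : F) (hk : k ≤ n)
    (hTinj : Function.Injective T) (hT0 : ∀ i, T i ≠ 0) :
    ∀ (m : ℕ) (a b : Fin n), b.1 < k → b.1 = a.1 + m + 1 →
      ∀ Z : Fin n → F, Wtrig n k T (Z ∘ Equiv.swap a b) H = Wtrig n k T Z H := by
  intro m
  induction m with
  | zero =>
    intro a b hb hab Z
    exact Wtrig_swap_adj' n k T H hk hTinj hT0 a b hb hab Z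
  | succ m ih =>
    intro a b hb hab Z
    set b' : Fin n := ⟨b.1 - 1, lt_of_le_of_lt (Nat.pred_le _) b.isLt⟩ with hb'
    have hb'k : b'.1 < k := lt_of_le_of_lt (Nat.pred_le _) hb
    have hbb' : b.1 = b'.1 + 1 := by simp only [hb']; omega
    have hab' : b'.1 = a.1 + m + 1 := by simp only [hb']; omega
    have hsa : Equiv.swap b' b a = a := by
      apply Equiv.swap_apply_of_ne_of_ne <;> · rw [Fin.ne_iff_vne]; omega
    have hsb' : Equiv.swap b' b b' = b := Equiv.swap_apply_left _ _
    have hdecomp : Equiv.swap a b = Equiv.swap b' b * Equiv.swap a b' * (Equiv.swap b' b)⁻¹ := by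
      rw [← Equiv.swap_apply_apply, hsa, hsb']
    have hinv : (Equiv.swap b' b)⁻¹ = Equiv.swap b' b := Equiv.swap_inv _ _
    rw [hdecomp, hinv]
    have hcomp : Z ∘ ⇑(Equiv.swap b' b * Equiv.swap a b' * Equiv.swap b' b)
        = ((Z ∘ ⇑(Equiv.swap b' b)) ∘ ⇑(Equiv.swap a b')) ∘ ⇑(Equiv.swap b' b) := rfl
    rw [hcomp]
    rw [Wtrig_swap_adj' n k T H hk hTinj hT0 b' b hb hbb'
      ((Z ∘ ⇑(Equiv.swap b' b)) ∘ ⇑(Equiv.swap a b'))]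
    rw [ih a b' hb'k hab' (Z ∘ ⇑(Equiv.swap b' b))]
    exact Wtrig_swap_adj' n k T H hk hTinj hT0 b' b hb hbb' Z

lemma Wtrig_swap_any (n k : ℕ) (T : Fin k → F) (H : F) (hk : k ≤ n)
    (hTinj : Function.Injective T) (hT0 : ∀ i, T i ≠ 0)
    (a b : Fin n) (ha : a.1 < k) (hb : b.1 < k) (hab : a ≠ b) (Z : Fin n → F) :
    Wtrig n k T (Z ∘ Equiv.swap a b) H = Wtrig n k T Z H := by
  have hne : a.1 ≠ b.1 := fun h => hab (Fin.ext h)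
  rcases Nat.lt_or_ge a.1 b.1 with h | h
  · exact Wtrig_swap_lt n k T H hk hTinj hT0 (b.1 - a.1 - 1) a b hb (by omega) Z
  · rw [Equiv.swap_comm]
    exact Wtrig_swap_lt n k T H hk hTinj hT0 (a.1 - b.1 - 1) b a ha (by omega) Z

lemma Ufun_congr (n k : ℕ) (T : Fin k → F) (H : F) (Z Z' : Fin n → F)
    (h : ∀ a : Fin n, a.1 < k → Z a = Z' a) :
    Ufun n k T Z H = Ufun n k T Z' H := by
  rw [Ufun_eq_prod, Ufun_eq_prod]
  apply Finset.prod_congr rfl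
  intro i _
  rw [Pterm, Pterm]
  congr 1
  congr 1
  · apply Finset.prod_congr rfl
    intro a ha
    simp only [Finset.mem_filter, Finset.mem_univ, true_and] at ha
    rw [h a (lt_trans ha i.isLt)]
  · apply Finset.prod_congr rfl
    intro b hbm
    simp only [Finset.mem_filter, Finset.mem_univ, true_and] at hbm
    rw [h b hbm.2]

lemma Wtrig_congr (n k : ℕ) (T : Fin k → F) (H : F) (Z Z' : Fin n → F)
    (h : ∀ a : Fin n, a.1 < k → Z a = Z' a) :
    Wtrig n k T Z H = Wtrig n k T Z' H :=
  Finset.sum_congr rfl fun π _ => Ufun_congr n k (T ∘ π) H Z Z' h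

lemma Wtrig_perm (n k : ℕ) (T : Fin k → F) (H : F) (hk : k ≤ n)
    (hTinj : Function.Injective T) (hT0 : ∀ i, T i ≠ 0)
    (σ : Equiv.Perm (Fin n)) (hσ : ∀ a : Fin n, a.1 < k ↔ (σ a).1 < k) (Z : Fin n → F) :
    Wtrig n k T (Z ∘ σ) H = Wtrig n k T Z H := by
  classical
  set p : Fin n → Prop := fun a => a.1 < k with hp
  have hσ' : ∀ a : Fin n, p a ↔ p (σ a) := hσ
  set τ : Equiv.Perm {x // p x} := σ.subtypePerm (fun a => (hσ' a).symm) with hτ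
  set e : Equiv.Perm (Fin n) := Equiv.Perm.ofSubtype τ with he
  -- `e` invariance by swap induction
  have he_inv : ∀ (τ' : Equiv.Perm {x // p x}) (Z : Fin n → F),
      Wtrig n k T (Z ∘ Equiv.Perm.ofSubtype τ') H = Wtrig n k T Z H := by
    intro τ'
    refine Equiv.Perm.swap_induction_on τ' ?_ ?_
    · intro Z
      simp only [map_one, Equiv.Perm.coe_one, Function.comp_id]
    · intro f x y hxy ihf
      intro Z
      rw [map_mul, Equiv.Perm.coe_mul, ← Function.comp_assoc]
      rw [ihf (Z ∘ ⇑(Equiv.Perm.ofSubtype (Equiv.swap x y)))]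
      rw [Equiv.Perm.ofSubtype_swap_eq]
      exact Wtrig_swap_any n k T H hk hTinj hT0 x.val y.val x.2 y.2
        (fun hfx => hxy (Subtype.ext hfx)) Z
  -- decompose σ = e * f with f fixing the first block pointwise
  have hef : ∀ a : Fin n, p a → e a = σ a := by
    intro a hpa
    rw [he, Equiv.Perm.ofSubtype_apply_of_mem τ hpa]
    rfl
  have hfix : ∀ a : Fin n, p a → (e⁻¹ * σ) a = a := by
    intro a hpa
    have : e a = σ a := hef a hpa
    simp only [Equiv.Perm.mul_apply]
    rw [← this]
    exact e.symm_apply_apply a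
  have hσe : σ = e * (e⁻¹ * σ) := by rw [← mul_assoc, mul_inv_cancel, one_mul]
  calc Wtrig n k T (Z ∘ σ) H
      = Wtrig n k T ((Z ∘ ⇑e) ∘ ⇑(e⁻¹ * σ)) H := by
        rw [Function.comp_assoc, ← Equiv.Perm.coe_mul, ← hσe]
    _ = Wtrig n k T (Z ∘ ⇑e) H := by
        apply Wtrig_congr
        intro a hpa
        simp only [Function.comp_apply]
        rw [hfix a hpa]
    _ = Wtrig n k T Z H := he_inv τ Z

lemma prod_filter_ge_reindex {n k : ℕ} (σ : Equiv.Perm (Fin n))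
    (hσ : ∀ a : Fin n, a.1 < k ↔ (σ a).1 < k) (g : Fin n → F) :
    ∏ a ∈ Finset.univ.filter (fun a : Fin n => k ≤ a.1), g (σ a)
      = ∏ a ∈ Finset.univ.filter (fun a : Fin n => k ≤ a.1), g a := by
  apply Finset.prod_nbij' (fun a => σ a) (fun a => σ.symm a)
  · intro a ha
    simp only [Finset.mem_filter, Finset.mem_univ, true_and] at ha ⊢
    have := hσ a
    omega
  · intro a ha
    simp only [Finset.mem_filter, Finset.mem_univ, true_and] at ha ⊢
    have := hσ (σ.symm a)
    rw [Equiv.apply_symm_apply] at this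
    omega
  · intro a _; exact Equiv.symm_apply_apply _ _
  · intro a _; exact Equiv.apply_symm_apply _ _
  · intro a _; rfl

end TrigAux

/-- Lemma 3.1: the trigonometric weight function `𝒲⁰(T;Z;H)` and the opposite
trigonometric weight function `𝒲^∞(T;Z;H)` are symmetric in `Z₁,…,Z_k` and in
`Z_{k+1},…,Z_n`, i.e. invariant under any permutation of the `Z`-variables
preserving the two blocks. -/
theorem trig_weight_functions_symmetric_in_Z (n k : ℕ) (hk : k ≤ n)
    (σ : Equiv.Perm (Fin n)) (hσ : ∀ a : Fin n, a.1 < k ↔ (σ a).1 < k) :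
    W0 n k (TV n k) (ZV n k ∘ σ) (HV n k) = W0 n k (TV n k) (ZV n k) (HV n k) ∧
    Winf n k (TV n k) (ZV n k ∘ σ) (HV n k)
      = Winf n k (TV n k) (ZV n k) (HV n k) := by
  have halg : Function.Injective
      (algebraMap (MvPolynomial (TVar n k) ℂ) (TF n k)) :=
    IsFractionRing.injective _ _
  have hTinj : Function.Injective (TV n k) := by
    intro i j h
    have := halg h
    have := MvPolynomial.X_injective this
    exact Sum.inl.inj this
  have hT0 : ∀ i, TV n k i ≠ 0 := by
    intro i h
    have h0 : algebraMap (MvPolynomial (TVar n k) ℂ) (TF n k) (MvPolynomial.X (Sum.inl i))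
        = algebraMap (MvPolynomial (TVar n k) ℂ) (TF n k) 0 := by
      rw [map_zero]; exact h
    exact MvPolynomial.X_ne_zero _ (halg h0)
  have hW : Wtrig n k (TV n k) (ZV n k ∘ σ) (HV n k)
      = Wtrig n k (TV n k) (ZV n k) (HV n k) :=
    Wtrig_perm n k (TV n k) (HV n k) hk hTinj hT0 σ hσ (ZV n k)
  constructor
  · rw [W0, W0, hW]
    congr 1
    apply Finset.prod_congr rfl
    intro i _
    exact prod_filter_ge_reindex σ hσ (fun a => 1 - ZV n k a / TV n k i)
  · rw [Winf, Winf, hW]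
    refine congrArg₂ (· * ·) rfl ?_
    apply Finset.prod_congr rfl
    intro i _
    exact prod_filter_ge_reindex σ hσ (fun a => 1 - HV n k * ZV n k a / TV n k i)

end
end

section
/- Fix n ≥ 1 and k with 1 ≤ k ≤ n. For each m with 1 ≤ m ≤ k, let S_n[k,m] be the set of σ ∈ S_n with σ(i) = i for i < m, σ(j) ≥ j for m ≤ j ≤ k, and σ increasing on {k+1,...,n}. Then there is a bijection between S_n[k, m−1] (for m ≥ 2) and the set of pairs (σ, i) with σ ∈ S_n[k,m], i ∈ {m−1,...,n}, and i ∉ {σ(m),...,σ(k)}; the bijection sends ρ ∈ S_n[k,m−1] to the pair (σ, ρ(m−1)) where σ(m−1) = m−1 and σ(j) = ρ(j) for m ≤ j ≤ k (and σ is increasing on {k+1,...,n}). -/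
open Finset
set_option maxHeartbeats 1000000
lemma card_filter_val_lt (n k : ℕ) (hk : k ≤ n) :
    ((Finset.univ : Finset (Fin n)).filter fun i => i.1 < k).card = k := by
  have h : ((Finset.univ : Finset (Fin n)).filter fun i => i.1 < k)
      = (Finset.range k).attachFin
        (fun m hm => lt_of_lt_of_le (Finset.mem_range.mp hm) hk) := by
    ext i; simp
  rw [h, Finset.card_attachFin, Finset.card_range]

variable {n : ℕ}

def InjBelow (k : ℕ) (f : Fin n → Fin n) : Prop :=
  ∀ i j : Fin n, i.1 < k → j.1 < k → f i = f j → i = j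

lemma card_compl_image (k : ℕ) (hk : k ≤ n) (f : Fin n → Fin n) (hf : InjBelow k f) :
    ((((Finset.univ : Finset (Fin n)).filter fun i => i.1 < k).image f)ᶜ).card = n - k := by
  rw [Finset.card_compl, Finset.card_image_of_injOn
    (fun i hi j hj h => hf i j (by simpa using hi) (by simpa using hj) h),
    card_filter_val_lt n k hk]
  simp

noncomputable def extFun (k : ℕ) (hk : k ≤ n) (f : Fin n → Fin n) (hf : InjBelow k f) :
    Fin n → Fin n := fun j =>
  if h : j.1 < k then f j
  else ((((Finset.univ : Finset (Fin n)).filter fun i => i.1 < k).image f)ᶜ).orderEmbOfFin (k := n - k)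
    (card_compl_image k hk f hf) ⟨j.1 - k, by have := j.isLt; omega⟩

lemma extFun_inj (k : ℕ) (hk : k ≤ n) (f : Fin n → Fin n) (hf : InjBelow k f) :
    Function.Injective (extFun k hk f hf) := by
  intro a b hab
  unfold extFun at hab
  by_cases ha : a.1 < k <;> by_cases hb : b.1 < k
  · rw [dif_pos ha, dif_pos hb] at hab
    exact hf a b ha hb hab
  · rw [dif_pos ha, dif_neg hb] at hab
    exfalso
    have h1 : f a ∈ ((Finset.univ : Finset (Fin n)).filter fun i => i.1 < k).image f :=
      Finset.mem_image.mpr ⟨a, by simpa using ha, rfl⟩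
    have h2 := Finset.orderEmbOfFin_mem (k := n - k) _ (card_compl_image k hk f hf)
      (⟨b.1 - k, by have := b.isLt; omega⟩ : Fin (n - k))
    rw [← hab] at h2
    exact (Finset.mem_compl.mp h2) h1
  · rw [dif_neg ha, dif_pos hb] at hab
    exfalso
    have h1 : f b ∈ ((Finset.univ : Finset (Fin n)).filter fun i => i.1 < k).image f :=
      Finset.mem_image.mpr ⟨b, by simpa using hb, rfl⟩
    have h2 := Finset.orderEmbOfFin_mem (k := n - k) _ (card_compl_image k hk f hf)
      (⟨a.1 - k, by have := a.isLt; omega⟩ : Fin (n - k))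
    rw [hab] at h2
    exact (Finset.mem_compl.mp h2) h1
  · rw [dif_neg ha, dif_neg hb] at hab
    have h3 := (Finset.orderEmbOfFin (k := n - k) _ (card_compl_image k hk f hf)).injective hab
    have h4 : a.1 - k = b.1 - k := Fin.mk.inj_iff.mp h3
    exact Fin.ext (by omega)

noncomputable def extPerm (k : ℕ) (hk : k ≤ n) (f : Fin n → Fin n) (hf : InjBelow k f) :
    Equiv.Perm (Fin n) :=
  Equiv.ofBijective (extFun k hk f hf)
    (Finite.injective_iff_bijective.mp (extFun_inj k hk f hf))

lemma extPerm_apply_lt (k : ℕ) (hk : k ≤ n) (f : Fin n → Fin n) (hf : InjBelow k f)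
    (j : Fin n) (hj : j.1 < k) : extPerm k hk f hf j = f j := by
  simp only [extPerm, Equiv.ofBijective_apply, extFun, dif_pos hj]

lemma extPerm_mono (k : ℕ) (hk : k ≤ n) (f : Fin n → Fin n) (hf : InjBelow k f)
    {q r : Fin n} (hq : k ≤ q.1) (hqr : q < r) :
    extPerm k hk f hf q < extPerm k hk f hf r := by
  have hr : k ≤ r.1 := le_trans hq (le_of_lt hqr)
  have hqr' : q.1 < r.1 := hqr
  simp only [extPerm, Equiv.ofBijective_apply, extFun, dif_neg (by omega : ¬ q.1 < k),
    dif_neg (by omega : ¬ r.1 < k)]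
  exact (Finset.orderEmbOfFin _ _).strictMono (by simp only [Fin.mk_lt_mk]; omega)

lemma ext_unique (k : ℕ) (hk : k ≤ n) (σ τ : Equiv.Perm (Fin n))
    (hag : ∀ j : Fin n, j.1 < k → σ j = τ j)
    (hσ : ∀ q r : Fin n, k ≤ q.1 → q < r → σ q < σ r)
    (hτ : ∀ q r : Fin n, k ≤ q.1 → q < r → τ q < τ r) : σ = τ := by
  have himg : ((Finset.univ : Finset (Fin n)).filter fun i => i.1 < k).image τ
      = ((Finset.univ : Finset (Fin n)).filter fun i => i.1 < k).image σ :=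
    (Finset.image_congr (fun x hx => hag x (by simpa using hx))).symm
  set s := ((((Finset.univ : Finset (Fin n)).filter fun i => i.1 < k).image σ)ᶜ) with hs
  have hcard : s.card = n - k :=
    card_compl_image k hk σ (fun i j _ _ h => σ.injective h)
  have hmemσ : ∀ i : Fin (n - k), σ ⟨k + i.1, by have := i.isLt; omega⟩ ∈ s := by
    intro i
    rw [hs, Finset.mem_compl]
    intro hmem
    obtain ⟨j, hj, hje⟩ := Finset.mem_image.mp hmem
    have h5 := σ.injective hje
    have hj' : j.1 < k := by simpa using hj
    have : j.1 = k + i.1 := by rw [h5]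
    omega
  have hmemτ : ∀ i : Fin (n - k), τ ⟨k + i.1, by have := i.isLt; omega⟩ ∈ s := by
    intro i
    rw [hs, ← himg, Finset.mem_compl]
    intro hmem
    obtain ⟨j, hj, hje⟩ := Finset.mem_image.mp hmem
    have h5 := τ.injective hje
    have hj' : j.1 < k := by simpa using hj
    have : j.1 = k + i.1 := by rw [h5]
    omega
  have hF : (fun i : Fin (n - k) => σ ⟨k + i.1, by have := i.isLt; omega⟩)
      = ⇑(s.orderEmbOfFin hcard) :=
    Finset.orderEmbOfFin_unique hcard hmemσ
      (fun a b h => hσ _ _ (by simp) (by simp only [Fin.mk_lt_mk]; omega))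
  have hG : (fun i : Fin (n - k) => τ ⟨k + i.1, by have := i.isLt; omega⟩)
      = ⇑(s.orderEmbOfFin hcard) :=
    Finset.orderEmbOfFin_unique hcard hmemτ
      (fun a b h => hτ _ _ (by simp) (by simp only [Fin.mk_lt_mk]; omega))
  have hFG := hF.trans hG.symm
  apply Equiv.ext
  intro j
  by_cases hj : j.1 < k
  · exact hag j hj
  · have hj2 := j.isLt
    have := congrFun hFG ⟨j.1 - k, by omega⟩
    simp only at this
    have hje : (⟨k + (j.1 - k), by omega⟩ : Fin n) = j := Fin.ext (by simp; omega)
    rwa [hje] at this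


/-- `S_n[k,m]`: permutations `σ` of `{1,…,n}` (encoded `0`-indexed as
`Fin n`, so the `1`-indexed position of `i : Fin n` is `i.1 + 1`) with
`σ(i) = i` for `i < m`, `σ(j) ≥ j` for `m ≤ j ≤ k`, and `σ` increasing on
`{k+1,…,n}`. -/
def Snkm (n k m : ℕ) : Set (Equiv.Perm (Fin n)) :=
  {σ | (∀ i : Fin n, i.1 + 1 < m → σ i = i) ∧
       (∀ j : Fin n, m ≤ j.1 + 1 → j.1 < k → j ≤ σ j) ∧
       (∀ q r : Fin n, k ≤ q.1 → q < r → σ q < σ r)}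

def fFwd (m : ℕ) (ρ : Equiv.Perm (Fin n)) : Fin n → Fin n :=
  fun j => if j.1 < m - 1 then j else ρ j

lemma fFwd_injBelow (k m : ℕ) (ρ : Equiv.Perm (Fin n))
    (h2 : ∀ j : Fin n, m - 1 ≤ j.1 + 1 → j.1 < k → j ≤ ρ j) :
    InjBelow k (fFwd m ρ) := by
  intro a b ha hb hab
  unfold fFwd at hab
  split_ifs at hab with h1 h2' h3'
  · exact hab
  · exfalso
    have hle : b.1 ≤ (ρ b).1 := h2 b (by omega) hb
    have : a.1 = (ρ b).1 := congrArg Fin.val hab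
    omega
  · exfalso
    have hle : a.1 ≤ (ρ a).1 := h2 a (by omega) ha
    have : (ρ a).1 = b.1 := congrArg Fin.val hab
    omega
  · exact ρ.injective hab

def fBwd (m : ℕ) (σ : Equiv.Perm (Fin n)) (i : Fin n) : Fin n → Fin n :=
  fun j => if j.1 = m - 2 then i else if j.1 < m - 1 then j else σ j

lemma fBwd_injBelow (k m : ℕ) (hm : 2 ≤ m) (σ : Equiv.Perm (Fin n)) (i : Fin n)
    (h2 : ∀ j : Fin n, m ≤ j.1 + 1 → j.1 < k → j ≤ σ j)
    (hi : m - 1 ≤ i.1 + 1)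
    (hni : ∀ j : Fin n, m ≤ j.1 + 1 → j.1 < k → i ≠ σ j) :
    InjBelow k (fBwd m σ i) := by
  intro a b ha hb hab
  unfold fBwd at hab
  split_ifs at hab with u1 u2 u3 u4 u5 u6 u7 u8 u9
  · exact Fin.ext (by omega)
  · exfalso; have := congrArg Fin.val hab; omega
  · exact absurd hab (hni b (by omega) hb)
  · exfalso; have := congrArg Fin.val hab; omega
  · exact hab
  · exfalso
    have hle : b.1 ≤ (σ b).1 := h2 b (by omega) hb
    have := congrArg Fin.val hab; omega
  · exact absurd hab.symm (hni a (by omega) ha)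
  · exfalso
    have hle : a.1 ≤ (σ a).1 := h2 a (by omega) ha
    have := congrArg Fin.val hab; omega
  · exact σ.injective hab

lemma fwd_mem (n k m : ℕ) (hm : 2 ≤ m) (hmk : m ≤ k) (hk : k ≤ n)
    (ρ : Equiv.Perm (Fin n)) (hρ : ρ ∈ Snkm n k (m - 1)) :
    extPerm k hk (fFwd m ρ) (fFwd_injBelow k m ρ hρ.2.1) ∈ Snkm n k m := by
  obtain ⟨h1, h2, h3⟩ := hρ
  refine ⟨?_, ?_, fun q r hq hqr => extPerm_mono _ _ _ _ hq hqr⟩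
  · intro i hi
    rw [extPerm_apply_lt _ _ _ _ i (by omega)]
    simp [fFwd, show i.1 < m - 1 by omega]
  · intro j hj hjk
    rw [extPerm_apply_lt _ _ _ _ j hjk]
    simp only [fFwd, if_neg (show ¬ j.1 < m - 1 by omega)]
    exact h2 j (by omega) hjk

lemma fwd_i (n k m : ℕ) (hm : 2 ≤ m) (hmk : m ≤ k) (hk : k ≤ n)
    (ρ : Equiv.Perm (Fin n)) (hρ : ρ ∈ Snkm n k (m - 1)) :
    m - 1 ≤ (ρ ⟨m - 2, lt_of_lt_of_le (by omega : m - 2 < k) hk⟩).1 + 1 := by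
  have := hρ.2.1 ⟨m - 2, lt_of_lt_of_le (by omega : m - 2 < k) hk⟩ (by simp; omega) (by simp; omega)
  have h : m - 2 ≤ (ρ ⟨m - 2, lt_of_lt_of_le (by omega : m - 2 < k) hk⟩).1 := this
  omega

lemma fwd_ne (n k m : ℕ) (hm : 2 ≤ m) (hmk : m ≤ k) (hk : k ≤ n)
    (ρ : Equiv.Perm (Fin n)) (hρ : ρ ∈ Snkm n k (m - 1)) :
    ∀ j : Fin n, m ≤ j.1 + 1 → j.1 < k →
      ρ ⟨m - 2, lt_of_lt_of_le (by omega : m - 2 < k) hk⟩ ≠ extPerm k hk (fFwd m ρ) (fFwd_injBelow k m ρ hρ.2.1) j := by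
  intro j hj hjk hne
  rw [extPerm_apply_lt _ _ _ _ j hjk] at hne
  simp only [fFwd, if_neg (show ¬ j.1 < m - 1 by omega)] at hne
  have := ρ.injective hne
  have := congrArg Fin.val this
  simp at this
  omega

lemma bwd_mem (n k m : ℕ) (hm : 2 ≤ m) (hmk : m ≤ k) (hk : k ≤ n)
    (σ : Equiv.Perm (Fin n)) (i : Fin n) (hσ : σ ∈ Snkm n k m)
    (hi : m - 1 ≤ i.1 + 1) (hni : ∀ j : Fin n, m ≤ j.1 + 1 → j.1 < k → i ≠ σ j) :
    extPerm k hk (fBwd m σ i) (fBwd_injBelow k m hm σ i hσ.2.1 hi hni) ∈ Snkm n k (m - 1) := by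
  obtain ⟨h1, h2, h3⟩ := hσ
  refine ⟨?_, ?_, fun q r hq hqr => extPerm_mono _ _ _ _ hq hqr⟩
  · intro j hj
    rw [extPerm_apply_lt _ _ _ _ j (by omega)]
    simp only [fBwd, if_neg (show ¬ j.1 = m - 2 by omega), if_pos (show j.1 < m - 1 by omega)]
  · intro j hj hjk
    rw [extPerm_apply_lt _ _ _ _ j hjk]
    by_cases hcase : j.1 = m - 2
    · simp only [fBwd, if_pos hcase]
      show j.1 ≤ i.1
      omega
    · simp only [fBwd, if_neg hcase, if_neg (show ¬ j.1 < m - 1 by omega)]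
      exact h2 j (by omega) hjk

lemma bwd_fwd (n k m : ℕ) (hm : 2 ≤ m) (hmk : m ≤ k) (hk : k ≤ n)
    (ρ : Equiv.Perm (Fin n)) (hρ : ρ ∈ Snkm n k (m - 1))
    (hf : InjBelow k (fBwd m (extPerm k hk (fFwd m ρ) (fFwd_injBelow k m ρ hρ.2.1))
      (ρ ⟨m - 2, lt_of_lt_of_le (by omega : m - 2 < k) hk⟩))) :
    extPerm k hk (fBwd m (extPerm k hk (fFwd m ρ) (fFwd_injBelow k m ρ hρ.2.1))
      (ρ ⟨m - 2, lt_of_lt_of_le (by omega : m - 2 < k) hk⟩)) hf = ρ := by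
  obtain ⟨h1, h2, h3⟩ := hρ
  apply ext_unique k hk _ ρ _ (fun q r hq hqr => extPerm_mono _ _ _ _ hq hqr) h3
  intro j hj
  rw [extPerm_apply_lt _ _ _ _ j hj]
  by_cases hc1 : j.1 = m - 2
  · simp only [fBwd, if_pos hc1]
    congr 1
    exact (Fin.ext hc1).symm
  · by_cases hc2 : j.1 < m - 1
    · simp only [fBwd, if_neg hc1, if_pos hc2]
      exact (h1 j (by omega)).symm
    · simp only [fBwd, if_neg hc1, if_neg hc2]
      rw [extPerm_apply_lt _ _ _ _ j hj]
      simp only [fFwd, if_neg hc2]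

lemma fwd_bwd (n k m : ℕ) (hm : 2 ≤ m) (hmk : m ≤ k) (hk : k ≤ n)
    (σ : Equiv.Perm (Fin n)) (i : Fin n) (hσ : σ ∈ Snkm n k m)
    (hbi : InjBelow k (fBwd m σ i))
    (hf : InjBelow k (fFwd m (extPerm k hk (fBwd m σ i) hbi))) :
    extPerm k hk (fFwd m (extPerm k hk (fBwd m σ i) hbi)) hf = σ := by
  obtain ⟨h1, h2, h3⟩ := hσ
  apply ext_unique k hk _ σ _ (fun q r hq hqr => extPerm_mono _ _ _ _ hq hqr) h3
  intro j hj
  rw [extPerm_apply_lt _ _ _ _ j hj]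
  by_cases hc : j.1 < m - 1
  · simp only [fFwd, if_pos hc]
    exact (h1 j (by omega)).symm
  · simp only [fFwd, if_neg hc]
    rw [extPerm_apply_lt _ _ _ _ j hj]
    simp only [fBwd, if_neg (show ¬ j.1 = m - 2 by omega), if_neg hc]

lemma bwd_i (n k m : ℕ) (hm : 2 ≤ m) (hmk : m ≤ k) (hk : k ≤ n)
    (σ : Equiv.Perm (Fin n)) (i : Fin n) (hbi : InjBelow k (fBwd m σ i)) :
    extPerm k hk (fBwd m σ i) hbi ⟨m - 2, lt_of_lt_of_le (by omega : m - 2 < k) hk⟩ = i := by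
  rw [extPerm_apply_lt _ _ _ _ _ (by simp; omega)]
  simp [fBwd]

/-- The combinatorial bijection used in the residue computation
(proof of Proposition 5.8): for `2 ≤ m ≤ k ≤ n`, the set `S_n[k,m−1]` is in
bijection with the set of pairs `(σ, i)` where `σ ∈ S_n[k,m]`,
`i ∈ {m−1,…,n}`, and `i ∉ {σ(m),…,σ(k)}`; the bijection sends
`ρ ∈ S_n[k,m−1]` to the pair `(σ, ρ(m−1))` where `σ(m−1) = m−1` and
`σ(j) = ρ(j)` for `m ≤ j ≤ k`. -/
theorem Snkm_bijection (n k m : ℕ) (hm : 2 ≤ m) (hmk : m ≤ k) (hk : k ≤ n) :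
    ∃ e : {ρ : Equiv.Perm (Fin n) // ρ ∈ Snkm n k (m - 1)} ≃
        {p : Equiv.Perm (Fin n) × Fin n //
          p.1 ∈ Snkm n k m ∧ m - 1 ≤ p.2.1 + 1 ∧
          ∀ j : Fin n, m ≤ j.1 + 1 → j.1 < k → p.2 ≠ p.1 j},
      ∀ ρ : {ρ : Equiv.Perm (Fin n) // ρ ∈ Snkm n k (m - 1)},
        (e ρ).1.2 = ρ.1 ⟨m - 2, by omega⟩ ∧
        (e ρ).1.1 ⟨m - 2, by omega⟩ = ⟨m - 2, by omega⟩ ∧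
        ∀ j : Fin n, m ≤ j.1 + 1 → j.1 < k → (e ρ).1.1 j = ρ.1 j := by
  refine ⟨⟨fun ρ => ⟨(extPerm k hk (fFwd m ρ.1) (fFwd_injBelow k m ρ.1 ρ.2.2.1),
        ρ.1 ⟨m - 2, by omega⟩),
      fwd_mem n k m hm hmk hk ρ.1 ρ.2, fwd_i n k m hm hmk hk ρ.1 ρ.2,
      fwd_ne n k m hm hmk hk ρ.1 ρ.2⟩,
    fun p => ⟨extPerm k hk (fBwd m p.1.1 p.1.2)
        (fBwd_injBelow k m hm p.1.1 p.1.2 p.2.1.2.1 p.2.2.1 p.2.2.2),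
      bwd_mem n k m hm hmk hk p.1.1 p.1.2 p.2.1 p.2.2.1 p.2.2.2⟩,
    fun ρ => ?_, fun p => ?_⟩, fun ρ => ?_⟩
  · exact Subtype.ext (bwd_fwd n k m hm hmk hk ρ.1 ρ.2 _)
  · refine Subtype.ext (Prod.ext ?_ ?_)
    · exact fwd_bwd n k m hm hmk hk p.1.1 p.1.2 p.2.1 _ _
    · exact bwd_i n k m hm hmk hk p.1.1 p.1.2 _
  · refine ⟨rfl, ?_, ?_⟩
    · show extPerm k hk (fFwd m ρ.1) (fFwd_injBelow k m ρ.1 ρ.2.2.1) ⟨m - 2, by omega⟩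
        = ⟨m - 2, by omega⟩
      rw [extPerm_apply_lt _ _ _ _ _ (by simp; omega)]
      simp only [fFwd]
      rw [if_pos (show m - 2 < m - 1 by omega)]
    · intro j hj hjk
      show extPerm k hk (fFwd m ρ.1) (fFwd_injBelow k m ρ.1 ρ.2.2.1) j = ρ.1 j
      rw [extPerm_apply_lt _ _ _ _ j hjk]
      simp only [fFwd, if_neg (show ¬ j.1 < m - 1 by omega)]
end
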